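/- arXiv:2605.20272 — 8 statements merged into one kernel-verified Lean document; each statement's English description precedes it below -/
import Mathlib

section
/- One-step state value difference in countably infinite state spaces: let (P, r) and (P', r') be two MRPs on ℕ with discount γ ∈ [0,1), rewards taking values in [0, Rmax], and value vectors v and v' respectively, each taking values in [0, Vmax] where Vmax = Rmax/(1−γ). Then for every i ∈ ℕ: |v(i) − v'(i)| ≤ |r(i) − r'(i)| + γ (Vmax/2) ‖P(i) − P'(i)‖₁ + γ ‖v − v'‖_{P(i)}, where ‖P(i) − P'(i)‖₁ = ∑_{j=0}^∞ |P(i,j) − P'(i,j)| and ‖v − v'‖_{P(i)} = ∑_{j=0}^∞ P(i,j)|v(j) − v'(j)|. -/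
/-- One-step state value difference in countably infinite state spaces, for two
Markov reward processes `(P, r)` and `(P', r')` on `ℕ` with discount `γ` and value
vectors `v`, `v'`. -/
theorem stmt2
    (γ Rmax Vmax : ℝ) (hγ0 : 0 ≤ γ) (hγ1 : γ < 1) (hR : 0 ≤ Rmax)
    (hV : Vmax = Rmax / (1 - γ))
    (P P' : ℕ → ℕ → ℝ)
    (hP0 : ∀ i j, 0 ≤ P i j) (hP1 : ∀ i, HasSum (P i) 1)
    (hP'0 : ∀ i j, 0 ≤ P' i j) (hP'1 : ∀ i, HasSum (P' i) 1)
    (r r' : ℕ → ℝ)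
    (hr : ∀ i, r i ∈ Set.Icc (0:ℝ) Rmax) (hr' : ∀ i, r' i ∈ Set.Icc (0:ℝ) Rmax)
    (v v' : ℕ → ℝ)
    (hv : ∀ i, v i ∈ Set.Icc (0:ℝ) Vmax) (hv' : ∀ i, v' i ∈ Set.Icc (0:ℝ) Vmax)
    (hbell : ∀ i, v i = r i + γ * ∑' j, P i j * v j)
    (hbell' : ∀ i, v' i = r' i + γ * ∑' j, P' i j * v' j) :
    ∀ i, |v i - v' i| ≤ |r i - r' i| + γ * (Vmax / 2) * (∑' j, |P i j - P' i j|)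
      + γ * ∑' j, P i j * |v j - v' j| := by
  intro i
  set c : ℝ := Vmax / 2 with hc
  have hVnn : 0 ≤ Vmax := by
    rw [hV]; exact div_nonneg hR (by linarith)
  have hcnn : 0 ≤ c := by positivity
  have hsumP := (hP1 i).summable
  have hsumP' := (hP'1 i).summable
  -- summability facts
  have sPv : Summable (fun j => P i j * v j) :=
    Summable.of_nonneg_of_le (fun j => mul_nonneg (hP0 i j) (hv j).1)
      (fun j => mul_le_mul_of_nonneg_left (hv j).2 (hP0 i j)) (hsumP.mul_right Vmax)
  have sPv' : Summable (fun j => P i j * v' j) :=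
    Summable.of_nonneg_of_le (fun j => mul_nonneg (hP0 i j) (hv' j).1)
      (fun j => mul_le_mul_of_nonneg_left (hv' j).2 (hP0 i j)) (hsumP.mul_right Vmax)
  have sP'v' : Summable (fun j => P' i j * v' j) :=
    Summable.of_nonneg_of_le (fun j => mul_nonneg (hP'0 i j) (hv' j).1)
      (fun j => mul_le_mul_of_nonneg_left (hv' j).2 (hP'0 i j)) (hsumP'.mul_right Vmax)
  have sD : Summable (fun j => |P i j - P' i j|) :=
    Summable.of_nonneg_of_le (fun j => abs_nonneg _)
      (fun j => by
        rw [abs_le]; constructor <;> nlinarith [hP0 i j, hP'0 i j])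
      (hsumP.add hsumP')
  have sC : Summable (fun j => (P i j - P' i j) * c) :=
    (hsumP.sub hsumP').mul_right c
  have hv'c : ∀ j, |v' j - c| ≤ c := by
    intro j
    rcases hv' j with ⟨h1, h2⟩
    rw [abs_le]; constructor <;> [linarith [hc]; linarith [hc]]
  have sA : Summable (fun j => (P i j - P' i j) * (v' j - c)) := by
    apply Summable.of_abs
    apply Summable.of_nonneg_of_le (fun j => abs_nonneg _) _ (sD.mul_right c)
    intro j
    rw [abs_mul]
    exact mul_le_mul_of_nonneg_left (hv'c j) (abs_nonneg _)
  have sB : Summable (fun j => P i j * (v j - v' j)) :=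
    (sPv.sub sPv').congr (fun j => by ring)
  have sAbsB : Summable (fun j => P i j * |v j - v' j|) :=
    Summable.of_nonneg_of_le (fun j => mul_nonneg (hP0 i j) (abs_nonneg _))
      (fun j => mul_le_mul_of_nonneg_left
        (by rcases hv j with ⟨a1,a2⟩; rcases hv' j with ⟨b1,b2⟩
            rw [abs_le]; constructor <;> linarith) (hP0 i j))
      (hsumP.mul_right Vmax)
  -- the constant-shift sum vanishes
  have h0 : (∑' j, (P i j - P' i j) * c) = 0 := by
    have h := ((hP1 i).sub (hP'1 i)).mul_right c
    simpa using h.tsum_eq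
  have h1 : (∑' j, (P i j - P' i j) * (v' j - c))
      = ((∑' j, P i j * v' j) - ∑' j, P' i j * v' j) - ∑' j, (P i j - P' i j) * c := by
    rw [← Summable.tsum_sub sPv' sP'v', ← Summable.tsum_sub (sPv'.sub sP'v') sC]
    congr 1; funext j; ring
  have h2 : (∑' j, P i j * (v j - v' j))
      = (∑' j, P i j * v j) - ∑' j, P i j * v' j := by
    rw [← Summable.tsum_sub sPv sPv']
    congr 1; funext j; ring
  have hkey : (∑' j, P i j * v j) - (∑' j, P' i j * v' j)
      = (∑' j, (P i j - P' i j) * (v' j - c)) + ∑' j, P i j * (v j - v' j) := by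
    rw [h1, h2, h0]; ring
  have hdiff : v i - v' i = (r i - r' i)
      + γ * ((∑' j, (P i j - P' i j) * (v' j - c)) + ∑' j, P i j * (v j - v' j)) := by
    rw [hbell i, hbell' i, ← hkey]; ring
  -- bound the two tsums
  have sAabs : Summable (fun j => |P i j - P' i j| * |v' j - c|) :=
    sA.abs.congr (fun j => abs_mul _ _)
  have sBabs : Summable (fun j => |P i j| * |v j - v' j|) :=
    sB.abs.congr (fun j => abs_mul _ _)
  have bA : |∑' j, (P i j - P' i j) * (v' j - c)| ≤ c * ∑' j, |P i j - P' i j| := by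
    calc |∑' j, (P i j - P' i j) * (v' j - c)|
        ≤ ∑' j, |P i j - P' i j| * |v' j - c| := by
          simpa [Real.norm_eq_abs, abs_mul] using
            norm_tsum_le_tsum_norm (f := fun j => (P i j - P' i j) * (v' j - c))
              (by simpa [Real.norm_eq_abs, abs_mul] using sAabs)
      _ ≤ ∑' j, |P i j - P' i j| * c := by
          refine Summable.tsum_le_tsum (fun j => ?_) sAabs (sD.mul_right c)
          exact mul_le_mul_of_nonneg_left (hv'c j) (abs_nonneg _)
      _ = c * ∑' j, |P i j - P' i j| := by rw [tsum_mul_right]; ring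
  have bB : |∑' j, P i j * (v j - v' j)| ≤ ∑' j, P i j * |v j - v' j| := by
    calc |∑' j, P i j * (v j - v' j)|
        ≤ ∑' j, |P i j| * |v j - v' j| := by
          simpa [Real.norm_eq_abs, abs_mul] using
            norm_tsum_le_tsum_norm (f := fun j => P i j * (v j - v' j))
              (by simpa [Real.norm_eq_abs, abs_mul] using sBabs)
      _ = ∑' j, P i j * |v j - v' j| := by
          congr 1; funext j; rw [abs_of_nonneg (hP0 i j)]
  have habs : |v i - v' i| ≤ |r i - r' i|
      + γ * (|∑' j, (P i j - P' i j) * (v' j - c)| + |∑' j, P i j * (v j - v' j)|) := by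
    rw [hdiff]
    calc |(r i - r' i) + γ * ((∑' j, (P i j - P' i j) * (v' j - c)) + ∑' j, P i j * (v j - v' j))|
        ≤ |r i - r' i| + |γ * ((∑' j, (P i j - P' i j) * (v' j - c)) + ∑' j, P i j * (v j - v' j))| :=
          abs_add_le _ _
      _ ≤ _ := by
          rw [abs_mul, abs_of_nonneg hγ0]
          gcongr
          exact abs_add_le _ _
  have hDnn : 0 ≤ ∑' j, |P i j - P' i j| := tsum_nonneg (fun j => abs_nonneg _)
  nlinarith [habs, bA, bB, mul_le_mul_of_nonneg_left (add_le_add bA bB) hγ0]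
end

section
/- T-step value difference bound: let (P, r) and (P', r') be two MRPs on ℕ with discount γ ∈ [0,1), rewards in [0, Rmax], and value vectors v, v' with values in [0, Vmax], Vmax = Rmax/(1−γ). Let d₀ be a probability vector on ℕ and define d_{t+1}(j) := ∑_i d_t(i) P(i,j) for t ≥ 0. Then for every T ≥ 1: ‖v − v'‖_{d₀} ≤ ‖r − r'‖_{w_T} + (γ/2) Vmax ‖P − P'‖_{w_T} + γ^T ‖v − v'‖_{d_T}, where w_T := ∑_{t=0}^{T−1} γ^t d_t, ‖u‖_w := ∑_i w(i)|u(i)| for any nonnegative weight w, and ‖P − P'‖_w := ∑_i w(i) ∑_j |P(i,j) − P'(i,j)|. -/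
set_option maxHeartbeats 800000


/-- `T`-step value difference bound for two MRPs on `ℕ`, with weights
`w_T = ∑_{t=0}^{T-1} γ^t d_t` where `d_t` is the state distribution after `t` steps
of the first MRP started from `d₀ = d 0`. -/
theorem stmt3
    (γ Rmax Vmax : ℝ) (hγ0 : 0 ≤ γ) (hγ1 : γ < 1) (hR : 0 ≤ Rmax)
    (hV : Vmax = Rmax / (1 - γ))
    (P P' : ℕ → ℕ → ℝ)
    (hP0 : ∀ i j, 0 ≤ P i j) (hP1 : ∀ i, HasSum (P i) 1)
    (hP'0 : ∀ i j, 0 ≤ P' i j) (hP'1 : ∀ i, HasSum (P' i) 1)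
    (r r' : ℕ → ℝ)
    (hr : ∀ i, r i ∈ Set.Icc (0:ℝ) Rmax) (hr' : ∀ i, r' i ∈ Set.Icc (0:ℝ) Rmax)
    (v v' : ℕ → ℝ)
    (hv : ∀ i, v i ∈ Set.Icc (0:ℝ) Vmax) (hv' : ∀ i, v' i ∈ Set.Icc (0:ℝ) Vmax)
    (hbell : ∀ i, v i = r i + γ * ∑' j, P i j * v j)
    (hbell' : ∀ i, v' i = r' i + γ * ∑' j, P' i j * v' j)
    (d : ℕ → ℕ → ℝ)
    (hd00 : ∀ i, 0 ≤ d 0 i) (hd01 : HasSum (d 0) 1)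
    (hdrec : ∀ t j, d (t+1) j = ∑' i, d t i * P i j) :
    ∀ T : ℕ, 1 ≤ T →
      (∑' i, d 0 i * |v i - v' i|)
        ≤ (∑' i, (∑ t ∈ Finset.range T, γ^t * d t i) * |r i - r' i|)
          + (γ/2) * Vmax *
            (∑' i, (∑ t ∈ Finset.range T, γ^t * d t i) * ∑' j, |P i j - P' i j|)
          + γ^T * ∑' i, d T i * |v i - v' i| := by
  have hγ1' : (0:ℝ) < 1 - γ := by linarith
  have hVnn : 0 ≤ Vmax := hV ▸ div_nonneg hR (le_of_lt hγ1')
  set Δ : ℕ → ℝ := fun i => |v i - v' i| with hΔdef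
  have hΔnn : ∀ i, 0 ≤ Δ i := fun i => abs_nonneg _
  have hΔle : ∀ i, Δ i ≤ Vmax := fun i => by
    have h1 := hv i; have h2 := hv' i
    simp only [Set.mem_Icc] at h1 h2
    rw [abs_sub_le_iff]; constructor <;> linarith
  have hPs : ∀ i, Summable (P i) := fun i => (hP1 i).summable
  have hP's : ∀ i, Summable (P' i) := fun i => (hP'1 i).summable
  have hPle1 : ∀ i j, P i j ≤ 1 := fun i j =>
    le_hasSum (hP1 i) j (fun k _ => hP0 i k)
  -- r bound
  have hrle : ∀ i, |r i - r' i| ≤ Rmax := fun i => by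
    have h1 := hr i; have h2 := hr' i
    simp only [Set.mem_Icc] at h1 h2
    rw [abs_sub_le_iff]; constructor <;> linarith
  -- total variation bound
  have hSsum : ∀ i, Summable (fun j => |P i j - P' i j|) :=
    fun i => ((hPs i).sub (hP's i)).abs
  set S : ℕ → ℝ := fun i => ∑' j, |P i j - P' i j| with hSdef
  have hSnn : ∀ i, 0 ≤ S i := fun i => tsum_nonneg (fun j => abs_nonneg _)
  have hSle : ∀ i, S i ≤ 2 := fun i => by
    have h1 : ∀ j, |P i j - P' i j| ≤ P i j + P' i j := fun j => by
      rw [abs_sub_le_iff]; constructor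
      · have := hP'0 i j; have := hP0 i j; linarith
      · have := hP'0 i j; have := hP0 i j; linarith
    calc S i ≤ ∑' j, (P i j + P' i j) :=
          Summable.tsum_le_tsum h1 (hSsum i) ((hPs i).add (hP's i))
      _ = 2 := by rw [((hP1 i).add (hP'1 i)).tsum_eq]; norm_num
  -- d facts
  have hdfact : ∀ t, (∀ i, 0 ≤ d t i) ∧ HasSum (d t) 1 := by
    intro t
    induction t with
    | zero => exact ⟨hd00, hd01⟩
    | succ t ih =>
      obtain ⟨hnn, hs⟩ := ih
      have hrow : ∀ i, Summable (fun j => d t i * P i j) :=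
        fun i => (hPs i).mul_left _
      have hcolsum : (fun i => ∑' j, d t i * P i j) = d t := by
        funext i; rw [tsum_mul_left, (hP1 i).tsum_eq, mul_one]
      have hprodnn : 0 ≤ fun p : ℕ × ℕ => d t p.1 * P p.1 p.2 :=
        fun p => mul_nonneg (hnn _) (hP0 _ _)
      have hprod : Summable (fun p : ℕ × ℕ => d t p.1 * P p.1 p.2) := by
        rw [summable_prod_of_nonneg hprodnn]
        exact ⟨hrow, by rw [hcolsum]; exact hs.summable⟩
      have hswapnn : 0 ≤ fun p : ℕ × ℕ => d t p.2 * P p.2 p.1 :=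
        fun p => mul_nonneg (hnn _) (hP0 _ _)
      have hcol : ∀ j, Summable (fun i => d t i * P i j) := fun j =>
        Summable.of_nonneg_of_le (fun i => mul_nonneg (hnn i) (hP0 i j))
          (fun i => by
            have := hPle1 i j
            calc d t i * P i j ≤ d t i * 1 :=
                  mul_le_mul_of_nonneg_left this (hnn i)
              _ = d t i := mul_one _)
          hs.summable
      have hdsucc : Summable (d (t+1)) := by
        have h2 : Summable (fun j => ∑' i, d t i * P i j) := by
          have hswap : Summable (fun p : ℕ × ℕ => d t p.2 * P p.2 p.1) :=
            (Summable.prod_symm hprod)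
          exact ((summable_prod_of_nonneg hswapnn).mp hswap).2
        exact h2.congr (fun j => (hdrec t j).symm)
      have heq : ∑' j, d (t+1) j = 1 := by
        have hcomm : ∑' (j) (i), d t i * P i j = ∑' (i) (j), d t i * P i j :=
          Summable.tsum_comm' (f := fun i j => d t i * P i j) hprod hrow hcol
        calc ∑' j, d (t+1) j = ∑' (j) (i), d t i * P i j := by
              simp only [hdrec]
          _ = ∑' (i) (j), d t i * P i j := hcomm
          _ = ∑' i, d t i := by rw [hcolsum]
          _ = 1 := hs.tsum_eq
      constructor
      · intro j; rw [hdrec]; exact tsum_nonneg (fun i => mul_nonneg (hnn i) (hP0 i j))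
      · exact (Summable.hasSum_iff hdsucc).mpr heq
  have hdnn : ∀ t i, 0 ≤ d t i := fun t => (hdfact t).1
  have hdsum : ∀ t, Summable (d t) := fun t => (hdfact t).2.summable
  -- summabilities for fixed i
  have hsPv : ∀ i, Summable (fun j => P i j * v j) := fun i =>
    Summable.of_nonneg_of_le (fun j => mul_nonneg (hP0 i j) (hv j).1)
      (fun j => mul_le_mul_of_nonneg_left (hv j).2 (hP0 i j)) ((hPs i).mul_right Vmax)
  have hsPv' : ∀ i, Summable (fun j => P i j * v' j) := fun i =>
    Summable.of_nonneg_of_le (fun j => mul_nonneg (hP0 i j) (hv' j).1)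
      (fun j => mul_le_mul_of_nonneg_left (hv' j).2 (hP0 i j)) ((hPs i).mul_right Vmax)
  have hsP'v' : ∀ i, Summable (fun j => P' i j * v' j) := fun i =>
    Summable.of_nonneg_of_le (fun j => mul_nonneg (hP'0 i j) (hv' j).1)
      (fun j => mul_le_mul_of_nonneg_left (hv' j).2 (hP'0 i j)) ((hP's i).mul_right Vmax)
  have hsPΔ : ∀ i, Summable (fun j => P i j * Δ j) := fun i =>
    Summable.of_nonneg_of_le (fun j => mul_nonneg (hP0 i j) (hΔnn j))
      (fun j => mul_le_mul_of_nonneg_left (hΔle j) (hP0 i j)) ((hPs i).mul_right Vmax)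
  have hPΔle : ∀ i, ∑' j, P i j * Δ j ≤ Vmax := fun i => by
    calc ∑' j, P i j * Δ j ≤ ∑' j, P i j * Vmax :=
          Summable.tsum_le_tsum (fun j => mul_le_mul_of_nonneg_left (hΔle j) (hP0 i j))
            (hsPΔ i) ((hPs i).mul_right Vmax)
      _ = Vmax := by rw [tsum_mul_right, (hP1 i).tsum_eq, one_mul]
  have hPΔnn : ∀ i, 0 ≤ ∑' j, P i j * Δ j := fun i =>
    tsum_nonneg (fun j => mul_nonneg (hP0 i j) (hΔnn j))
  -- pointwise key inequality
  have keyA : ∀ i, Δ i ≤ |r i - r' i| + (γ/2) * Vmax * S i + γ * ∑' j, P i j * Δ j := by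
    intro i
    have hzero : ∑' j, (P i j - P' i j) = 0 := by
      rw [((hP1 i).sub (hP'1 i)).tsum_eq]; ring
    have hsdiff : Summable (fun j => (P i j - P' i j) * v' j) := by
      have := (hsPv' i).sub (hsP'v' i)
      simpa [sub_mul] using this
    have hsc : Summable (fun j => (P i j - P' i j) * (Vmax/2)) :=
      ((hPs i).sub (hP's i)).mul_right _
    have hsshift : Summable (fun j => (P i j - P' i j) * (v' j - Vmax/2)) := by
      have := hsdiff.sub hsc
      simpa [mul_sub] using this
    have key0 : ∑' j, (P i j - P' i j) * v' j
        = ∑' j, (P i j - P' i j) * (v' j - Vmax/2) := by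
      have : (fun j => (P i j - P' i j) * v' j)
          = fun j => (P i j - P' i j) * (v' j - Vmax/2) + (P i j - P' i j) * (Vmax/2) := by
        funext j; ring
      rw [this, Summable.tsum_add hsshift hsc, tsum_mul_right, hzero, zero_mul, add_zero]
    have hb1 : |∑' j, (P i j - P' i j) * v' j| ≤ (Vmax/2) * S i := by
      rw [key0]
      calc |∑' j, (P i j - P' i j) * (v' j - Vmax/2)|
          ≤ ∑' j, |(P i j - P' i j) * (v' j - Vmax/2)| := by
            simpa only [Real.norm_eq_abs] using
              norm_tsum_le_tsum_norm (f := fun j => (P i j - P' i j) * (v' j - Vmax/2))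
                (by simp only [Real.norm_eq_abs]; exact hsshift.abs)
        _ ≤ ∑' j, |P i j - P' i j| * (Vmax/2) := by
            apply Summable.tsum_le_tsum _ hsshift.abs ((hSsum i).mul_right _)
            intro j
            rw [abs_mul]
            apply mul_le_mul_of_nonneg_left _ (abs_nonneg _)
            have h2 := hv' j; simp only [Set.mem_Icc] at h2
            rw [abs_le]; constructor <;> linarith
        _ = (Vmax/2) * S i := by rw [tsum_mul_right, mul_comm]
    have hb2 : |∑' j, P i j * (v j - v' j)| ≤ ∑' j, P i j * Δ j := by
      have hsub : Summable (fun j => P i j * (v j - v' j)) := by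
        have := (hsPv i).sub (hsPv' i); simpa [mul_sub] using this
      calc |∑' j, P i j * (v j - v' j)| ≤ ∑' j, |P i j * (v j - v' j)| := by
            simpa only [Real.norm_eq_abs] using
              norm_tsum_le_tsum_norm (f := fun j => P i j * (v j - v' j))
                (by simp only [Real.norm_eq_abs]; exact hsub.abs)
        _ = ∑' j, P i j * Δ j := by
            congr 1; funext j; rw [abs_mul, abs_of_nonneg (hP0 i j)]
    have hdiff : v i - v' i = (r i - r' i)
        + γ * ((∑' j, (P i j - P' i j) * v' j) + ∑' j, P i j * (v j - v' j)) := by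
      rw [hbell i, hbell' i]
      have : ∑' j, P i j * v j - ∑' j, P' i j * v' j
          = (∑' j, (P i j - P' i j) * v' j) + ∑' j, P i j * (v j - v' j) := by
        have hA : Summable (fun j => P i j * (v j - v' j)) := by
          have := (hsPv i).sub (hsPv' i); simpa [mul_sub] using this
        rw [← Summable.tsum_add hsdiff hA]
        rw [← Summable.tsum_sub (hsPv i) (hsP'v' i)]
        congr 1; funext j; ring
      rw [mul_add] at *
      calc r i + γ * ∑' j, P i j * v j - (r' i + γ * ∑' j, P' i j * v' j)
          = (r i - r' i) + γ * (∑' j, P i j * v j - ∑' j, P' i j * v' j) := by ring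
        _ = _ := by rw [this]; ring
    calc Δ i = |v i - v' i| := rfl
      _ ≤ |r i - r' i| + |γ * ((∑' j, (P i j - P' i j) * v' j) + ∑' j, P i j * (v j - v' j))| := by
          rw [hdiff]; exact abs_add_le _ _
      _ ≤ |r i - r' i| + γ * ((Vmax/2) * S i + ∑' j, P i j * Δ j) := by
          have : |γ * ((∑' j, (P i j - P' i j) * v' j) + ∑' j, P i j * (v j - v' j))|
              ≤ γ * ((Vmax/2) * S i + ∑' j, P i j * Δ j) := by
            rw [abs_mul, abs_of_nonneg hγ0]
            apply mul_le_mul_of_nonneg_left _ hγ0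
            calc |(∑' j, (P i j - P' i j) * v' j) + ∑' j, P i j * (v j - v' j)|
                ≤ |∑' j, (P i j - P' i j) * v' j| + |∑' j, P i j * (v j - v' j)| := abs_add_le _ _
              _ ≤ (Vmax/2) * S i + ∑' j, P i j * Δ j := add_le_add hb1 hb2
          linarith
      _ = |r i - r' i| + (γ/2) * Vmax * S i + γ * ∑' j, P i j * Δ j := by ring
  -- summabilities of weighted families
  have hsdΔ : ∀ t, Summable (fun i => d t i * Δ i) := fun t =>
    Summable.of_nonneg_of_le (fun i => mul_nonneg (hdnn t i) (hΔnn i))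
      (fun i => mul_le_mul_of_nonneg_left (hΔle i) (hdnn t i)) ((hdsum t).mul_right Vmax)
  have hsdr : ∀ t, Summable (fun i => d t i * |r i - r' i|) := fun t =>
    Summable.of_nonneg_of_le (fun i => mul_nonneg (hdnn t i) (abs_nonneg _))
      (fun i => mul_le_mul_of_nonneg_left (hrle i) (hdnn t i)) ((hdsum t).mul_right Rmax)
  have hsdS : ∀ t, Summable (fun i => d t i * S i) := fun t =>
    Summable.of_nonneg_of_le (fun i => mul_nonneg (hdnn t i) (hSnn i))
      (fun i => mul_le_mul_of_nonneg_left (hSle i) (hdnn t i)) ((hdsum t).mul_right 2)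
  have hsdPΔ : ∀ t, Summable (fun i => d t i * ∑' j, P i j * Δ j) := fun t =>
    Summable.of_nonneg_of_le (fun i => mul_nonneg (hdnn t i) (hPΔnn i))
      (fun i => mul_le_mul_of_nonneg_left (hPΔle i) (hdnn t i)) ((hdsum t).mul_right Vmax)
  -- Fubini step: ∑ᵢ d t i * ∑ⱼ P i j Δ j = ∑ⱼ d (t+1) j Δ j
  have fubini : ∀ t, ∑' i, d t i * ∑' j, P i j * Δ j = ∑' j, d (t+1) j * Δ j := by
    intro t
    have hprodnn : 0 ≤ fun p : ℕ × ℕ => d t p.1 * (P p.1 p.2 * Δ p.2) :=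
      fun p => mul_nonneg (hdnn t _) (mul_nonneg (hP0 _ _) (hΔnn _))
    have hrow : ∀ i, Summable (fun j => d t i * (P i j * Δ j)) :=
      fun i => (hsPΔ i).mul_left _
    have hcolsum : (fun i => ∑' j, d t i * (P i j * Δ j)) =
        fun i => d t i * ∑' j, P i j * Δ j := by
      funext i; rw [tsum_mul_left]
    have hprod : Summable (fun p : ℕ × ℕ => d t p.1 * (P p.1 p.2 * Δ p.2)) := by
      rw [summable_prod_of_nonneg hprodnn]
      exact ⟨hrow, by rw [hcolsum]; exact hsdPΔ t⟩
    have hcol : ∀ j, Summable (fun i => d t i * (P i j * Δ j)) := fun j =>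
      Summable.of_nonneg_of_le
        (fun i => mul_nonneg (hdnn t i) (mul_nonneg (hP0 i j) (hΔnn j)))
        (fun i => by
          have h1 : P i j * Δ j ≤ 1 * Vmax :=
            mul_le_mul (hPle1 i j) (hΔle j) (hΔnn j) zero_le_one
          rw [one_mul] at h1
          exact mul_le_mul_of_nonneg_left h1 (hdnn t i))
        ((hdsum t).mul_right Vmax)
    calc ∑' i, d t i * ∑' j, P i j * Δ j
        = ∑' (i) (j), d t i * (P i j * Δ j) := by rw [hcolsum]
      _ = ∑' (j) (i), d t i * (P i j * Δ j) := (Summable.tsum_comm' (f := fun i j => d t i * (P i j * Δ j)) hprod hrow hcol).symm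
      _ = ∑' j, d (t+1) j * Δ j := by
          congr 1; funext j
          have hre : (fun i => d t i * (P i j * Δ j)) = fun i => (d t i * P i j) * Δ j := by
            funext i; ring
          rw [hre, tsum_mul_right, hdrec t j]
  -- one-step inequality on weighted sums
  have keyB : ∀ t, ∑' i, d t i * Δ i
      ≤ (∑' i, d t i * |r i - r' i|) + (γ/2) * Vmax * (∑' i, d t i * S i)
        + γ * ∑' i, d (t+1) i * Δ i := by
    intro t
    have hRHSsum : Summable (fun i => d t i *
        (|r i - r' i| + (γ/2) * Vmax * S i + γ * ∑' j, P i j * Δ j)) := by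
      have h1 := (hsdr t).add (((hsdS t).mul_left ((γ/2) * Vmax)).add ((hsdPΔ t).mul_left γ))
      apply h1.congr
      intro i; ring
    calc ∑' i, d t i * Δ i
        ≤ ∑' i, d t i * (|r i - r' i| + (γ/2) * Vmax * S i + γ * ∑' j, P i j * Δ j) :=
          Summable.tsum_le_tsum (fun i => mul_le_mul_of_nonneg_left (keyA i) (hdnn t i))
            (hsdΔ t) hRHSsum
      _ = (∑' i, d t i * |r i - r' i|) + (γ/2) * Vmax * (∑' i, d t i * S i)
          + γ * ∑' i, d t i * ∑' j, P i j * Δ j := by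
          have hexp : (fun i => d t i *
              (|r i - r' i| + (γ/2) * Vmax * S i + γ * ∑' j, P i j * Δ j))
              = fun i => d t i * |r i - r' i| +
                ((γ/2) * Vmax * (d t i * S i) + γ * (d t i * ∑' j, P i j * Δ j)) := by
            funext i; ring
          rw [hexp, Summable.tsum_add (hsdr t)
            (((hsdS t).mul_left ((γ/2) * Vmax)).add ((hsdPΔ t).mul_left γ)),
            Summable.tsum_add ((hsdS t).mul_left ((γ/2) * Vmax)) ((hsdPΔ t).mul_left γ),
            tsum_mul_left, tsum_mul_left]
          ring
      _ = _ := by rw [fubini t]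
  -- main induction (finite sums outside the tsum)
  have main : ∀ T : ℕ, ∑' i, d 0 i * Δ i
      ≤ (∑ t ∈ Finset.range T, γ^t * ∑' i, d t i * |r i - r' i|)
        + (γ/2) * Vmax * (∑ t ∈ Finset.range T, γ^t * ∑' i, d t i * S i)
        + γ^T * ∑' i, d T i * Δ i := by
    intro T
    induction T with
    | zero => simp
    | succ T ih =>
      have hstep := keyB T
      have hγT : (0:ℝ) ≤ γ^T := pow_nonneg hγ0 T
      have hscaled := mul_le_mul_of_nonneg_left hstep hγT
      rw [Finset.sum_range_succ, Finset.sum_range_succ]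
      calc ∑' i, d 0 i * Δ i
          ≤ (∑ t ∈ Finset.range T, γ^t * ∑' i, d t i * |r i - r' i|)
            + (γ/2) * Vmax * (∑ t ∈ Finset.range T, γ^t * ∑' i, d t i * S i)
            + γ^T * ((∑' i, d T i * |r i - r' i|) + (γ/2) * Vmax * (∑' i, d T i * S i)
              + γ * ∑' i, d (T+1) i * Δ i) := by linarith [ih, hscaled]
        _ = _ := by ring
  -- convert finite-sum-outside into weighted tsum form
  have convert_sum : ∀ (T : ℕ) (f : ℕ → ℝ), (∀ i, 0 ≤ f i) →
      (∀ t, Summable (fun i => d t i * f i)) →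
      ∑' i, (∑ t ∈ Finset.range T, γ^t * d t i) * f i
        = ∑ t ∈ Finset.range T, γ^t * ∑' i, d t i * f i := by
    intro T f hfnn hfs
    have h1 : (fun i => (∑ t ∈ Finset.range T, γ^t * d t i) * f i)
        = fun i => ∑ t ∈ Finset.range T, γ^t * (d t i * f i) := by
      funext i; rw [Finset.sum_mul]; congr 1; funext t; ring
    rw [h1, Summable.tsum_finsetSum (fun t _ => (hfs t).mul_left _)]
    congr 1; funext t; rw [tsum_mul_left]
  intro T _
  have h1 := convert_sum T (fun i => |r i - r' i|) (fun i => abs_nonneg _) hsdr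
  have h2 := convert_sum T S hSnn hsdS
  rw [h1, h2]
  exact main T
end

section
/- MRP value loss: let (P, r) and (P', r') be two MRPs on ℕ with discount γ ∈ [0,1), rewards in [0, Rmax], and value vectors v, v' with values in [0, Vmax], Vmax = Rmax/(1−γ). Let d₀ be a probability vector on ℕ and let d_S := (1−γ) ∑_{t=0}^∞ γ^t d_t be the normalized successor representation of the first MRP (P,r), where d_0 := d₀ and d_{t+1}(j) := ∑_i d_t(i) P(i,j). Then ‖v − v'‖_{d₀} ≤ (1/(1−γ)) ( ‖r − r'‖_{d_S} + (γ/2) Vmax ‖P − P'‖_{d_S} ), where ‖u‖_d := ∑_i d(i)|u(i)| and ‖P − P'‖_d := ∑_i d(i) ∑_j |P(i,j) − P'(i,j)|. -/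
/-- Tonelli-type swap for nonnegative real double sums. -/
lemma fubini_nonneg (f : ℕ → ℕ → ℝ) (hf : ∀ i j, 0 ≤ f i j)
    (h1 : ∀ i, Summable (f i)) (h2 : Summable fun i => ∑' j, f i j) :
    (Summable fun j => ∑' i, f i j) ∧ (∑' j, ∑' i, f i j) = ∑' i, ∑' j, f i j := by
  have hF : Summable (fun p : ℕ × ℕ => f p.1 p.2) :=
    (summable_prod_of_nonneg (fun p => hf p.1 p.2)).mpr ⟨h1, h2⟩
  have hFs : Summable (fun p : ℕ × ℕ => f p.2 p.1) := hF.prod_symm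
  have hmar := (summable_prod_of_nonneg (f := fun p : ℕ × ℕ => f p.2 p.1)
      (fun p => hf p.2 p.1)).mp hFs
  refine ⟨hmar.2, ?_⟩
  have e1 : (∑' (p : ℕ × ℕ), f p.2 p.1) = ∑' j, ∑' i, f i j :=
    Summable.tsum_prod' hFs hmar.1
  have e2 : (∑' (p : ℕ × ℕ), f p.1 p.2) = ∑' i, ∑' j, f i j :=
    Summable.tsum_prod' hF h1
  have e3 : (∑' (p : ℕ × ℕ), f p.2 p.1) = ∑' (p : ℕ × ℕ), f p.1 p.2 :=
    (Equiv.prodComm ℕ ℕ).tsum_eq (fun p : ℕ × ℕ => f p.2 p.1) |>.symm ▸ rfl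
  rw [← e1, ← e2]; exact e3

lemma wsum_bound (d f : ℕ → ℝ) (hd0 : ∀ i, 0 ≤ d i) (hd1 : HasSum d 1) (C : ℝ)
    (hf0 : ∀ i, 0 ≤ f i) (hfC : ∀ i, f i ≤ C) :
    Summable (fun i => d i * f i) ∧ (∑' i, d i * f i) ≤ C := by
  have hsum : Summable (fun i => d i * C) := hd1.summable.mul_right C
  have hle : ∀ i, d i * f i ≤ d i * C := fun i =>
    mul_le_mul_of_nonneg_left (hfC i) (hd0 i)
  have hs : Summable (fun i => d i * f i) :=
    Summable.of_nonneg_of_le (fun i => mul_nonneg (hd0 i) (hf0 i)) hle hsum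
  refine ⟨hs, ?_⟩
  calc (∑' i, d i * f i) ≤ ∑' i, d i * C := Summable.tsum_le_tsum hle hs hsum
    _ = (∑' i, d i) * C := tsum_mul_right
    _ = C := by rw [hd1.tsum_eq, one_mul]

/-- MRP value loss bound: the start-state-weighted value difference between two MRPs
is bounded by reward and transition differences weighted by the normalized successor
representation `d_S = (1-γ) ∑_{t=0}^∞ γ^t d_t` of the first MRP. -/
theorem stmt4
    (γ Rmax Vmax : ℝ) (hγ0 : 0 ≤ γ) (hγ1 : γ < 1) (hR : 0 ≤ Rmax)
    (hV : Vmax = Rmax / (1 - γ))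
    (P P' : ℕ → ℕ → ℝ)
    (hP0 : ∀ i j, 0 ≤ P i j) (hP1 : ∀ i, HasSum (P i) 1)
    (hP'0 : ∀ i j, 0 ≤ P' i j) (hP'1 : ∀ i, HasSum (P' i) 1)
    (r r' : ℕ → ℝ)
    (hr : ∀ i, r i ∈ Set.Icc (0:ℝ) Rmax) (hr' : ∀ i, r' i ∈ Set.Icc (0:ℝ) Rmax)
    (v v' : ℕ → ℝ)
    (hv : ∀ i, v i ∈ Set.Icc (0:ℝ) Vmax) (hv' : ∀ i, v' i ∈ Set.Icc (0:ℝ) Vmax)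
    (hbell : ∀ i, v i = r i + γ * ∑' j, P i j * v j)
    (hbell' : ∀ i, v' i = r' i + γ * ∑' j, P' i j * v' j)
    (d : ℕ → ℕ → ℝ)
    (hd00 : ∀ i, 0 ≤ d 0 i) (hd01 : HasSum (d 0) 1)
    (hdrec : ∀ t j, d (t+1) j = ∑' i, d t i * P i j) :
    (∑' i, d 0 i * |v i - v' i|)
      ≤ (1 / (1 - γ)) *
        ((∑' i, ((1 - γ) * ∑' t, γ^t * d t i) * |r i - r' i|)
          + (γ/2) * Vmax *
            (∑' i, ((1 - γ) * ∑' t, γ^t * d t i) * ∑' j, |P i j - P' i j|)) := by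
  have h1γ : 0 < 1 - γ := by linarith
  have hVmax0 : 0 ≤ Vmax := hV ▸ div_nonneg hR h1γ.le
  set Δ : ℕ → ℝ := fun i => |v i - v' i| with hΔdef
  set a : ℕ → ℝ := fun i => |r i - r' i| with hadef
  set b : ℕ → ℝ := fun i => ∑' j, |P i j - P' i j| with hbdef
  set ε : ℕ → ℝ := fun i => a i + γ * (Vmax / 2) * b i with hεdef
  have hΔ0 : ∀ i, 0 ≤ Δ i := fun i => abs_nonneg _
  have hΔV : ∀ i, Δ i ≤ Vmax := fun i => abs_le.mpr
    ⟨by have := (hv i).1; have := (hv' i).2; linarith,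
     by have := (hv i).2; have := (hv' i).1; linarith⟩
  have ha0 : ∀ i, 0 ≤ a i := fun i => abs_nonneg _
  have haR : ∀ i, a i ≤ Rmax := fun i => abs_le.mpr
    ⟨by have := (hr i).1; have := (hr' i).2; linarith,
     by have := (hr i).2; have := (hr' i).1; linarith⟩
  have hbsum : ∀ i, Summable fun j => |P i j - P' i j| := fun i =>
    Summable.of_nonneg_of_le (fun j => abs_nonneg _)
      (fun j => (abs_sub (P i j) (P' i j)).trans_eq (by
        rw [abs_of_nonneg (hP0 i j), abs_of_nonneg (hP'0 i j)]))
      ((hP1 i).summable.add (hP'1 i).summable)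
  have hb0 : ∀ i, 0 ≤ b i := fun i => tsum_nonneg fun j => abs_nonneg _
  have hb2 : ∀ i, b i ≤ 2 := by
    intro i
    have := Summable.tsum_le_tsum (f := fun j => |P i j - P' i j|)
      (g := fun j => P i j + P' i j)
      (fun j => (abs_sub (P i j) (P' i j)).trans_eq (by
        rw [abs_of_nonneg (hP0 i j), abs_of_nonneg (hP'0 i j)]))
      (hbsum i) ((hP1 i).summable.add (hP'1 i).summable)
    have h2 : (∑' j, (P i j + P' i j)) = 2 := by
      have := ((hP1 i).add (hP'1 i)).tsum_eq; norm_num at this ⊢; exact this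
    rw [← h2]; exact this
  have hε0 : ∀ i, 0 ≤ ε i := fun i => add_nonneg (ha0 i)
    (mul_nonneg (mul_nonneg hγ0 (by linarith)) (hb0 i))
  set C : ℝ := Rmax + γ * Vmax with hCdef
  have hεC : ∀ i, ε i ≤ C := by
    intro i
    have h1 := haR i
    have h2 : γ * (Vmax / 2) * b i ≤ γ * (Vmax / 2) * 2 :=
      mul_le_mul_of_nonneg_left (hb2 i) (mul_nonneg hγ0 (by linarith))
    simp only [hεdef, hCdef]; nlinarith
  -- probability vectors
  have hdt : ∀ t, (∀ i, 0 ≤ d t i) ∧ HasSum (d t) 1 := by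
    intro t; induction t with
    | zero => exact ⟨hd00, hd01⟩
    | succ t ih =>
      obtain ⟨h0, h1⟩ := ih
      have hfs : ∀ i, Summable fun j => d t i * P i j := fun i =>
        (hP1 i).summable.mul_left (d t i)
      have hinner : ∀ i, (∑' j, d t i * P i j) = d t i := by
        intro i; rw [tsum_mul_left, (hP1 i).tsum_eq, mul_one]
      have h2 : Summable fun i => ∑' j, d t i * P i j := by
        simp_rw [hinner]; exact h1.summable
      obtain ⟨hms, heq⟩ := fubini_nonneg (fun i j => d t i * P i j)
        (fun i j => mul_nonneg (h0 i) (hP0 i j)) hfs h2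
      have hval : (∑' j, ∑' i, d t i * P i j) = 1 := by
        rw [heq]; simp_rw [hinner]; exact h1.tsum_eq
      have hrw : d (t+1) = fun j => ∑' i, d t i * P i j := funext (hdrec t)
      constructor
      · intro j; rw [hdrec t j]
        exact tsum_nonneg fun i => mul_nonneg (h0 i) (hP0 i j)
      · rw [hrw]; exact hms.hasSum_iff.mpr hval
  -- pointwise recursion
  have sPΔ : ∀ i, Summable fun j => P i j * Δ j := fun i =>
    (wsum_bound (P i) Δ (hP0 i) (hP1 i) Vmax hΔ0 hΔV).1
  have hPΔV : ∀ i, (∑' j, P i j * Δ j) ≤ Vmax := fun i =>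
    (wsum_bound (P i) Δ (hP0 i) (hP1 i) Vmax hΔ0 hΔV).2
  have hPΔ0 : ∀ i, 0 ≤ ∑' j, P i j * Δ j := fun i =>
    tsum_nonneg fun j => mul_nonneg (hP0 i j) (hΔ0 j)
  have key : ∀ i, Δ i ≤ ε i + γ * ∑' j, P i j * Δ j := by
    intro i
    have sPv : Summable fun j => P i j * v j :=
      (wsum_bound (P i) v (hP0 i) (hP1 i) Vmax (fun j => (hv j).1)
        (fun j => (hv j).2)).1
    have sPv' : Summable fun j => P i j * v' j :=
      (wsum_bound (P i) v' (hP0 i) (hP1 i) Vmax (fun j => (hv' j).1)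
        (fun j => (hv' j).2)).1
    have sP'v' : Summable fun j => P' i j * v' j :=
      (wsum_bound (P' i) v' (hP'0 i) (hP'1 i) Vmax (fun j => (hv' j).1)
        (fun j => (hv' j).2)).1
    have sPd : Summable fun j => P i j * (v j - v' j) := by
      have := sPv.sub sPv'
      simpa [mul_sub] using this
    have sDv' : Summable fun j => (P i j - P' i j) * v' j := by
      have := sPv'.sub sP'v'
      simpa [sub_mul] using this
    have hsplit : (∑' j, (P i j * v j - P' i j * v' j))
        = (∑' j, P i j * (v j - v' j)) + ∑' j, (P i j - P' i j) * v' j := by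
      rw [← Summable.tsum_add sPd sDv']
      exact tsum_congr fun j => by ring
    have hdiff : v i - v' i = (r i - r' i)
        + γ * ((∑' j, P i j * (v j - v' j)) + ∑' j, (P i j - P' i j) * v' j) := by
      rw [← hsplit, Summable.tsum_sub sPv sP'v', hbell i, hbell' i]; ring
    -- bound the two tsums
    have hb1 : |∑' j, P i j * (v j - v' j)| ≤ ∑' j, P i j * Δ j := by
      have := norm_tsum_le_tsum_norm (f := fun j => P i j * (v j - v' j))
        (by simpa [Real.norm_eq_abs, abs_mul, abs_of_nonneg (hP0 i _)] using sPΔ i)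
      simpa [Real.norm_eq_abs, abs_mul, abs_of_nonneg (hP0 i _)] using this
    have hb2' : |∑' j, (P i j - P' i j) * v' j| ≤ (Vmax / 2) * b i := by
      have sD : Summable fun j => P i j - P' i j :=
        (hP1 i).summable.sub (hP'1 i).summable
      have hDzero : (∑' j, (P i j - P' i j)) = 0 := by
        rw [Summable.tsum_sub (hP1 i).summable (hP'1 i).summable,
          (hP1 i).tsum_eq, (hP'1 i).tsum_eq, sub_self]
      have sDc : Summable fun j => (P i j - P' i j) * (v' j - Vmax / 2) := by
        have := sDv'.sub (sD.mul_right (Vmax / 2))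
        simpa [mul_sub] using this
      have heq : (∑' j, (P i j - P' i j) * v' j)
          = ∑' j, (P i j - P' i j) * (v' j - Vmax / 2) := by
        have : (∑' j, (P i j - P' i j) * (v' j - Vmax / 2))
            = (∑' j, (P i j - P' i j) * v' j)
              - ∑' j, (P i j - P' i j) * (Vmax / 2) := by
          rw [← Summable.tsum_sub sDv' (sD.mul_right (Vmax / 2))]
          exact tsum_congr fun j => by ring
        rw [this, tsum_mul_right, hDzero]; ring
      rw [heq]
      have habs : Summable fun j => |P i j - P' i j| * |v' j - Vmax / 2| := by
        apply Summable.of_nonneg_of_le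
          (fun j => mul_nonneg (abs_nonneg _) (abs_nonneg _))
          (fun j => ?_) ((hbsum i).mul_right (Vmax / 2))
        refine mul_le_mul_of_nonneg_left ?_ (abs_nonneg _)
        exact abs_le.mpr ⟨by have := (hv' j).1; linarith, by have := (hv' j).2; linarith⟩
      calc |∑' j, (P i j - P' i j) * (v' j - Vmax / 2)|
          ≤ ∑' j, |P i j - P' i j| * |v' j - Vmax / 2| := by
            simpa [Real.norm_eq_abs, abs_mul] using
              norm_tsum_le_tsum_norm (f := fun j => (P i j - P' i j) * (v' j - Vmax / 2))
                (by simpa [Real.norm_eq_abs, abs_mul] using habs)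
        _ ≤ ∑' j, |P i j - P' i j| * (Vmax / 2) := by
            apply Summable.tsum_le_tsum _ habs ((hbsum i).mul_right (Vmax / 2))
            intro j
            refine mul_le_mul_of_nonneg_left ?_ (abs_nonneg _)
            exact abs_le.mpr ⟨by have := (hv' j).1; linarith, by have := (hv' j).2; linarith⟩
        _ = (Vmax / 2) * b i := by rw [tsum_mul_right, hbdef]; ring
    calc Δ i = |v i - v' i| := rfl
      _ ≤ |r i - r' i| + γ * (|∑' j, P i j * (v j - v' j)|
            + |∑' j, (P i j - P' i j) * v' j|) := by
          rw [hdiff]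
          refine (abs_add_le _ _).trans ?_
          gcongr
          rw [abs_mul, abs_of_nonneg hγ0]
          exact mul_le_mul_of_nonneg_left (abs_add_le _ _) hγ0
      _ ≤ a i + γ * ((∑' j, P i j * Δ j) + (Vmax / 2) * b i) := by
          refine add_le_add le_rfl (mul_le_mul_of_nonneg_left (add_le_add hb1 hb2') hγ0)
      _ = ε i + γ * ∑' j, P i j * Δ j := by simp only [hεdef]; ring
  -- step: weighted recursion
  have wΔ : ∀ t, Summable (fun i => d t i * Δ i) ∧ (∑' i, d t i * Δ i) ≤ Vmax :=
    fun t => wsum_bound (d t) Δ (hdt t).1 (hdt t).2 Vmax hΔ0 hΔV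
  have wε : ∀ t, Summable (fun i => d t i * ε i) ∧ (∑' i, d t i * ε i) ≤ C :=
    fun t => wsum_bound (d t) ε (hdt t).1 (hdt t).2 C hε0 hεC
  have step : ∀ t, (∑' i, d t i * Δ i)
      ≤ (∑' i, d t i * ε i) + γ * ∑' i, d (t+1) i * Δ i := by
    intro t
    have wPΔ : Summable (fun i => d t i * ∑' j, P i j * Δ j) :=
      (wsum_bound (d t) (fun i => ∑' j, P i j * Δ j) (hdt t).1 (hdt t).2 Vmax
        hPΔ0 hPΔV).1
    have hstep1 : (∑' i, d t i * Δ i)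
        ≤ ∑' i, (d t i * ε i + γ * (d t i * ∑' j, P i j * Δ j)) := by
      apply Summable.tsum_le_tsum _ (wΔ t).1 ((wε t).1.add (wPΔ.mul_left γ))
      intro i
      have h := mul_le_mul_of_nonneg_left (key i) ((hdt t).1 i)
      calc d t i * Δ i ≤ d t i * (ε i + γ * ∑' j, P i j * Δ j) := h
        _ = d t i * ε i + γ * (d t i * ∑' j, P i j * Δ j) := by ring
    have hsplit : (∑' i, (d t i * ε i + γ * (d t i * ∑' j, P i j * Δ j)))
        = (∑' i, d t i * ε i) + γ * ∑' i, d t i * ∑' j, P i j * Δ j := by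
      rw [Summable.tsum_add (wε t).1 (wPΔ.mul_left γ), tsum_mul_left]
    -- Fubini: ∑ᵢ d t i ∑ⱼ P i j Δ j = ∑ⱼ d (t+1) j Δ j
    have hfub : (∑' i, d t i * ∑' j, P i j * Δ j) = ∑' j, d (t+1) j * Δ j := by
      have h1 : ∀ i, Summable fun j => d t i * (P i j * Δ j) := fun i =>
        (sPΔ i).mul_left (d t i)
      have h2 : Summable fun i => ∑' j, d t i * (P i j * Δ j) := by
        simp_rw [tsum_mul_left]; exact wPΔ
      obtain ⟨hms, heq⟩ := fubini_nonneg (fun i j => d t i * (P i j * Δ j))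
        (fun i j => mul_nonneg ((hdt t).1 i) (mul_nonneg (hP0 i j) (hΔ0 j))) h1 h2
      have e1 : (∑' i, d t i * ∑' j, P i j * Δ j)
          = ∑' i, ∑' j, d t i * (P i j * Δ j) := by
        simp_rw [tsum_mul_left]
      have e2 : ∀ j, (∑' i, d t i * (P i j * Δ j)) = d (t+1) j * Δ j := by
        intro j
        have : (∑' i, d t i * (P i j * Δ j)) = ∑' i, (d t i * P i j) * Δ j :=
          tsum_congr fun i => by ring
        rw [this, tsum_mul_right, hdrec t j]
      rw [e1, ← heq]
      exact tsum_congr e2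
    calc (∑' i, d t i * Δ i)
        ≤ ∑' i, (d t i * ε i + γ * (d t i * ∑' j, P i j * Δ j)) := hstep1
      _ = (∑' i, d t i * ε i) + γ * ∑' i, d t i * ∑' j, P i j * Δ j := hsplit
      _ = (∑' i, d t i * ε i) + γ * ∑' i, d (t+1) i * Δ i := by rw [hfub]
  -- unrolled bound
  have unroll : ∀ T, (∑' i, d 0 i * Δ i)
      ≤ (∑ t ∈ Finset.range T, γ^t * ∑' i, d t i * ε i)
        + γ^T * ∑' i, d T i * Δ i := by
    intro T; induction T with
    | zero => simp
    | succ T ih =>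
      refine ih.trans ?_
      rw [Finset.sum_range_succ]
      have := mul_le_mul_of_nonneg_left (step T) (pow_nonneg hγ0 T)
      calc (∑ t ∈ Finset.range T, γ^t * ∑' i, d t i * ε i)
            + γ^T * ∑' i, d T i * Δ i
          ≤ (∑ t ∈ Finset.range T, γ^t * ∑' i, d t i * ε i)
            + γ^T * ((∑' i, d T i * ε i) + γ * ∑' i, d (T+1) i * Δ i) := by linarith
        _ = ((∑ t ∈ Finset.range T, γ^t * ∑' i, d t i * ε i)
              + γ^T * ∑' i, d T i * ε i)
            + γ^(T+1) * ∑' i, d (T+1) i * Δ i := by ring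
  -- the series S
  have hSsum : Summable fun t => γ^t * ∑' i, d t i * ε i := by
    apply Summable.of_nonneg_of_le
      (fun t => mul_nonneg (pow_nonneg hγ0 t)
        (tsum_nonneg fun i => mul_nonneg ((hdt t).1 i) (hε0 i)))
      (fun t => mul_le_mul_of_nonneg_left ((wε t).2) (pow_nonneg hγ0 t))
      ((summable_geometric_of_lt_one hγ0 hγ1).mul_right C)
  set S : ℝ := ∑' t, γ^t * ∑' i, d t i * ε i with hSdef
  have hmain : (∑' i, d 0 i * Δ i) ≤ S := by
    have hbd : ∀ T : ℕ, (∑' i, d 0 i * Δ i) ≤ S + γ^T * Vmax := by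
      intro T
      refine (unroll T).trans (add_le_add ?_ ?_)
      · exact Summable.sum_le_tsum (Finset.range T)
          (fun t _ => mul_nonneg (pow_nonneg hγ0 t)
            (tsum_nonneg fun i => mul_nonneg ((hdt t).1 i) (hε0 i))) hSsum
      · exact mul_le_mul_of_nonneg_left ((wΔ T).2) (pow_nonneg hγ0 T)
    have htend : Filter.Tendsto (fun T : ℕ => S + γ^T * Vmax)
        Filter.atTop (nhds S) := by
      have := ((tendsto_pow_atTop_nhds_zero_of_lt_one hγ0 hγ1).mul_const Vmax)
      have h := Filter.Tendsto.const_add S this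
      simpa using h
    exact ge_of_tendsto' htend hbd
  -- now identify RHS with S
  have wa : ∀ t, Summable (fun i => d t i * a i) ∧ (∑' i, d t i * a i) ≤ Rmax :=
    fun t => wsum_bound (d t) a (hdt t).1 (hdt t).2 Rmax ha0 haR
  have wb : ∀ t, Summable (fun i => d t i * b i) ∧ (∑' i, d t i * b i) ≤ 2 :=
    fun t => wsum_bound (d t) b (hdt t).1 (hdt t).2 2 hb0 hb2
  have hSa : Summable fun t => γ^t * ∑' i, d t i * a i :=
    Summable.of_nonneg_of_le
      (fun t => mul_nonneg (pow_nonneg hγ0 t)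
        (tsum_nonneg fun i => mul_nonneg ((hdt t).1 i) (ha0 i)))
      (fun t => mul_le_mul_of_nonneg_left ((wa t).2) (pow_nonneg hγ0 t))
      ((summable_geometric_of_lt_one hγ0 hγ1).mul_right Rmax)
  have hSb : Summable fun t => γ^t * ∑' i, d t i * b i :=
    Summable.of_nonneg_of_le
      (fun t => mul_nonneg (pow_nonneg hγ0 t)
        (tsum_nonneg fun i => mul_nonneg ((hdt t).1 i) (hb0 i)))
      (fun t => mul_le_mul_of_nonneg_left ((wb t).2) (pow_nonneg hγ0 t))
      ((summable_geometric_of_lt_one hγ0 hγ1).mul_right 2)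
  -- S splits
  have hSsplit : S = (∑' t, γ^t * ∑' i, d t i * a i)
      + γ * (Vmax / 2) * ∑' t, γ^t * ∑' i, d t i * b i := by
    have hterm : ∀ t, γ^t * (∑' i, d t i * ε i)
        = γ^t * (∑' i, d t i * a i)
          + γ * (Vmax / 2) * (γ^t * ∑' i, d t i * b i) := by
      intro t
      have : (∑' i, d t i * ε i)
          = (∑' i, d t i * a i) + γ * (Vmax / 2) * ∑' i, d t i * b i := by
        have : (∑' i, (d t i * a i + γ * (Vmax / 2) * (d t i * b i)))
            = (∑' i, d t i * a i) + ∑' i, γ * (Vmax / 2) * (d t i * b i) :=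
          Summable.tsum_add (wa t).1 ((wb t).1.mul_left _)
        rw [tsum_mul_left] at this
        rw [← this]
        exact tsum_congr fun i => by simp only [hεdef]; ring
      rw [this]; ring
    rw [hSdef]
    rw [tsum_congr hterm, Summable.tsum_add hSa (hSb.mul_left _), tsum_mul_left]
  -- Fubini for the RHS double sums
  have hwfub : ∀ (g : ℕ → ℝ) (G : ℝ), (∀ i, 0 ≤ g i) → (∀ i, g i ≤ G) →
      (∑' i, (∑' t, γ^t * d t i) * g i) = ∑' t, γ^t * ∑' i, d t i * g i := by
    intro g G hg0 hgG
    have h1 : ∀ t, Summable fun i => γ^t * (d t i * g i) := fun t =>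
      ((wsum_bound (d t) g (hdt t).1 (hdt t).2 G hg0 hgG).1).mul_left _
    have h2 : Summable fun t => ∑' i, γ^t * (d t i * g i) := by
      simp_rw [tsum_mul_left]
      apply Summable.of_nonneg_of_le
        (fun t => mul_nonneg (pow_nonneg hγ0 t)
          (tsum_nonneg fun i => mul_nonneg ((hdt t).1 i) (hg0 i)))
        (fun t => mul_le_mul_of_nonneg_left
          ((wsum_bound (d t) g (hdt t).1 (hdt t).2 G hg0 hgG).2) (pow_nonneg hγ0 t))
        ((summable_geometric_of_lt_one hγ0 hγ1).mul_right G)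
    obtain ⟨hms, heq⟩ := fubini_nonneg (fun t i => γ^t * (d t i * g i))
      (fun t i => mul_nonneg (pow_nonneg hγ0 t) (mul_nonneg ((hdt t).1 i) (hg0 i)))
      h1 h2
    have e1 : ∀ i, (∑' t, γ^t * d t i) * g i = ∑' t, γ^t * (d t i * g i) := by
      intro i
      rw [← tsum_mul_right]
      exact tsum_congr fun t => by ring
    calc (∑' i, (∑' t, γ^t * d t i) * g i)
        = ∑' i, ∑' t, γ^t * (d t i * g i) := tsum_congr e1
      _ = ∑' t, ∑' i, γ^t * (d t i * g i) := heq
      _ = ∑' t, γ^t * ∑' i, d t i * g i := tsum_congr fun t => by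
          rw [tsum_mul_left]
  have hRa : (∑' i, ((1 - γ) * ∑' t, γ^t * d t i) * a i)
      = (1 - γ) * ∑' t, γ^t * ∑' i, d t i * a i := by
    rw [← hwfub a Rmax ha0 haR, ← tsum_mul_left]
    exact tsum_congr fun i => by ring
  have hRb : (∑' i, ((1 - γ) * ∑' t, γ^t * d t i) * b i)
      = (1 - γ) * ∑' t, γ^t * ∑' i, d t i * b i := by
    rw [← hwfub b 2 hb0 hb2, ← tsum_mul_left]
    exact tsum_congr fun i => by ring
  -- wrap up
  have hγne : (1 - γ) ≠ 0 := ne_of_gt h1γ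
  calc (∑' i, d 0 i * Δ i) ≤ S := hmain
    _ = (∑' t, γ^t * ∑' i, d t i * a i)
        + γ * (Vmax / 2) * ∑' t, γ^t * ∑' i, d t i * b i := hSsplit
    _ = (1 / (1 - γ)) *
        (((1 - γ) * ∑' t, γ^t * ∑' i, d t i * a i)
          + (γ/2) * Vmax * ((1 - γ) * ∑' t, γ^t * ∑' i, d t i * b i)) := by
      field_simp
    _ = (1 / (1 - γ)) *
        ((∑' i, ((1 - γ) * ∑' t, γ^t * d t i) * a i)
          + (γ/2) * Vmax * (∑' i, ((1 - γ) * ∑' t, γ^t * d t i) * b i)) := by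
      rw [hRa, hRb]
end

section
/- Simulation lemma for countably infinite state spaces: let M and M̂ be two MDPs on ℕ sharing the same finite action set 𝒜 and discount γ ∈ [0,1), with rewards in [0, Rmax]. Fix a policy π, a start probability vector d₀ on ℕ, and let d̂_S be the normalized successor representation of the MRP induced by π in M̂ started from d₀. If ‖r^π − r̂^π‖_{d̂_S} ≤ ε_r and ‖P^π − P̂^π‖_{d̂_S} ≤ ε_p, where r^π, P^π (resp. r̂^π, P̂^π) are the reward vector and transition matrix of the MRP induced by π in M (resp. M̂), then ‖v^π − v̂^π‖_{d₀} ≤ (1/(1−γ)) ( ε_r + (γ/2) Vmax ε_p ), with Vmax = Rmax/(1−γ). -/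
theorem myabs_tsum_le {f : ℕ → ℝ} (h : Summable fun i => |f i|) : |∑' i, f i| ≤ ∑' i, |f i| := by
  have := norm_tsum_le_tsum_norm (f := f) (by simpa [Real.norm_eq_abs] using h)
  simpa [Real.norm_eq_abs] using this

open Filter in
theorem myaux (γ Vmax B : ℝ) (hγ0 : 0 ≤ γ) (hγ1 : γ < 1) (hV0 : 0 ≤ Vmax)
    (R R' : ℕ → ℝ) (hδB : ∀ s, |R s - R' s| ≤ B)
    (P Q : ℕ → ℕ → ℝ)
    (hP0 : ∀ s s', 0 ≤ P s s') (hP1 : ∀ s, HasSum (P s) 1)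
    (hQ0 : ∀ s s', 0 ≤ Q s s') (hQ1 : ∀ s, HasSum (Q s) 1)
    (d : ℕ → ℕ → ℝ) (hd00 : ∀ i, 0 ≤ d 0 i) (hd01 : HasSum (d 0) 1)
    (hdrec : ∀ t j, d (t+1) j = ∑' i, d t i * Q i j)
    (v v' : ℕ → ℝ)
    (hv : ∀ s, v s ∈ Set.Icc (0:ℝ) Vmax) (hv' : ∀ s, v' s ∈ Set.Icc (0:ℝ) Vmax)
    (hbell : ∀ s, v s = R s + γ * ∑' s', P s s' * v s')
    (hbell' : ∀ s, v' s = R' s + γ * ∑' s', Q s s' * v' s')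
    (εr εp : ℝ)
    (hεr : (∑' s, ((1 - γ) * ∑' t, γ^t * d t s) * |R s - R' s|) ≤ εr)
    (hεp : (∑' s, ((1 - γ) * ∑' t, γ^t * d t s) * ∑' s', |P s s' - Q s s'|) ≤ εp) :
    (1 - γ) * (∑' s, d 0 s * |v s - v' s|) ≤ εr + γ * (Vmax/2) * εp := by
  have hγ' : (0:ℝ) < 1 - γ := by linarith
  have hB0 : 0 ≤ B := le_trans (abs_nonneg _) (hδB 0)
  -- basic summability and bounds
  have hPsum : ∀ s, Summable (P s) := fun s => (hP1 s).summable
  have hQsum : ∀ s, Summable (Q s) := fun s => (hQ1 s).summable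
  have hQle1 : ∀ s s', Q s s' ≤ 1 := fun s s' =>
    le_hasSum (hQ1 s) s' (fun j _ => hQ0 s j)
  have hΔ0 : ∀ s, 0 ≤ |v s - v' s| := fun s => abs_nonneg _
  have hΔV : ∀ s, |v s - v' s| ≤ Vmax := fun s =>
    abs_sub_le_iff.mpr ⟨by linarith [(hv s).2, (hv' s).1], by linarith [(hv' s).2, (hv s).1]⟩
  have hPv : ∀ s, Summable (fun s' => P s s' * v s') := fun s =>
    Summable.of_nonneg_of_le (fun s' => mul_nonneg (hP0 s s') (hv s').1)
      (fun s' => mul_le_mul_of_nonneg_left (hv s').2 (hP0 s s')) ((hPsum s).mul_right Vmax)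
  have hQv : ∀ s, Summable (fun s' => Q s s' * v s') := fun s =>
    Summable.of_nonneg_of_le (fun s' => mul_nonneg (hQ0 s s') (hv s').1)
      (fun s' => mul_le_mul_of_nonneg_left (hv s').2 (hQ0 s s')) ((hQsum s).mul_right Vmax)
  have hQv' : ∀ s, Summable (fun s' => Q s s' * v' s') := fun s =>
    Summable.of_nonneg_of_le (fun s' => mul_nonneg (hQ0 s s') (hv' s').1)
      (fun s' => mul_le_mul_of_nonneg_left (hv' s').2 (hQ0 s s')) ((hQsum s).mul_right Vmax)
  have hQΔ : ∀ s, Summable (fun s' => Q s s' * |v s' - v' s'|) := fun s =>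
    Summable.of_nonneg_of_le (fun s' => mul_nonneg (hQ0 s s') (hΔ0 s'))
      (fun s' => mul_le_mul_of_nonneg_left (hΔV s') (hQ0 s s')) ((hQsum s).mul_right Vmax)
  have habsPQ : ∀ s, Summable (fun s' => |P s s' - Q s s'|) := fun s =>
    Summable.of_nonneg_of_le (fun s' => abs_nonneg _)
      (fun s' => (abs_sub _ _).trans (by
        rw [abs_of_nonneg (hP0 s s'), abs_of_nonneg (hQ0 s s')]))
      ((hPsum s).add (hQsum s))
  have hgsum0 : ∀ s, 0 ≤ ∑' s', |P s s' - Q s s'| := fun s => tsum_nonneg (fun _ => abs_nonneg _)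
  have hgsum2 : ∀ s, (∑' s', |P s s' - Q s s'|) ≤ 2 := by
    intro s
    have h1 : (∑' s', |P s s' - Q s s'|) ≤ ∑' s', (P s s' + Q s s') :=
      Summable.tsum_le_tsum (fun s' => (abs_sub _ _).trans (by
        rw [abs_of_nonneg (hP0 s s'), abs_of_nonneg (hQ0 s s')])) (habsPQ s)
        ((hPsum s).add (hQsum s))
    calc (∑' s', |P s s' - Q s s'|) ≤ ∑' s', (P s s' + Q s s') := h1
      _ = 1 + 1 := ((hP1 s).add (hQ1 s)).tsum_eq
      _ = 2 := by norm_num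
  -- pointwise key inequality (real)
  have keyA : ∀ s, |v s - v' s| ≤ |R s - R' s| +
      γ * ((Vmax/2) * (∑' s', |P s s' - Q s s'|) + ∑' s', Q s s' * |v s' - v' s'|) := by
    intro s
    have hPQ : Summable (fun s' => P s s' - Q s s') := (hP1 s).summable.sub (hQ1 s).summable
    have hPQv : Summable (fun s' => (P s s' - Q s s') * v s') := by
      have := (hPv s).sub (hQv s)
      refine this.congr (fun s' => ?_); ring
    have hPQc : Summable (fun s' => (P s s' - Q s s') * (Vmax/2)) := hPQ.mul_right _
    have hPQvc : Summable (fun s' => (P s s' - Q s s') * (v s' - Vmax/2)) := by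
      have := hPQv.sub hPQc
      refine this.congr (fun s' => ?_); ring
    have eq0 : (∑' s', (P s s' - Q s s') * (Vmax/2)) = 0 := by
      rw [tsum_mul_right, Summable.tsum_sub (hP1 s).summable (hQ1 s).summable,
        (hP1 s).tsum_eq, (hQ1 s).tsum_eq]
      ring
    have eqA : (∑' s', (P s s' - Q s s') * (v s' - Vmax/2))
        = (∑' s', P s s' * v s') - (∑' s', Q s s' * v s') := by
      have e1 : (∑' s', (P s s' - Q s s') * (v s' - Vmax/2))
          = (∑' s', (P s s' - Q s s') * v s') - ∑' s', (P s s' - Q s s') * (Vmax/2) := by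
        rw [← Summable.tsum_sub hPQv hPQc]
        congr 1; funext s'; ring
      have e2 : (∑' s', (P s s' - Q s s') * v s')
          = (∑' s', P s s' * v s') - (∑' s', Q s s' * v s') := by
        rw [← Summable.tsum_sub (hPv s) (hQv s)]
        congr 1; funext s'; ring
      rw [e1, e2, eq0, sub_zero]
    have eqB : (∑' s', Q s s' * (v s' - v' s'))
        = (∑' s', Q s s' * v s') - (∑' s', Q s s' * v' s') := by
      rw [← Summable.tsum_sub (hQv s) (hQv' s)]
      congr 1; funext s'; ring
    have e1 : v s - v' s = (R s - R' s) +
        γ * ((∑' s', (P s s' - Q s s') * (v s' - Vmax/2)) + ∑' s', Q s s' * (v s' - v' s')) := by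
      rw [eqA, eqB]
      calc v s - v' s = (R s + γ * ∑' s', P s s' * v s') - (R' s + γ * ∑' s', Q s s' * v' s') := by
            rw [← hbell s, ← hbell' s]
        _ = _ := by ring
    have boundX : |∑' s', (P s s' - Q s s') * (v s' - Vmax/2)|
        ≤ (Vmax/2) * ∑' s', |P s s' - Q s s'| := by
      have h1 : ∀ s', |(P s s' - Q s s') * (v s' - Vmax/2)| ≤ |P s s' - Q s s'| * (Vmax/2) := by
        intro s'
        rw [abs_mul]
        refine mul_le_mul_of_nonneg_left ?_ (abs_nonneg _)
        rw [abs_le]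
        constructor
        · linarith [(hv s').1]
        · linarith [(hv s').2]
      have habs : Summable (fun s' => |(P s s' - Q s s') * (v s' - Vmax/2)|) :=
        Summable.of_nonneg_of_le (fun _ => abs_nonneg _) h1 ((habsPQ s).mul_right _)
      calc |∑' s', (P s s' - Q s s') * (v s' - Vmax/2)|
          ≤ ∑' s', |(P s s' - Q s s') * (v s' - Vmax/2)| := myabs_tsum_le habs
        _ ≤ ∑' s', |P s s' - Q s s'| * (Vmax/2) := Summable.tsum_le_tsum h1 habs ((habsPQ s).mul_right _)
        _ = (Vmax/2) * ∑' s', |P s s' - Q s s'| := by rw [tsum_mul_right]; ring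
    have boundY : |∑' s', Q s s' * (v s' - v' s')| ≤ ∑' s', Q s s' * |v s' - v' s'| := by
      have heq : ∀ s', |Q s s' * (v s' - v' s')| = Q s s' * |v s' - v' s'| := by
        intro s'; rw [abs_mul, abs_of_nonneg (hQ0 s s')]
      have habs : Summable (fun s' => |Q s s' * (v s' - v' s')|) :=
        (hQΔ s).congr (fun s' => (heq s').symm)
      calc |∑' s', Q s s' * (v s' - v' s')| ≤ ∑' s', |Q s s' * (v s' - v' s')| := myabs_tsum_le habs
        _ = ∑' s', Q s s' * |v s' - v' s'| := tsum_congr heq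
    calc |v s - v' s| = |(R s - R' s) + γ * ((∑' s', (P s s' - Q s s') * (v s' - Vmax/2)) + ∑' s', Q s s' * (v s' - v' s'))| := by rw [← e1]
      _ ≤ |R s - R' s| + |γ * ((∑' s', (P s s' - Q s s') * (v s' - Vmax/2)) + ∑' s', Q s s' * (v s' - v' s'))| := abs_add_le _ _
      _ = |R s - R' s| + γ * |(∑' s', (P s s' - Q s s') * (v s' - Vmax/2)) + ∑' s', Q s s' * (v s' - v' s')| := by rw [abs_mul, abs_of_nonneg hγ0]
      _ ≤ |R s - R' s| + γ * (|∑' s', (P s s' - Q s s') * (v s' - Vmax/2)| + |∑' s', Q s s' * (v s' - v' s')|) := by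
          have := abs_add_le (∑' s', (P s s' - Q s s') * (v s' - Vmax/2)) (∑' s', Q s s' * (v s' - v' s'))
          nlinarith [abs_nonneg ((∑' s', (P s s' - Q s s') * (v s' - Vmax/2)) + ∑' s', Q s s' * (v s' - v' s'))]
      _ ≤ |R s - R' s| + γ * ((Vmax/2) * (∑' s', |P s s' - Q s s'|) + ∑' s', Q s s' * |v s' - v' s'|) := by
          have := boundX; have := boundY
          nlinarith [abs_nonneg (∑' s', (P s s' - Q s s') * (v s' - Vmax/2))]
  -- ENNReal setup
  set γe : ENNReal := ENNReal.ofReal γ with hγe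
  set Ve : ENNReal := ENNReal.ofReal Vmax with hVe
  set Ce : ENNReal := ENNReal.ofReal (Vmax/2) with hCe
  set D : ℕ → ℕ → ENNReal := fun t s => ENNReal.ofReal (d t s) with hD
  set Δe : ℕ → ENNReal := fun s => ENNReal.ofReal |v s - v' s| with hΔe
  set δe : ℕ → ENNReal := fun s => ENNReal.ofReal |R s - R' s| with hδe
  set Qe : ℕ → ℕ → ENNReal := fun s s' => ENNReal.ofReal (Q s s') with hQe
  set Ge : ℕ → ENNReal := fun s => ∑' s', ENNReal.ofReal |P s s' - Q s s'| with hGe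
  have hγe1 : γe < 1 := by rw [hγe]; exact ENNReal.ofReal_lt_one.mpr hγ1
  have hQerow : ∀ i, (∑' j, Qe i j) = 1 := by
    intro i
    simp only [hQe]
    rw [← ENNReal.ofReal_tsum_of_nonneg (hQ0 i) (hQsum i), (hQ1 i).tsum_eq, ENNReal.ofReal_one]
  -- properties of the distributions d t
  have hdprop : ∀ t, (∀ i, 0 ≤ d t i) ∧ (∑' s, D t s) = 1 := by
    intro t
    induction t with
    | zero =>
      refine ⟨hd00, ?_⟩
      simp only [hD]
      rw [← ENNReal.ofReal_tsum_of_nonneg hd00 hd01.summable, hd01.tsum_eq, ENNReal.ofReal_one]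
    | succ t ih =>
      obtain ⟨ih0, ihS⟩ := ih
      have hsum_dt : Summable (d t) := by
        have h1 : (∑' s, D t s) ≠ ⊤ := by rw [ihS]; exact ENNReal.one_ne_top
        have h2 := ENNReal.summable_toReal h1
        exact h2.congr (fun i => by simp only [hD]; exact ENNReal.toReal_ofReal (ih0 i))
      have hsumQ : ∀ j, Summable (fun i => d t i * Q i j) := fun j =>
        Summable.of_nonneg_of_le (fun i => mul_nonneg (ih0 i) (hQ0 i j))
          (fun i => mul_le_of_le_one_right (ih0 i) (hQle1 i j)) hsum_dt
      have h0 : ∀ j, 0 ≤ d (t+1) j := fun j => by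
        rw [hdrec t j]; exact tsum_nonneg (fun i => mul_nonneg (ih0 i) (hQ0 i j))
      refine ⟨h0, ?_⟩
      have hDrec : ∀ j, D (t+1) j = ∑' i, D t i * Qe i j := by
        intro j
        simp only [hD, hQe]
        rw [hdrec t j, ENNReal.ofReal_tsum_of_nonneg (fun i => mul_nonneg (ih0 i) (hQ0 i j)) (hsumQ j)]
        exact tsum_congr (fun i => ENNReal.ofReal_mul (ih0 i))
      calc (∑' j, D (t+1) j) = ∑' j, ∑' i, D t i * Qe i j := tsum_congr hDrec
        _ = ∑' i, ∑' j, D t i * Qe i j := ENNReal.tsum_comm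
        _ = ∑' i, D t i * ∑' j, Qe i j := tsum_congr (fun i => ENNReal.tsum_mul_left)
        _ = ∑' i, D t i := tsum_congr (fun i => by rw [hQerow i, mul_one])
        _ = 1 := ihS
  have hd0' : ∀ t i, 0 ≤ d t i := fun t => (hdprop t).1
  have hDsum1 : ∀ t, (∑' s, D t s) = 1 := fun t => (hdprop t).2
  have hsum_dt : ∀ t, Summable (d t) := by
    intro t
    have h1 : (∑' s, D t s) ≠ ⊤ := by rw [hDsum1 t]; exact ENNReal.one_ne_top
    have h2 := ENNReal.summable_toReal h1
    exact h2.congr (fun i => by simp only [hD]; exact ENNReal.toReal_ofReal (hd0' t i))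
  have hDrec' : ∀ t j, D (t+1) j = ∑' i, D t i * Qe i j := by
    intro t j
    simp only [hD, hQe]
    rw [hdrec t j, ENNReal.ofReal_tsum_of_nonneg (fun i => mul_nonneg (hd0' t i) (hQ0 i j))
      (Summable.of_nonneg_of_le (fun i => mul_nonneg (hd0' t i) (hQ0 i j))
        (fun i => mul_le_of_le_one_right (hd0' t i) (hQle1 i j)) (hsum_dt t))]
    exact tsum_congr (fun i => ENNReal.ofReal_mul (hd0' t i))
  have hdle1 : ∀ t s, d t s ≤ 1 := by
    intro t s
    have h1 : D t s ≤ 1 := by rw [← hDsum1 t]; exact ENNReal.le_tsum s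
    exact ENNReal.ofReal_le_one.mp (by simpa [hD] using h1)
  -- key inequality in ENNReal
  have keyAe : ∀ s, Δe s ≤ δe s + γe * (Ce * Ge s) + γe * ∑' s', Qe s s' * Δe s' := by
    intro s
    have hGeq : ENNReal.ofReal (∑' s', |P s s' - Q s s'|) = Ge s := by
      simp only [hGe]
      exact ENNReal.ofReal_tsum_of_nonneg (fun _ => abs_nonneg _) (habsPQ s)
    have hQΔeq : ENNReal.ofReal (∑' s', Q s s' * |v s' - v' s'|) = ∑' s', Qe s s' * Δe s' := by
      rw [ENNReal.ofReal_tsum_of_nonneg (fun s' => mul_nonneg (hQ0 s s') (hΔ0 s')) (hQΔ s)]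
      simp only [hQe, hΔe]
      exact tsum_congr (fun s' => ENNReal.ofReal_mul (hQ0 s s'))
    have hV2 : (0:ℝ) ≤ Vmax/2 := by linarith
    calc Δe s ≤ ENNReal.ofReal (|R s - R' s| +
        γ * ((Vmax/2) * (∑' s', |P s s' - Q s s'|) + ∑' s', Q s s' * |v s' - v' s'|)) := by
          simp only [hΔe]; exact ENNReal.ofReal_le_ofReal (keyA s)
      _ = δe s + γe * (Ce * Ge s) + γe * ∑' s', Qe s s' * Δe s' := by
          rw [ENNReal.ofReal_add (abs_nonneg _) (mul_nonneg hγ0 (add_nonneg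
              (mul_nonneg hV2 (hgsum0 s)) (tsum_nonneg fun s' => mul_nonneg (hQ0 s s') (hΔ0 s')))),
            ENNReal.ofReal_mul hγ0,
            ENNReal.ofReal_add (mul_nonneg hV2 (hgsum0 s))
              (tsum_nonneg fun s' => mul_nonneg (hQ0 s s') (hΔ0 s')),
            ENNReal.ofReal_mul hV2, hGeq, hQΔeq]
          simp only [hδe, hγe, hCe]
          ring
  -- one step of the recursion
  have hstep : ∀ t, (∑' s, D t s * Δe s)
      ≤ (∑' s, D t s * (δe s + γe * (Ce * Ge s))) + γe * ∑' s, D (t+1) s * Δe s := by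
    intro t
    have h1 : (∑' s, D t s * Δe s)
        ≤ ∑' s, (D t s * (δe s + γe * (Ce * Ge s)) + D t s * (γe * ∑' s', Qe s s' * Δe s')) := by
      refine ENNReal.tsum_le_tsum (fun s => ?_)
      rw [← mul_add]
      refine mul_le_mul_right ((keyAe s).trans_eq ?_) _
      ring
    rw [ENNReal.tsum_add] at h1
    have h2 : (∑' s, D t s * (γe * ∑' s', Qe s s' * Δe s')) = γe * ∑' s', D (t+1) s' * Δe s' := by
      calc (∑' s, D t s * (γe * ∑' s', Qe s s' * Δe s'))
          = ∑' s, γe * ∑' s', D t s * Qe s s' * Δe s' := by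
            refine tsum_congr (fun s => ?_)
            have e : (∑' s', D t s * Qe s s' * Δe s') = D t s * ∑' s', Qe s s' * Δe s' := by
              simp only [mul_assoc]
              exact ENNReal.tsum_mul_left
            rw [e]; ring
        _ = γe * ∑' s, ∑' s', D t s * Qe s s' * Δe s' := ENNReal.tsum_mul_left
        _ = γe * ∑' s', ∑' s, D t s * Qe s s' * Δe s' := by rw [ENNReal.tsum_comm]
        _ = γe * ∑' s', D (t+1) s' * Δe s' := by
            refine congrArg _ (tsum_congr fun s' => ?_)
            rw [ENNReal.tsum_mul_right, hDrec' t s']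
    rw [h2] at h1
    exact h1
  -- unrolled recursion
  have hWle : ∀ T, (∑' s, D T s * Δe s) ≤ Ve := by
    intro T
    have h1 : (∑' s, D T s * Δe s) ≤ ∑' s, D T s * Ve := by
      refine ENNReal.tsum_le_tsum (fun s => mul_le_mul_right ?_ _)
      simp only [hΔe, hVe]
      exact ENNReal.ofReal_le_ofReal (hΔV s)
    have h2 : (∑' s, D T s * Ve) = Ve := by rw [ENNReal.tsum_mul_right, hDsum1 T, one_mul]
    exact h1.trans_eq h2
  have hunroll : ∀ T, (∑' s, D 0 s * Δe s)
      ≤ (∑ t ∈ Finset.range T, γe^t * ∑' s, D t s * (δe s + γe * (Ce * Ge s)))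
        + γe^T * ∑' s, D T s * Δe s := by
    intro T
    induction T with
    | zero => simp
    | succ T ih =>
      refine ih.trans ?_
      calc (∑ t ∈ Finset.range T, γe^t * ∑' s, D t s * (δe s + γe * (Ce * Ge s)))
            + γe^T * ∑' s, D T s * Δe s
          ≤ (∑ t ∈ Finset.range T, γe^t * ∑' s, D t s * (δe s + γe * (Ce * Ge s)))
            + γe^T * ((∑' s, D T s * (δe s + γe * (Ce * Ge s))) + γe * ∑' s, D (T+1) s * Δe s) :=
            add_le_add_right (mul_le_mul_right (hstep T) _) _
        _ = (∑ t ∈ Finset.range (T+1), γe^t * ∑' s, D t s * (δe s + γe * (Ce * Ge s)))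
            + γe^(T+1) * ∑' s, D (T+1) s * Δe s := by
            rw [Finset.sum_range_succ]
            ring
  set S : ENNReal := ∑' t, γe^t * ∑' s, D t s * (δe s + γe * (Ce * Ge s)) with hS
  have hW0S : (∑' s, D 0 s * Δe s) ≤ S := by
    have hbound : ∀ T, (∑' s, D 0 s * Δe s) ≤ S + γe^T * Ve := fun T =>
      (hunroll T).trans (add_le_add (by rw [hS]; exact ENNReal.sum_le_tsum _)
        (mul_le_mul_right (hWle T) _))
    have h1 : Tendsto (fun T : ℕ => γe^T) atTop (nhds 0) :=
      ENNReal.tendsto_pow_atTop_nhds_zero_of_lt_one hγe1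
    have h2 : Tendsto (fun T : ℕ => γe^T * Ve) atTop (nhds 0) := by
      have := ENNReal.Tendsto.mul_const (b := Ve) h1
        (Or.inr (by simp only [hVe]; exact ENNReal.ofReal_ne_top))
      simpa using this
    have h3 : Tendsto (fun T : ℕ => S + γe^T * Ve) atTop (nhds S) := by
      have := h2.const_add S
      simpa using this
    exact ge_of_tendsto' h3 hbound
  -- Fubini: reorganize S
  set K : ℕ → ENNReal := fun s => ∑' t, γe^t * D t s with hK
  have hSsplit : S = (∑' s, K s * δe s) + γe * (Ce * ∑' s, K s * Ge s) := by
    have e1 : S = ∑' s, K s * (δe s + γe * (Ce * Ge s)) := by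
      rw [hS]
      calc (∑' t, γe^t * ∑' s, D t s * (δe s + γe * (Ce * Ge s)))
          = ∑' t, ∑' s, γe^t * (D t s * (δe s + γe * (Ce * Ge s))) :=
            tsum_congr (fun t => (ENNReal.tsum_mul_left).symm)
        _ = ∑' s, ∑' t, γe^t * (D t s * (δe s + γe * (Ce * Ge s))) := ENNReal.tsum_comm
        _ = ∑' s, K s * (δe s + γe * (Ce * Ge s)) := by
            refine tsum_congr (fun s => ?_)
            simp only [hK]
            rw [← ENNReal.tsum_mul_right]
            exact tsum_congr (fun t => by ring)
    rw [e1]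
    calc (∑' s, K s * (δe s + γe * (Ce * Ge s)))
        = ∑' s, (K s * δe s + γe * (Ce * (K s * Ge s))) := tsum_congr (fun s => by ring)
      _ = (∑' s, K s * δe s) + ∑' s, γe * (Ce * (K s * Ge s)) := ENNReal.tsum_add
      _ = (∑' s, K s * δe s) + γe * (Ce * ∑' s, K s * Ge s) := by
          rw [ENNReal.tsum_mul_left]
          congr 1
          rw [ENNReal.tsum_mul_left]
  have hKtot : (∑' s, K s) = (1 - γe)⁻¹ := by
    simp only [hK]
    calc (∑' s, ∑' t, γe^t * D t s) = ∑' t, ∑' s, γe^t * D t s := ENNReal.tsum_comm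
      _ = ∑' t, γe^t := tsum_congr (fun t => by rw [ENNReal.tsum_mul_left, hDsum1 t, mul_one])
      _ = (1-γe)⁻¹ := ENNReal.tsum_geometric γe
  have hKtot_ne : (∑' s, K s) ≠ ⊤ := by
    rw [hKtot]
    exact ENNReal.inv_ne_top.mpr (fun h => absurd (tsub_eq_zero_iff_le.mp h) (not_le.mpr hγe1))
  have hκ0 : ∀ s, 0 ≤ (∑' t, γ^t * d t s) := fun s =>
    tsum_nonneg (fun t => mul_nonneg (pow_nonneg hγ0 t) (hd0' t s))
  have hKreal : ∀ s, ENNReal.ofReal (∑' t, γ^t * d t s) = K s := by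
    intro s
    have hsummt : Summable (fun t => γ^t * d t s) :=
      Summable.of_nonneg_of_le (fun t => mul_nonneg (pow_nonneg hγ0 t) (hd0' t s))
        (fun t => mul_le_of_le_one_right (pow_nonneg hγ0 t) (hdle1 t s))
        (summable_geometric_of_lt_one hγ0 hγ1)
    rw [ENNReal.ofReal_tsum_of_nonneg (fun t => mul_nonneg (pow_nonneg hγ0 t) (hd0' t s)) hsummt]
    simp only [hK, hD, hγe]
    exact tsum_congr (fun t => by rw [ENNReal.ofReal_mul (pow_nonneg hγ0 t), ENNReal.ofReal_pow hγ0])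
  have hκsum : Summable (fun s => ∑' t, γ^t * d t s) := by
    have h2 := ENNReal.summable_toReal hKtot_ne
    refine h2.congr (fun s => ?_)
    rw [← hKreal s, ENNReal.toReal_ofReal (hκ0 s)]
  -- relate the two weighted sums to the hypotheses
  have hf0r : ∀ s, 0 ≤ ((1 - γ) * ∑' t, γ^t * d t s) * |R s - R' s| := fun s =>
    mul_nonneg (mul_nonneg hγ'.le (hκ0 s)) (abs_nonneg _)
  have hf0p : ∀ s, 0 ≤ ((1 - γ) * ∑' t, γ^t * d t s) * ∑' s', |P s s' - Q s s'| := fun s =>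
    mul_nonneg (mul_nonneg hγ'.le (hκ0 s)) (hgsum0 s)
  have hεr0 : 0 ≤ εr := le_trans (tsum_nonneg hf0r) hεr
  have hεp0 : 0 ≤ εp := le_trans (tsum_nonneg hf0p) hεp
  have hXr : ENNReal.ofReal (1-γ) * (∑' s, K s * δe s) ≤ ENNReal.ofReal εr := by
    have hfs : Summable (fun s => ((1 - γ) * ∑' t, γ^t * d t s) * |R s - R' s|) :=
      Summable.of_nonneg_of_le hf0r
        (fun s => mul_le_mul_of_nonneg_left (hδB s) (mul_nonneg hγ'.le (hκ0 s)))
        ((hκsum.mul_left (1-γ)).mul_right B)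
    calc ENNReal.ofReal (1-γ) * (∑' s, K s * δe s)
        = ∑' s, ENNReal.ofReal (1-γ) * (K s * δe s) := (ENNReal.tsum_mul_left).symm
      _ = ∑' s, ENNReal.ofReal (((1 - γ) * ∑' t, γ^t * d t s) * |R s - R' s|) := by
          refine tsum_congr (fun s => ?_)
          rw [ENNReal.ofReal_mul (mul_nonneg hγ'.le (hκ0 s)), ENNReal.ofReal_mul hγ'.le, hKreal s]
          simp only [hδe]
          rw [mul_assoc]
      _ = ENNReal.ofReal (∑' s, ((1 - γ) * ∑' t, γ^t * d t s) * |R s - R' s|) :=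
          (ENNReal.ofReal_tsum_of_nonneg hf0r hfs).symm
      _ ≤ ENNReal.ofReal εr := ENNReal.ofReal_le_ofReal hεr
  have hXp : ENNReal.ofReal (1-γ) * (∑' s, K s * Ge s) ≤ ENNReal.ofReal εp := by
    have hfs : Summable (fun s => ((1 - γ) * ∑' t, γ^t * d t s) * ∑' s', |P s s' - Q s s'|) :=
      Summable.of_nonneg_of_le hf0p
        (fun s => mul_le_mul_of_nonneg_left (hgsum2 s) (mul_nonneg hγ'.le (hκ0 s)))
        ((hκsum.mul_left (1-γ)).mul_right 2)
    calc ENNReal.ofReal (1-γ) * (∑' s, K s * Ge s)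
        = ∑' s, ENNReal.ofReal (1-γ) * (K s * Ge s) := (ENNReal.tsum_mul_left).symm
      _ = ∑' s, ENNReal.ofReal (((1 - γ) * ∑' t, γ^t * d t s) * ∑' s', |P s s' - Q s s'|) := by
          refine tsum_congr (fun s => ?_)
          have hGeq : ENNReal.ofReal (∑' s', |P s s' - Q s s'|) = Ge s := by
            simp only [hGe]
            exact ENNReal.ofReal_tsum_of_nonneg (fun _ => abs_nonneg _) (habsPQ s)
          rw [ENNReal.ofReal_mul (mul_nonneg hγ'.le (hκ0 s)), ENNReal.ofReal_mul hγ'.le,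
            hKreal s, hGeq, mul_assoc]
      _ = ENNReal.ofReal (∑' s, ((1 - γ) * ∑' t, γ^t * d t s) * ∑' s', |P s s' - Q s s'|) :=
          (ENNReal.ofReal_tsum_of_nonneg hf0p hfs).symm
      _ ≤ ENNReal.ofReal εp := ENNReal.ofReal_le_ofReal hεp
  -- final assembly
  have hL0 : ∀ s, 0 ≤ d 0 s * |v s - v' s| := fun s => mul_nonneg (hd00 s) (hΔ0 s)
  have hLsum : Summable (fun s => d 0 s * |v s - v' s|) :=
    Summable.of_nonneg_of_le hL0
      (fun s => mul_le_mul_of_nonneg_left (hΔV s) (hd00 s)) (hd01.summable.mul_right Vmax)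
  have hW0 : ENNReal.ofReal (∑' s, d 0 s * |v s - v' s|) = ∑' s, D 0 s * Δe s := by
    rw [ENNReal.ofReal_tsum_of_nonneg hL0 hLsum]
    simp only [hD, hΔe]
    exact tsum_congr (fun s => ENNReal.ofReal_mul (hd00 s))
  have hV2 : (0:ℝ) ≤ Vmax/2 := by linarith
  have hmain : ENNReal.ofReal ((1-γ) * ∑' s, d 0 s * |v s - v' s|)
      ≤ ENNReal.ofReal (εr + γ * (Vmax/2) * εp) := by
    rw [ENNReal.ofReal_mul hγ'.le, hW0]
    calc ENNReal.ofReal (1-γ) * (∑' s, D 0 s * Δe s)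
        ≤ ENNReal.ofReal (1-γ) * S := mul_le_mul_right hW0S _
      _ = (ENNReal.ofReal (1-γ) * (∑' s, K s * δe s))
          + γe * (Ce * (ENNReal.ofReal (1-γ) * ∑' s, K s * Ge s)) := by rw [hSsplit]; ring
      _ ≤ ENNReal.ofReal εr + γe * (Ce * ENNReal.ofReal εp) :=
          add_le_add hXr (mul_le_mul_right (mul_le_mul_right hXp _) _)
      _ = ENNReal.ofReal (εr + γ * (Vmax/2) * εp) := by
          rw [show εr + γ * (Vmax/2) * εp = εr + γ * ((Vmax/2) * εp) from by ring,
            ENNReal.ofReal_add hεr0 (mul_nonneg hγ0 (mul_nonneg hV2 hεp0)),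
            ENNReal.ofReal_mul hγ0, ENNReal.ofReal_mul hV2]
  exact (ENNReal.ofReal_le_ofReal_iff
    (add_nonneg hεr0 (mul_nonneg (mul_nonneg hγ0 hV2) hεp0))).mp hmain
/-- Simulation lemma for countably infinite state spaces: if the MRPs induced by a
policy `π` in two MDPs `M` (rewards `r`, transitions `p`, value `v`) and `M̂`
(rewards `r'`, transitions `p'`, value `v'`) have rewards and transitions close in
the norm weighted by the normalized successor representation of `M̂` under `π`
(started from `d₀`), then the values are close under `d₀`. -/
theorem stmt5 {𝒜 : Type*} [Fintype 𝒜]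
    (γ Rmax Vmax : ℝ) (hγ0 : 0 ≤ γ) (hγ1 : γ < 1) (hR : 0 ≤ Rmax)
    (hV : Vmax = Rmax / (1 - γ))
    (r r' : ℕ → 𝒜 → ℝ)
    (hr : ∀ s a, r s a ∈ Set.Icc (0:ℝ) Rmax) (hr' : ∀ s a, r' s a ∈ Set.Icc (0:ℝ) Rmax)
    (p p' : ℕ → 𝒜 → ℕ → ℝ)
    (hp0 : ∀ s a s', 0 ≤ p s a s') (hp1 : ∀ s a, HasSum (p s a) 1)
    (hp'0 : ∀ s a s', 0 ≤ p' s a s') (hp'1 : ∀ s a, HasSum (p' s a) 1)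
    (π : ℕ → 𝒜 → ℝ) (hπ0 : ∀ s a, 0 ≤ π s a) (hπ1 : ∀ s, ∑ a, π s a = 1)
    (d₀ : ℕ → ℝ) (hd₀0 : ∀ i, 0 ≤ d₀ i) (hd₀1 : HasSum d₀ 1)
    -- state distributions of `π` in `M̂` started from `d₀`
    (d : ℕ → ℕ → ℝ) (hd0 : d 0 = d₀)
    (hdrec : ∀ t j, d (t+1) j = ∑' i, d t i * ∑ a, π i a * p' i a j)
    -- value vectors of the induced MRPs in `M` and `M̂`
    (v v' : ℕ → ℝ)
    (hv : ∀ s, v s ∈ Set.Icc (0:ℝ) Vmax) (hv' : ∀ s, v' s ∈ Set.Icc (0:ℝ) Vmax)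
    (hbell : ∀ s, v s = (∑ a, π s a * r s a) + γ * ∑' s', (∑ a, π s a * p s a s') * v s')
    (hbell' : ∀ s, v' s = (∑ a, π s a * r' s a) + γ * ∑' s', (∑ a, π s a * p' s a s') * v' s')
    (εr εp : ℝ)
    (hεr : (∑' s, ((1 - γ) * ∑' t, γ^t * d t s) *
        |(∑ a, π s a * r s a) - (∑ a, π s a * r' s a)|) ≤ εr)
    (hεp : (∑' s, ((1 - γ) * ∑' t, γ^t * d t s) *
        ∑' s', |(∑ a, π s a * p s a s') - (∑ a, π s a * p' s a s')|) ≤ εp) :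
    (∑' s, d₀ s * |v s - v' s|) ≤ (1 / (1 - γ)) * (εr + (γ/2) * Vmax * εp) := by
  have hγ' : (0:ℝ) < 1 - γ := by linarith
  have hV0 : 0 ≤ Vmax := hV ▸ div_nonneg hR hγ'.le
  have hP1 : ∀ s, HasSum (fun s' => ∑ a, π s a * p s a s') 1 := by
    intro s
    have h := hasSum_sum (s := (Finset.univ : Finset 𝒜))
      (f := fun a s' => π s a * p s a s') (a := fun a => π s a * 1)
      (fun a _ => (hp1 s a).mul_left (π s a))
    simpa [hπ1 s] using h
  have hQ1 : ∀ s, HasSum (fun s' => ∑ a, π s a * p' s a s') 1 := by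
    intro s
    have h := hasSum_sum (s := (Finset.univ : Finset 𝒜))
      (f := fun a s' => π s a * p' s a s') (a := fun a => π s a * 1)
      (fun a _ => (hp'1 s a).mul_left (π s a))
    simpa [hπ1 s] using h
  have hP0 : ∀ s s', 0 ≤ ∑ a, π s a * p s a s' := fun s s' =>
    Finset.sum_nonneg (fun a _ => mul_nonneg (hπ0 s a) (hp0 s a s'))
  have hQ0 : ∀ s s', 0 ≤ ∑ a, π s a * p' s a s' := fun s s' =>
    Finset.sum_nonneg (fun a _ => mul_nonneg (hπ0 s a) (hp'0 s a s'))
  have hRrange : ∀ (w : ℕ → 𝒜 → ℝ), (∀ s a, w s a ∈ Set.Icc (0:ℝ) Rmax) →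
      ∀ s, (∑ a, π s a * w s a) ∈ Set.Icc (0:ℝ) Rmax := by
    intro w hw s
    constructor
    · exact Finset.sum_nonneg (fun a _ => mul_nonneg (hπ0 s a) (hw s a).1)
    · calc (∑ a, π s a * w s a) ≤ ∑ a, π s a * Rmax :=
          Finset.sum_le_sum (fun a _ => mul_le_mul_of_nonneg_left (hw s a).2 (hπ0 s a))
        _ = Rmax := by rw [← Finset.sum_mul, hπ1 s, one_mul]
  have hRbd : ∀ s, |(∑ a, π s a * r s a) - (∑ a, π s a * r' s a)| ≤ Rmax := by
    intro s
    have h1 := hRrange r hr s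
    have h2 := hRrange r' hr' s
    rw [abs_sub_le_iff]
    constructor
    · linarith [h1.2, h2.1]
    · linarith [h2.2, h1.1]
  have hd00 : ∀ i, 0 ≤ d 0 i := hd0 ▸ hd₀0
  have hd01 : HasSum (d 0) 1 := hd0 ▸ hd₀1
  have key := myaux γ Vmax Rmax hγ0 hγ1 hV0
    (fun s => ∑ a, π s a * r s a) (fun s => ∑ a, π s a * r' s a) hRbd
    (fun s s' => ∑ a, π s a * p s a s') (fun s s' => ∑ a, π s a * p' s a s')
    hP0 hP1 hQ0 hQ1 d hd00 hd01 hdrec v v' hv hv' hbell hbell' εr εp hεr hεp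
  rw [hd0] at key
  rw [show (1/(1-γ)) * (εr + (γ/2) * Vmax * εp) = (εr + γ * (Vmax/2) * εp) / (1-γ) from by ring,
    le_div_iff₀ hγ', mul_comm]
  exact key
end

section
/- Value loss of learning in finite steps: let M be an MDP on ℕ with finite action set 𝒜, discount γ ∈ [0,1), rewards in [0, Rmax], and Vmax = Rmax/(1−γ). Let π and π̂ be two policies and let ℕ be partitioned into sets S_obs and S_unk such that ∑_{a∈𝒜} |π̂(a|s) − π(a|s)| ≤ ε for every s ∈ S_obs. Let d₀ be a start probability vector and let d be the normalized successor representation (started from d₀) of the MRP induced by either π or π̂. Then J(π, d₀) − J(π̂, d₀) ≤ (1/(1−γ)) ( d(S_obs) · ε · (Rmax + (γ/2) Vmax) + d(S_unk) · Vmax ), where d(S) := ∑_{i∈S} d(i) and J(ρ, d₀) := ∑_i d₀(i) v^ρ(i) with v^ρ the value vector of the MRP induced by ρ. -/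
open Filter

lemma summable_mul_bdd {f w : ℕ → ℝ} (hf : Summable f) {C : ℝ} (hw : ∀ i, |w i| ≤ C) :
    Summable fun i => f i * w i := by
  refine Summable.of_abs (Summable.of_nonneg_of_le (fun i => abs_nonneg _) (fun i => ?_)
    (hf.abs.mul_right C))
  rw [abs_mul]
  exact mul_le_mul_of_nonneg_left (hw i) (abs_nonneg _)

lemma abs_tsum_le' {f : ℕ → ℝ} (hf : Summable f) : |∑' i, f i| ≤ ∑' i, |f i| := by
  simpa [Real.norm_eq_abs] using
    norm_tsum_le_tsum_norm (f := f) (by simpa [Real.norm_eq_abs] using hf.abs)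

/-- The shift trick: if `P` and `Q` are probability vectors and `0 ≤ w ≤ V`, then
`∑ (P - Q) w ≤ (∑ |P - Q|) ⬝ V/2 ≤ e ⬝ V/2`. -/
lemma shift_bound {P Q w : ℕ → ℝ} {V e : ℝ}
    (hP : HasSum P 1) (hQ : HasSum Q 1)
    (hw0 : ∀ j, 0 ≤ w j) (hwV : ∀ j, w j ≤ V)
    (habs : ∑' j, |P j - Q j| ≤ e) :
    ∑' j, (P j - Q j) * w j ≤ e * (V / 2) := by
  set D : ℕ → ℝ := fun j => P j - Q j with hD
  have hDsum : HasSum D 0 := by simpa using hP.sub hQ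
  have hDs : Summable D := hDsum.summable
  have hV0 : 0 ≤ V := le_trans (hw0 0) (hwV 0)
  have hwb : ∀ j, |w j - V / 2| ≤ V / 2 :=
    fun j => abs_le.2 ⟨by linarith [hw0 j], by linarith [hwV j]⟩
  have h1 : Summable fun j => D j * (w j - V / 2) := summable_mul_bdd hDs hwb
  have h2 : Summable fun j => D j * (V / 2) := hDs.mul_right _
  calc ∑' j, D j * w j
      = ∑' j, (D j * (w j - V / 2) + D j * (V / 2)) := by
        apply tsum_congr; intro j; ring
    _ = (∑' j, D j * (w j - V / 2)) + ∑' j, D j * (V / 2) := Summable.tsum_add h1 h2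
    _ = (∑' j, D j * (w j - V / 2)) + 0 := by rw [tsum_mul_right, hDsum.tsum_eq, zero_mul]
    _ ≤ (∑' j, |D j| * (V / 2)) + 0 := by
        refine add_le_add_left (Summable.tsum_le_tsum (fun j => ?_) h1 (hDs.abs.mul_right _)) 0
        refine le_trans (le_abs_self _) ?_
        rw [abs_mul]
        exact mul_le_mul_of_nonneg_left (hwb j) (abs_nonneg _)
    _ = (∑' j, |D j|) * (V / 2) := by rw [tsum_mul_right, add_zero]
    _ ≤ e * (V / 2) := mul_le_mul_of_nonneg_right habs (by linarith)

/-- Value loss of learning in finite steps: if the learned policy `πhat` is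
`ε`-close to `π` on observed states `Sobs`, then the performance gap
`J(π,d₀) - J(πhat,d₀)` is bounded in terms of the successor-representation mass of
`Sobs` and its complement, where the successor representation is the one of the MRP
induced by either `π` or `πhat` (policy `ρ`). -/
theorem stmt7 {𝒜 : Type*} [Fintype 𝒜]
    (γ Rmax Vmax : ℝ) (hγ0 : 0 ≤ γ) (hγ1 : γ < 1) (hR : 0 ≤ Rmax)
    (hV : Vmax = Rmax / (1 - γ))
    (r : ℕ → 𝒜 → ℝ) (hr : ∀ s a, r s a ∈ Set.Icc (0:ℝ) Rmax)
    (p : ℕ → 𝒜 → ℕ → ℝ)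
    (hp0 : ∀ s a s', 0 ≤ p s a s') (hp1 : ∀ s a, HasSum (p s a) 1)
    (π πhat : ℕ → 𝒜 → ℝ)
    (hπ0 : ∀ s a, 0 ≤ π s a) (hπ1 : ∀ s, ∑ a, π s a = 1)
    (hπ'0 : ∀ s a, 0 ≤ πhat s a) (hπ'1 : ∀ s, ∑ a, πhat s a = 1)
    (Sobs : Set ℕ) (ε : ℝ)
    (hclose : ∀ s ∈ Sobs, (∑ a, |πhat s a - π s a|) ≤ ε)
    (d₀ : ℕ → ℝ) (hd₀0 : ∀ i, 0 ≤ d₀ i) (hd₀1 : HasSum d₀ 1)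
    (vπ vhat : ℕ → ℝ)
    (hvπb : ∀ s, vπ s ∈ Set.Icc (0:ℝ) Vmax) (hvhb : ∀ s, vhat s ∈ Set.Icc (0:ℝ) Vmax)
    (hbellπ : ∀ s, vπ s = (∑ a, π s a * r s a)
      + γ * ∑' s', (∑ a, π s a * p s a s') * vπ s')
    (hbellh : ∀ s, vhat s = (∑ a, πhat s a * r s a)
      + γ * ∑' s', (∑ a, πhat s a * p s a s') * vhat s')
    -- the successor representation of the MRP induced by either `π` or `πhat`
    (ρ : ℕ → 𝒜 → ℝ) (hρ : ρ = π ∨ ρ = πhat)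
    (d : ℕ → ℕ → ℝ) (hd0 : d 0 = d₀)
    (hdrec : ∀ t j, d (t+1) j = ∑' i, d t i * ∑ a, ρ i a * p i a j) :
    (∑' i, d₀ i * vπ i) - (∑' i, d₀ i * vhat i)
      ≤ (1 / (1 - γ)) *
        ((∑' i : Sobs, (1 - γ) * ∑' t, γ^t * d t (i : ℕ)) * ε * (Rmax + (γ/2) * Vmax)
          + (∑' i : ↥Sobsᶜ, (1 - γ) * ∑' t, γ^t * d t (i : ℕ)) * Vmax) := by
  classical
  have hne : (1:ℝ) - γ ≠ 0 := by intro h; linarith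
  have h1γ : (0:ℝ) < 1 - γ := by linarith
  -- kernels
  set Pπ : ℕ → ℕ → ℝ := fun s s' => ∑ a, π s a * p s a s' with hPπdef
  set Ph : ℕ → ℕ → ℝ := fun s s' => ∑ a, πhat s a * p s a s' with hPhdef
  set Pρ : ℕ → ℕ → ℝ := fun s s' => ∑ a, ρ s a * p s a s' with hPρdef
  have hρ0 : ∀ s a, 0 ≤ ρ s a := by rcases hρ with h | h <;> (subst h; assumption)
  have hρ1 : ∀ s, ∑ a, ρ s a = 1 := by rcases hρ with h | h <;> (subst h; assumption)
  have hmix : ∀ (σ : ℕ → 𝒜 → ℝ), (∀ s, ∑ a, σ s a = 1) → ∀ s,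
      HasSum (fun s' => ∑ a, σ s a * p s a s') 1 := by
    intro σ hσ1 s
    have := hasSum_sum (s := Finset.univ) (f := fun a s' => σ s a * p s a s')
      (a := fun a => σ s a * 1) (fun a _ => (hp1 s a).mul_left (σ s a))
    simpa [hσ1 s] using this
  have hPπ1 : ∀ s, HasSum (Pπ s) 1 := hmix π hπ1
  have hPh1 : ∀ s, HasSum (Ph s) 1 := hmix πhat hπ'1
  have hPρ1 : ∀ s, HasSum (Pρ s) 1 := hmix ρ hρ1
  have hPπ0 : ∀ s s', 0 ≤ Pπ s s' :=
    fun s s' => Finset.sum_nonneg fun a _ => mul_nonneg (hπ0 s a) (hp0 s a s')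
  have hPh0 : ∀ s s', 0 ≤ Ph s s' :=
    fun s s' => Finset.sum_nonneg fun a _ => mul_nonneg (hπ'0 s a) (hp0 s a s')
  have hPρ0 : ∀ s s', 0 ≤ Pρ s s' :=
    fun s s' => Finset.sum_nonneg fun a _ => mul_nonneg (hρ0 s a) (hp0 s a s')
  -- value bounds
  have hV0 : 0 ≤ Vmax := le_trans (hvπb 0).1 (hvπb 0).2
  have hbπ : ∀ j, |vπ j| ≤ Vmax := fun j => abs_le.2 ⟨by linarith [(hvπb j).1], (hvπb j).2⟩
  have hbh : ∀ j, |vhat j| ≤ Vmax := fun j => abs_le.2 ⟨by linarith [(hvhb j).1], (hvhb j).2⟩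
  set Δf : ℕ → ℝ := fun s => vπ s - vhat s with hΔdef
  have hΔb : ∀ j, |Δf j| ≤ Vmax := fun j =>
    abs_le.2 ⟨by simp only [hΔdef]; linarith [(hvπb j).1, (hvhb j).2],
      by simp only [hΔdef]; linarith [(hvπb j).2, (hvhb j).1]⟩
  have hVR : Rmax + γ * Vmax = Vmax := by
    rw [hV]; field_simp; ring
  set g : ℕ → ℝ := fun s => Δf s - γ * ∑' j, Pρ s j * Δf j with hgdef
  -- tsum over kernel rows of Δ is bounded
  have hΔts : ∀ s, |∑' j, Pρ s j * Δf j| ≤ Vmax := by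
    intro s
    have hsum : Summable fun j => Pρ s j * Δf j := summable_mul_bdd (hPρ1 s).summable hΔb
    refine le_trans (abs_tsum_le' hsum) ?_
    have : ∑' j, |Pρ s j * Δf j| ≤ ∑' j, Pρ s j * Vmax := by
      refine Summable.tsum_le_tsum (fun j => ?_) hsum.abs ((hPρ1 s).summable.mul_right _)
      rw [abs_mul, abs_of_nonneg (hPρ0 s j)]
      exact mul_le_mul_of_nonneg_left (hΔb j) (hPρ0 s j)
    rwa [tsum_mul_right, (hPρ1 s).tsum_eq, one_mul] at this
  have hgb : ∀ s, |g s| ≤ Vmax + γ * Vmax := by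
    intro s
    have h1 := hΔb s
    have h2 := hΔts s
    have h3 : |γ * ∑' j, Pρ s j * Δf j| ≤ γ * Vmax := by
      rw [abs_mul, abs_of_nonneg hγ0]
      exact mul_le_mul_of_nonneg_left h2 hγ0
    calc |g s| ≤ |Δf s| + |γ * ∑' j, Pρ s j * Δf j| := abs_sub _ _
      _ ≤ Vmax + γ * Vmax := add_le_add h1 h3
  -- g in natural form
  obtain ⟨w, hw0, hwV, hwkey⟩ : ∃ w : ℕ → ℝ, (∀ j, 0 ≤ w j) ∧ (∀ j, w j ≤ Vmax) ∧ ∀ s,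
      g s = (∑ a, (π s a - πhat s a) * r s a) + γ * ∑' j, (Pπ s j - Ph s j) * w j := by
    have hsπvπ : ∀ s, Summable fun j => Pπ s j * vπ j :=
      fun s => summable_mul_bdd (hPπ1 s).summable hbπ
    have hsπvh : ∀ s, Summable fun j => Pπ s j * vhat j :=
      fun s => summable_mul_bdd (hPπ1 s).summable hbh
    have hshvπ : ∀ s, Summable fun j => Ph s j * vπ j :=
      fun s => summable_mul_bdd (hPh1 s).summable hbπ
    have hshvh : ∀ s, Summable fun j => Ph s j * vhat j :=
      fun s => summable_mul_bdd (hPh1 s).summable hbh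
    have hrdiff : ∀ s, (∑ a, (π s a - πhat s a) * r s a)
        = (∑ a, π s a * r s a) - (∑ a, πhat s a * r s a) := by
      intro s; rw [← Finset.sum_sub_distrib]; exact Finset.sum_congr rfl fun a _ => by ring
    rcases hρ with h | h
    · refine ⟨vhat, fun j => (hvhb j).1, fun j => (hvhb j).2, fun s => ?_⟩
      have hPρπ : Pρ = Pπ := by rw [hPρdef, hPπdef, h]
      have e1 : ∑' j, Pρ s j * Δf j = (∑' j, Pπ s j * vπ j) - ∑' j, Pπ s j * vhat j := by
        rw [hPρπ, ← Summable.tsum_sub (hsπvπ s) (hsπvh s)]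
        exact tsum_congr fun j => by simp only [hΔdef]; ring
      have e2 : ∑' j, (Pπ s j - Ph s j) * vhat j
          = (∑' j, Pπ s j * vhat j) - ∑' j, Ph s j * vhat j := by
        rw [← Summable.tsum_sub (hsπvh s) (hshvh s)]
        exact tsum_congr fun j => by ring
      simp only [hgdef, hΔdef]
      rw [e1, e2, hrdiff s, hbellπ s, hbellh s]
      ring
    · refine ⟨vπ, fun j => (hvπb j).1, fun j => (hvπb j).2, fun s => ?_⟩
      have hPρh : Pρ = Ph := by rw [hPρdef, hPhdef, h]
      have e1 : ∑' j, Pρ s j * Δf j = (∑' j, Ph s j * vπ j) - ∑' j, Ph s j * vhat j := by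
        rw [hPρh, ← Summable.tsum_sub (hshvπ s) (hshvh s)]
        exact tsum_congr fun j => by simp only [hΔdef]; ring
      have e2 : ∑' j, (Pπ s j - Ph s j) * vπ j
          = (∑' j, Pπ s j * vπ j) - ∑' j, Ph s j * vπ j := by
        rw [← Summable.tsum_sub (hsπvπ s) (hshvπ s)]
        exact tsum_congr fun j => by ring
      simp only [hgdef, hΔdef]
      rw [e1, e2, hrdiff s, hbellπ s, hbellh s]
      ring
  have hwb : ∀ j, |w j| ≤ Vmax := fun j => abs_le.2 ⟨by linarith [hw0 j], hwV j⟩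
  -- the per-state bound
  set A : ℝ := ε * (Rmax + γ / 2 * Vmax) with hAdef
  set c : ℕ → ℝ := fun i => if i ∈ Sobs then A else Vmax with hcdef
  have hcb : ∀ i, |c i| ≤ |A| + Vmax := by
    intro i
    by_cases h : i ∈ Sobs
    · simp only [hcdef, if_pos h]; linarith [le_abs_self A, neg_abs_le A, abs_le.1 (le_refl |A|)]
    · simp only [hcdef, if_neg h]; rw [abs_of_nonneg hV0]; linarith [abs_nonneg A]
  have hgc : ∀ s, g s ≤ c s := by
    intro s
    rw [hwkey s]
    by_cases hs : s ∈ Sobs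
    · simp only [hcdef, if_pos hs]
      have h1 : ∑ a, (π s a - πhat s a) * r s a ≤ ε * Rmax := by
        calc ∑ a, (π s a - πhat s a) * r s a
            ≤ ∑ a, |πhat s a - π s a| * Rmax := by
              refine Finset.sum_le_sum fun a _ => ?_
              calc (π s a - πhat s a) * r s a
                  ≤ |πhat s a - π s a| * r s a := by
                    refine mul_le_mul_of_nonneg_right ?_ (hr s a).1
                    rw [abs_sub_comm]; exact le_abs_self _
                _ ≤ |πhat s a - π s a| * Rmax :=
                    mul_le_mul_of_nonneg_left (hr s a).2 (abs_nonneg _)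
          _ = (∑ a, |πhat s a - π s a|) * Rmax := by rw [Finset.sum_mul]
          _ ≤ ε * Rmax := mul_le_mul_of_nonneg_right (hclose s hs) hR
      have habs : ∑' j, |Pπ s j - Ph s j| ≤ ε := by
        have hptw : ∀ j, |Pπ s j - Ph s j| ≤ ∑ a, |πhat s a - π s a| * p s a j := by
          intro j
          have hrepr : Pπ s j - Ph s j = ∑ a, (π s a - πhat s a) * p s a j := by
            rw [hPπdef, hPhdef, ← Finset.sum_sub_distrib]
            exact Finset.sum_congr rfl fun a _ => by ring
          rw [hrepr]
          refine le_trans (Finset.abs_sum_le_sum_abs _ _) ?_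
          refine Finset.sum_le_sum fun a _ => ?_
          rw [abs_mul, abs_of_nonneg (hp0 s a j), abs_sub_comm]
        have hsum2 : HasSum (fun j => ∑ a, |πhat s a - π s a| * p s a j)
            (∑ a, |πhat s a - π s a|) := by
          have := hasSum_sum (s := Finset.univ) (f := fun a j => |πhat s a - π s a| * p s a j)
            (a := fun a => |πhat s a - π s a| * 1)
            (fun a _ => (hp1 s a).mul_left _)
          simpa using this
        calc ∑' j, |Pπ s j - Ph s j|
            ≤ ∑' j, ∑ a, |πhat s a - π s a| * p s a j :=
              Summable.tsum_le_tsum hptw (((hPπ1 s).summable.sub (hPh1 s).summable).abs) hsum2.summable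
          _ = ∑ a, |πhat s a - π s a| := hsum2.tsum_eq
          _ ≤ ε := hclose s hs
      have h2 : ∑' j, (Pπ s j - Ph s j) * w j ≤ ε * (Vmax / 2) :=
        shift_bound (hPπ1 s) (hPh1 s) hw0 hwV habs
      calc (∑ a, (π s a - πhat s a) * r s a) + γ * ∑' j, (Pπ s j - Ph s j) * w j
          ≤ ε * Rmax + γ * (ε * (Vmax / 2)) :=
            add_le_add h1 (mul_le_mul_of_nonneg_left h2 hγ0)
        _ = A := by rw [hAdef]; ring
    · simp only [hcdef, if_neg hs]
      have h1 : ∑ a, (π s a - πhat s a) * r s a ≤ Rmax := by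
        have e1 : ∑ a, π s a * r s a ≤ Rmax := by
          calc ∑ a, π s a * r s a ≤ ∑ a, π s a * Rmax :=
                Finset.sum_le_sum fun a _ => mul_le_mul_of_nonneg_left (hr s a).2 (hπ0 s a)
            _ = Rmax := by rw [← Finset.sum_mul, hπ1 s, one_mul]
        have e2 : (0:ℝ) ≤ ∑ a, πhat s a * r s a :=
          Finset.sum_nonneg fun a _ => mul_nonneg (hπ'0 s a) (hr s a).1
        have e3 : ∑ a, (π s a - πhat s a) * r s a
            = (∑ a, π s a * r s a) - ∑ a, πhat s a * r s a := by
          rw [← Finset.sum_sub_distrib]; exact Finset.sum_congr rfl fun a _ => by ring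
        linarith
      have h2 : ∑' j, (Pπ s j - Ph s j) * w j ≤ Vmax := by
        have e1 : ∑' j, (Pπ s j - Ph s j) * w j
            = (∑' j, Pπ s j * w j) - ∑' j, Ph s j * w j := by
          rw [← Summable.tsum_sub (summable_mul_bdd (hPπ1 s).summable hwb)
            (summable_mul_bdd (hPh1 s).summable hwb)]
          exact tsum_congr fun j => by ring
        have e2 : ∑' j, Pπ s j * w j ≤ Vmax := by
          have : ∑' j, Pπ s j * w j ≤ ∑' j, Pπ s j * Vmax :=
            Summable.tsum_le_tsum (fun j => mul_le_mul_of_nonneg_left (hwV j) (hPπ0 s j))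
              (summable_mul_bdd (hPπ1 s).summable hwb) ((hPπ1 s).summable.mul_right _)
          rwa [tsum_mul_right, (hPπ1 s).tsum_eq, one_mul] at this
        have e3 : (0:ℝ) ≤ ∑' j, Ph s j * w j :=
          tsum_nonneg fun j => mul_nonneg (hPh0 s j) (hw0 j)
        linarith
      calc (∑ a, (π s a - πhat s a) * r s a) + γ * ∑' j, (Pπ s j - Ph s j) * w j
          ≤ Rmax + γ * Vmax := add_le_add h1 (mul_le_mul_of_nonneg_left h2 hγ0)
        _ = Vmax := hVR
  -- properties of d
  have hdfact : ∀ t, (∀ i, 0 ≤ d t i) ∧ HasSum (d t) 1 := by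
    intro t
    induction t with
    | zero => rw [hd0]; exact ⟨hd₀0, hd₀1⟩
    | succ t ih =>
      obtain ⟨h0, h1⟩ := ih
      have hrow : ∀ i, HasSum (fun j => d t i * Pρ i j) (d t i) := by
        intro i; simpa using (hPρ1 i).mul_left (d t i)
      have hFnn : ∀ q : ℕ × ℕ, 0 ≤ (fun q : ℕ × ℕ => d t q.1 * Pρ q.1 q.2) q :=
        fun q => mul_nonneg (h0 _) (hPρ0 _ _)
      have hF : Summable (fun q : ℕ × ℕ => d t q.1 * Pρ q.1 q.2) := by
        rw [summable_prod_of_nonneg hFnn]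
        refine ⟨fun i => (hrow i).summable, ?_⟩
        exact h1.summable.congr fun i => ((hrow i).tsum_eq).symm
      have hGnn : ∀ q : ℕ × ℕ, 0 ≤ (fun q : ℕ × ℕ => d t q.2 * Pρ q.2 q.1) q :=
        fun q => mul_nonneg (h0 _) (hPρ0 _ _)
      obtain ⟨hcol, hcolsum⟩ := (summable_prod_of_nonneg hGnn).mp hF.prod_symm
      have hds : Summable (d (t+1)) := by
        refine hcolsum.congr fun j => ?_
        rw [hdrec t j]
      refine ⟨fun j => ?_, ?_⟩
      · rw [hdrec t j]; exact tsum_nonneg fun i => mul_nonneg (h0 i) (hPρ0 i j)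
      · rw [hds.hasSum_iff]
        have e1 : ∑' j, d (t+1) j = ∑' j, ∑' i, d t i * Pρ i j :=
          tsum_congr fun j => hdrec t j
        have e2 : ∑' (j : ℕ) (i : ℕ), d t i * Pρ i j = ∑' (i : ℕ) (j : ℕ), d t i * Pρ i j :=
          Summable.tsum_comm' hF (fun i => (hrow i).summable) hcol
        have e3 : ∑' (i : ℕ) (j : ℕ), d t i * Pρ i j = ∑' i, d t i :=
          tsum_congr fun i => (hrow i).tsum_eq
        rw [e1, e2, e3, h1.tsum_eq]
  have hd0' : ∀ t i, 0 ≤ d t i := fun t => (hdfact t).1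
  have hd1' : ∀ t, HasSum (d t) 1 := fun t => (hdfact t).2
  have hdle1 : ∀ t i, d t i ≤ 1 :=
    fun t i => le_hasSum (hd1' t) i fun j _ => hd0' t j
  -- step identity: E t = G t + γ E (t+1)
  have hstep : ∀ t, (∑' i, d t i * Δf i)
      = (∑' i, d t i * g i) + γ * ∑' i, d (t+1) i * Δf i := by
    intro t
    have hFnn : ∀ q : ℕ × ℕ, 0 ≤ (fun q : ℕ × ℕ => d t q.1 * Pρ q.1 q.2) q :=
      fun q => mul_nonneg (hd0' t _) (hPρ0 _ _)
    have hrow : ∀ i, HasSum (fun j => d t i * Pρ i j) (d t i) := by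
      intro i; simpa using (hPρ1 i).mul_left (d t i)
    have hF : Summable (fun q : ℕ × ℕ => d t q.1 * Pρ q.1 q.2) := by
      rw [summable_prod_of_nonneg hFnn]
      refine ⟨fun i => (hrow i).summable, ?_⟩
      exact (hd1' t).summable.congr fun i => ((hrow i).tsum_eq).symm
    have hGnn : ∀ q : ℕ × ℕ, 0 ≤ (fun q : ℕ × ℕ => d t q.2 * Pρ q.2 q.1) q :=
      fun q => mul_nonneg (hd0' t _) (hPρ0 _ _)
    obtain ⟨hFcol, _⟩ := (summable_prod_of_nonneg hGnn).mp hF.prod_symm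
    set H : ℕ → ℕ → ℝ := fun i j => d t i * (Pρ i j * Δf j) with hHdef
    have hHunc : Summable (Function.uncurry H) := by
      refine Summable.of_abs (Summable.of_nonneg_of_le (fun q => abs_nonneg _)
        (fun q => ?_) (hF.mul_right Vmax))
      show |H q.1 q.2| ≤ d t q.1 * Pρ q.1 q.2 * Vmax
      rw [hHdef]
      simp only []
      rw [abs_mul, abs_mul, abs_of_nonneg (hd0' t q.1), abs_of_nonneg (hPρ0 q.1 q.2), mul_assoc]
      exact mul_le_mul_of_nonneg_left
        (mul_le_mul_of_nonneg_left (hΔb q.2) (hPρ0 q.1 q.2)) (hd0' t q.1)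
    have hrowHs : ∀ i, Summable (H i) :=
      fun i => (summable_mul_bdd (hPρ1 i).summable hΔb).mul_left (d t i)
    have hcolHs : ∀ j, Summable fun i => H i j := by
      intro j
      refine ((hFcol j).mul_right (Δf j)).congr fun i => ?_
      show (fun q : ℕ × ℕ => d t q.2 * Pρ q.2 q.1) (j, i) * Δf j = H i j
      simp only [hHdef]; ring
    have hrowH : ∀ i, ∑' j, H i j = d t i * ∑' j, Pρ i j * Δf j := fun i => tsum_mul_left
    have hcolH : ∀ j, ∑' i, H i j = d (t+1) j * Δf j := by
      intro j
      have e : ∀ i, H i j = (d t i * Pρ i j) * Δf j := fun i => by simp only [hHdef]; ring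
      rw [tsum_congr e, tsum_mul_right, ← hdrec t j]
    have hsumdΔ : Summable fun i => d t i * Δf i := summable_mul_bdd (hd1' t).summable hΔb
    have hsumdw : Summable fun i => d t i * ∑' j, Pρ i j * Δf j :=
      summable_mul_bdd (hd1' t).summable hΔts
    have e1 : ∑' i, d t i * g i
        = (∑' i, d t i * Δf i) - γ * ∑' i, d t i * ∑' j, Pρ i j * Δf j := by
      have e0 : ∀ i, d t i * g i
          = d t i * Δf i - γ * (d t i * ∑' j, Pρ i j * Δf j) := by
        intro i; simp only [hgdef]; ring
      rw [tsum_congr e0, Summable.tsum_sub hsumdΔ ((hsumdw).mul_left γ |>.congr fun i => rfl)]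
      · rw [tsum_mul_left]
    have e2 : ∑' i, d t i * ∑' j, Pρ i j * Δf j = ∑' j, d (t+1) j * Δf j := by
      have s1 : ∑' i, d t i * ∑' j, Pρ i j * Δf j = ∑' (i : ℕ) (j : ℕ), H i j :=
        tsum_congr fun i => (hrowH i).symm
      have s2 : ∑' (i : ℕ) (j : ℕ), H i j = ∑' (j : ℕ) (i : ℕ), H i j :=
        (Summable.tsum_comm' hHunc hrowHs hcolHs).symm
      have s3 : ∑' (j : ℕ) (i : ℕ), H i j = ∑' j, d (t+1) j * Δf j :=
        tsum_congr fun j => hcolH j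
      rw [s1, s2, s3]
    rw [e1, e2]; ring
  -- unrolled identity
  have hunroll : ∀ N, (∑' i, d 0 i * Δf i)
      = (∑ t ∈ Finset.range N, γ ^ t * ∑' i, d t i * g i)
        + γ ^ N * ∑' i, d N i * Δf i := by
    intro N
    induction N with
    | zero => simp
    | succ N ih =>
      rw [ih, Finset.sum_range_succ, hstep N]
      ring
  -- bounds
  have hEb : ∀ t, (∑' i, d t i * Δf i) ≤ Vmax := by
    intro t
    have h := Summable.tsum_le_tsum (f := fun i => d t i * Δf i) (g := fun i => d t i * Vmax)
      (fun i => mul_le_mul_of_nonneg_left (by linarith [(abs_le.1 (hΔb i)).2]) (hd0' t i))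
      (summable_mul_bdd (hd1' t).summable hΔb) ((hd1' t).summable.mul_right _)
    rwa [tsum_mul_right, (hd1' t).tsum_eq, one_mul] at h
  have hGC : ∀ t, (∑' i, d t i * g i) ≤ ∑' i, d t i * c i := by
    intro t
    exact Summable.tsum_le_tsum (fun i => mul_le_mul_of_nonneg_left (hgc i) (hd0' t i))
      (summable_mul_bdd (hd1' t).summable hgb) (summable_mul_bdd (hd1' t).summable hcb)
  have hCb : ∀ t, |∑' i, d t i * c i| ≤ |A| + Vmax := by
    intro t
    refine le_trans (abs_tsum_le' (summable_mul_bdd (hd1' t).summable hcb)) ?_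
    have h := Summable.tsum_le_tsum (f := fun i => |d t i * c i|) (g := fun i => d t i * (|A| + Vmax))
      (fun i => by
        show |d t i * c i| ≤ d t i * (|A| + Vmax)
        rw [abs_mul, abs_of_nonneg (hd0' t i)]
        exact mul_le_mul_of_nonneg_left (hcb i) (hd0' t i))
      (summable_mul_bdd (hd1' t).summable hcb).abs ((hd1' t).summable.mul_right _)
    rwa [tsum_mul_right, (hd1' t).tsum_eq, one_mul] at h
  have hCs : Summable fun t => γ ^ t * ∑' i, d t i * c i := by
    refine Summable.of_abs (Summable.of_nonneg_of_le (fun t => abs_nonneg _) (fun t => ?_)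
      ((summable_geometric_of_lt_one hγ0 hγ1).mul_right (|A| + Vmax)))
    rw [abs_mul, abs_pow, abs_of_nonneg hγ0]
    exact mul_le_mul_of_nonneg_left (hCb t) (pow_nonneg hγ0 t)
  -- limit bound
  have hE0 : (∑' i, d 0 i * Δf i) ≤ ∑' t, γ ^ t * ∑' i, d t i * c i := by
    refine ge_of_tendsto' (x := atTop)
      (f := fun N => (∑ t ∈ Finset.range N, γ ^ t * ∑' i, d t i * c i) + γ ^ N * Vmax) ?_ ?_
    · have h1 := hCs.hasSum.tendsto_sum_nat
      have h2 := (tendsto_pow_atTop_nhds_zero_of_lt_one hγ0 hγ1).mul_const Vmax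
      simpa using h1.add h2
    · intro N
      rw [hunroll N]
      refine add_le_add ?_ ?_
      · exact Finset.sum_le_sum fun t _ =>
          mul_le_mul_of_nonneg_left (hGC t) (pow_nonneg hγ0 t)
      · exact mul_le_mul_of_nonneg_left (hEb N) (pow_nonneg hγ0 N)
  -- subtype sums
  have hsuble : ∀ (t : ℕ) (S : Set ℕ), (∑' i : S, d t i) ≤ 1 := by
    intro t S
    have h := Summable.tsum_le_tsum_of_inj (f := fun i : S => d t i) (g := d t) (Subtype.val)
      Subtype.val_injective (fun c _ => hd0' t c) (fun i => le_refl _)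
      ((hd1' t).summable.subtype S) (hd1' t).summable
    rwa [(hd1' t).tsum_eq] at h
  have hsubnn : ∀ (t : ℕ) (S : Set ℕ), (0:ℝ) ≤ ∑' i : S, d t i :=
    fun t S => tsum_nonneg fun i => hd0' t i
  have hswap : ∀ S : Set ℕ, (∑' t, γ ^ t * ∑' i : S, d t i) = ∑' i : S, ∑' t, γ ^ t * d t i := by
    intro S
    have hnn : ∀ q : ℕ × S, 0 ≤ (fun q : ℕ × S => γ ^ q.1 * d q.1 q.2) q :=
      fun q => mul_nonneg (pow_nonneg hγ0 _) (hd0' _ _)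
    have hrow : ∀ t : ℕ, Summable fun i : S => γ ^ t * d t i :=
      fun t => ((hd1' t).summable.subtype S).mul_left _
    have hcol : ∀ i : S, Summable fun t => γ ^ t * d t i := by
      intro i
      refine Summable.of_nonneg_of_le (fun t => mul_nonneg (pow_nonneg hγ0 _) (hd0' _ _))
        (fun t => ?_) (summable_geometric_of_lt_one hγ0 hγ1)
      calc γ ^ t * d t i ≤ γ ^ t * 1 :=
            mul_le_mul_of_nonneg_left (hdle1 t i) (pow_nonneg hγ0 t)
        _ = γ ^ t := mul_one _
    have hrowsum : Summable fun t => ∑' i : S, γ ^ t * d t i := by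
      refine Summable.of_nonneg_of_le
        (fun t => tsum_nonneg fun i => mul_nonneg (pow_nonneg hγ0 _) (hd0' _ _))
        (fun t => ?_) (summable_geometric_of_lt_one hγ0 hγ1)
      rw [tsum_mul_left]
      calc γ ^ t * ∑' i : S, d t i ≤ γ ^ t * 1 :=
            mul_le_mul_of_nonneg_left (hsuble t S) (pow_nonneg hγ0 t)
        _ = γ ^ t := mul_one _
    have hF2 : Summable (Function.uncurry fun (t : ℕ) (i : S) => γ ^ t * d t i) :=
      (summable_prod_of_nonneg hnn).mpr ⟨hrow, hrowsum⟩
    have e := Summable.tsum_comm' hF2 hrow hcol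
    exact Eq.trans (tsum_congr fun t => (tsum_mul_left).symm) e.symm
  -- split C t
  have hsplit : ∀ t, (∑' i, d t i * c i)
      = (∑' i : Sobs, d t i) * A + (∑' i : ↥Sobsᶜ, d t i) * Vmax := by
    intro t
    have hsummable : Summable fun i => d t i * c i :=
      summable_mul_bdd (hd1' t).summable hcb
    have h := Summable.tsum_add_tsum_compl (s := Sobs) (hsummable.subtype _) (hsummable.subtype _)
    rw [← h]
    congr 1
    · rw [← tsum_mul_right]
      exact tsum_congr fun i => by rw [hcdef]; simp [i.2]
    · rw [← tsum_mul_right]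
      refine tsum_congr fun i => ?_
      have : (i : ℕ) ∉ Sobs := i.2
      rw [hcdef]; simp [this]
  -- put the RHS together
  have hXs : Summable fun t => γ ^ t * ∑' i : Sobs, d t i := by
    refine Summable.of_nonneg_of_le (fun t => mul_nonneg (pow_nonneg hγ0 _) (hsubnn t _))
      (fun t => ?_) (summable_geometric_of_lt_one hγ0 hγ1)
    calc γ ^ t * ∑' i : Sobs, d t i ≤ γ ^ t * 1 :=
          mul_le_mul_of_nonneg_left (hsuble t _) (pow_nonneg hγ0 t)
      _ = γ ^ t := mul_one _
  have hYs : Summable fun t => γ ^ t * ∑' i : ↥Sobsᶜ, d t i := by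
    refine Summable.of_nonneg_of_le (fun t => mul_nonneg (pow_nonneg hγ0 _) (hsubnn t _))
      (fun t => ?_) (summable_geometric_of_lt_one hγ0 hγ1)
    calc γ ^ t * ∑' i : ↥Sobsᶜ, d t i ≤ γ ^ t * 1 :=
          mul_le_mul_of_nonneg_left (hsuble t _) (pow_nonneg hγ0 t)
      _ = γ ^ t := mul_one _
  have hCval : (∑' t, γ ^ t * ∑' i, d t i * c i)
      = (∑' i : Sobs, ∑' t, γ ^ t * d t i) * A
        + (∑' i : ↥Sobsᶜ, ∑' t, γ ^ t * d t i) * Vmax := by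
    have e0 : ∀ t, γ ^ t * ∑' i, d t i * c i
        = (γ ^ t * ∑' i : Sobs, d t i) * A + (γ ^ t * ∑' i : ↥Sobsᶜ, d t i) * Vmax := by
      intro t; rw [hsplit t]; ring
    rw [tsum_congr e0, Summable.tsum_add (hXs.mul_right A) (hYs.mul_right Vmax),
      tsum_mul_right, tsum_mul_right, hswap Sobs, hswap Sobsᶜ]
  -- LHS equals E 0
  have hLHS : (∑' i, d₀ i * vπ i) - (∑' i, d₀ i * vhat i) = ∑' i, d 0 i * Δf i := by
    rw [hd0]
    rw [← Summable.tsum_sub (summable_mul_bdd hd₀1.summable hbπ) (summable_mul_bdd hd₀1.summable hbh)]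
    exact tsum_congr fun i => by simp only [hΔdef]; ring
  -- final RHS computation
  have hRHS : (1 / (1 - γ)) *
      ((∑' i : Sobs, (1 - γ) * ∑' t, γ^t * d t (i : ℕ)) * ε * (Rmax + (γ/2) * Vmax)
        + (∑' i : ↥Sobsᶜ, (1 - γ) * ∑' t, γ^t * d t (i : ℕ)) * Vmax)
      = (∑' i : Sobs, ∑' t, γ ^ t * d t i) * A
        + (∑' i : ↥Sobsᶜ, ∑' t, γ ^ t * d t i) * Vmax := by
    rw [tsum_mul_left, tsum_mul_left, hAdef]
    field_simp
  rw [hLHS, hRHS]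
  exact le_trans hE0 (le_of_eq hCval)
end

section
/- Operator difference identity: let M be an MDP on ℕ with finite action set 𝒜, discount γ ∈ [0,1), rewards r(s,a) ∈ [0, Rmax]. Fix a policy π, a start probability vector d₀, and a bounded function f : ℕ × 𝒜 → ℝ. Define the Bellman operator (B^π f)(s,a) := r(s,a) + γ ∑_{s'} p(s'|s,a) ∑_{a'} π(a'|s') f(s',a'), the state distributions d_1 := d₀, d_{t+1}(s') := ∑_{s,a} d_t(s) π(a|s) p(s'|s,a), the normalized state-action successor representation d^π(s,a) := (1−γ) ∑_{t=1}^∞ γ^{t−1} d_t(s) π(a|s), and J(π, d₀) := ∑_{t=1}^∞ γ^{t−1} ∑_{s,a} d_t(s) π(a|s) r(s,a). Then ∑_{s,a} d₀(s) π(a|s) f(s,a) − J(π, d₀) = (1/(1−γ)) ∑_{s,a} d^π(s,a) ( f(s,a) − (B^π f)(s,a) ). -/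
private lemma sum_of_abs_le {ι : Type*} {g h : ι → ℝ} (hg : Summable g)
    (hb : ∀ n, |h n| ≤ g n) : Summable h :=
  (Summable.of_nonneg_of_le (fun n => abs_nonneg _) hb hg).of_abs

private lemma smul_bound_summable (μ : ℕ → ℝ) (hμ : Summable μ) (hμ0 : ∀ s, 0 ≤ μ s)
    (v : ℕ → ℝ) (K : ℝ) (hv : ∀ s, |v s| ≤ K) : Summable fun s => μ s * v s :=
  sum_of_abs_le (hμ.mul_right K) (fun s => by
    rw [abs_mul, abs_of_nonneg (hμ0 s)]
    exact mul_le_mul_of_nonneg_left (hv s) (hμ0 s))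

private lemma abs_tsum_mul_bound (μ : ℕ → ℝ) (hμ0 : ∀ s, 0 ≤ μ s) (hμ1 : HasSum μ 1)
    (v : ℕ → ℝ) (K : ℝ) (hv : ∀ s, |v s| ≤ K) : |∑' s, μ s * v s| ≤ K := by
  have hs : Summable fun s => μ s * v s :=
    smul_bound_summable μ hμ1.summable hμ0 v K hv
  have h1 : |∑' s, μ s * v s| ≤ ∑' s, |μ s * v s| := by
    simpa only [Real.norm_eq_abs] using
      norm_tsum_le_tsum_norm (f := fun s => μ s * v s)
        (by simpa only [Real.norm_eq_abs] using hs.abs)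
  refine h1.trans ?_
  have h2 : ∑' s, |μ s * v s| ≤ ∑' s, μ s * K := by
    refine Summable.tsum_le_tsum (fun s => ?_) hs.abs (hμ1.summable.mul_right K)
    rw [abs_mul, abs_of_nonneg (hμ0 s)]
    exact mul_le_mul_of_nonneg_left (hv s) (hμ0 s)
  calc ∑' s, |μ s * v s| ≤ ∑' s, μ s * K := h2
    _ = K := by rw [(hμ1.mul_right K).tsum_eq, one_mul]

private lemma summable_weighted (μ : ℕ → ℝ) (hμ0 : ∀ i, 0 ≤ μ i) (hμ : Summable μ)
    (q : ℕ → ℕ → ℝ) (hq0 : ∀ i j, 0 ≤ q i j) (hq1 : ∀ i, HasSum (q i) 1) :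
    Summable (fun p : ℕ × ℕ => μ p.1 * q p.1 p.2) := by
  refine (summable_prod_of_nonneg fun p => mul_nonneg (hμ0 _) (hq0 _ _)).2
    ⟨fun i => ((hq1 i).mul_left (μ i)).summable, ?_⟩
  exact hμ.congr fun i =>
    (by rw [((hq1 i).mul_left (μ i)).tsum_eq, mul_one] :
      (∑' j, μ i * q i j) = μ i).symm

private lemma summable_weighted' (μ : ℕ → ℝ) (hμ0 : ∀ i, 0 ≤ μ i) (hμ : Summable μ)
    (q : ℕ → ℕ → ℝ) (hq0 : ∀ i j, 0 ≤ q i j) (hq1 : ∀ i, HasSum (q i) 1)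
    (v : ℕ × ℕ → ℝ) (K : ℝ) (hv : ∀ p, |v p| ≤ K) :
    Summable (fun p : ℕ × ℕ => μ p.1 * q p.1 p.2 * v p) := by
  refine sum_of_abs_le ((summable_weighted μ hμ0 hμ q hq0 hq1).mul_right K) (fun p => ?_)
  rw [abs_mul, abs_of_nonneg (mul_nonneg (hμ0 _) (hq0 _ _))]
  exact mul_le_mul_of_nonneg_left (hv p) (mul_nonneg (hμ0 _) (hq0 _ _))

private lemma fubini_weight (μ : ℕ → ℝ) (hμ0 : ∀ i, 0 ≤ μ i) (hμ : Summable μ)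
    (q : ℕ → ℕ → ℝ) (hq0 : ∀ i j, 0 ≤ q i j) (hq1 : ∀ i, HasSum (q i) 1)
    (v : ℕ → ℝ) (K : ℝ) (hv : ∀ j, |v j| ≤ K) :
    ∑' j, ∑' i, μ i * q i j * v j = ∑' i, μ i * ∑' j, q i j * v j := by
  have hs : Summable (Function.uncurry fun i j => μ i * q i j * v j) :=
    summable_weighted' μ hμ0 hμ q hq0 hq1 (fun p => v p.2) K (fun p => hv p.2)
  rw [Summable.tsum_comm hs]
  refine tsum_congr fun i => ?_
  simp only [mul_assoc]
  rw [tsum_mul_left]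

private lemma hasSum_push (μ : ℕ → ℝ) (hμ0 : ∀ i, 0 ≤ μ i) (hμ1 : HasSum μ 1)
    (q : ℕ → ℕ → ℝ) (hq0 : ∀ i j, 0 ≤ q i j) (hq1 : ∀ i, HasSum (q i) 1) :
    HasSum (fun j => ∑' i, μ i * q i j) 1 := by
  have hs := summable_weighted μ hμ0 hμ1.summable q hq0 hq1
  have hmarg : Summable fun j => ∑' i, μ i * q i j := hs.prod_symm.prod
  refine (Summable.hasSum_iff hmarg).2 ?_
  calc ∑' j, ∑' i, μ i * q i j
      = ∑' i, ∑' j, μ i * q i j := Summable.tsum_comm hs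
    _ = ∑' i, μ i := tsum_congr fun i => by
        rw [((hq1 i).mul_left (μ i)).tsum_eq, mul_one]
    _ = 1 := hμ1.tsum_eq

/-- Operator difference identity: for any bounded `f : ℕ × 𝒜 → ℝ`, the gap between
the `f`-value at the start distribution and the discounted return equals
`1/(1-γ)` times the successor-representation-weighted Bellman error of `f`.
Here `d t` denotes the state distribution at time `t+1` (so `d 0 = d₀`). -/
theorem stmt9 {𝒜 : Type*} [Fintype 𝒜]
    (γ Rmax : ℝ) (hγ0 : 0 ≤ γ) (hγ1 : γ < 1) (hR : 0 ≤ Rmax)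
    (r : ℕ → 𝒜 → ℝ) (hr : ∀ s a, r s a ∈ Set.Icc (0:ℝ) Rmax)
    (p : ℕ → 𝒜 → ℕ → ℝ)
    (hp0 : ∀ s a s', 0 ≤ p s a s') (hp1 : ∀ s a, HasSum (p s a) 1)
    (π : ℕ → 𝒜 → ℝ) (hπ0 : ∀ s a, 0 ≤ π s a) (hπ1 : ∀ s, ∑ a, π s a = 1)
    (d₀ : ℕ → ℝ) (hd₀0 : ∀ i, 0 ≤ d₀ i) (hd₀1 : HasSum d₀ 1)
    (d : ℕ → ℕ → ℝ) (hd0 : d 0 = d₀)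
    (hdrec : ∀ t s', d (t+1) s' = ∑' s, d t s * ∑ a, π s a * p s a s')
    (f : ℕ → 𝒜 → ℝ) (C : ℝ) (hf : ∀ s a, |f s a| ≤ C) :
    (∑' s, d₀ s * ∑ a, π s a * f s a)
        - (∑' t, γ^t * ∑' s, d t s * ∑ a, π s a * r s a)
      = (1 / (1 - γ)) * ∑' s, ∑ a, ((1 - γ) * ∑' t, γ^t * (d t s * π s a)) *
          (f s a - (r s a + γ * ∑' s', p s a s' * ∑ a', π s' a' * f s' a')) := by
  classical
  have hA : Nonempty 𝒜 := by
    rcases isEmpty_or_nonempty 𝒜 with h | h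
    · exact absurd (hπ1 0) (by simp)
    · exact h
  have hγne : (1:ℝ) - γ ≠ 0 := by linarith
  have hγpow : Summable (fun t : ℕ => γ ^ t) := summable_geometric_of_lt_one hγ0 hγ1
  have hγpow0 : ∀ t : ℕ, (0:ℝ) ≤ γ ^ t := fun t => pow_nonneg hγ0 t
  have hC : 0 ≤ C := le_trans (abs_nonneg _) (hf 0 (Classical.arbitrary 𝒜))
  -- generic bound for policy mixtures
  have hmix : ∀ (s : ℕ) (v : 𝒜 → ℝ) (K : ℝ), (∀ a, |v a| ≤ K) →
      |∑ a, π s a * v a| ≤ K := by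
    intro s v K hv
    calc |∑ a, π s a * v a| ≤ ∑ a, |π s a * v a| := Finset.abs_sum_le_sum_abs _ _
      _ ≤ ∑ a, π s a * K := Finset.sum_le_sum fun a _ => by
            rw [abs_mul, abs_of_nonneg (hπ0 s a)]
            exact mul_le_mul_of_nonneg_left (hv a) (hπ0 s a)
      _ = K := by rw [← Finset.sum_mul, hπ1, one_mul]
  have hrabs : ∀ s a, |r s a| ≤ Rmax := fun s a => by
    rw [abs_of_nonneg (hr s a).1]; exact (hr s a).2
  have hwbd : ∀ s, |∑ a, π s a * f s a| ≤ C := fun s => hmix s (f s) C (hf s)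
  have hρbd : ∀ s, |∑ a, π s a * r s a| ≤ Rmax := fun s => hmix s (r s) Rmax (hrabs s)
  -- transition kernel q
  have hq0 : ∀ s s', 0 ≤ ∑ a, π s a * p s a s' := fun s s' =>
    Finset.sum_nonneg fun a _ => mul_nonneg (hπ0 s a) (hp0 s a s')
  have hq1 : ∀ s, HasSum (fun s' => ∑ a, π s a * p s a s') 1 := by
    intro s
    have := hasSum_sum (s := (Finset.univ : Finset 𝒜))
      (f := fun a s' => π s a * p s a s') (a := fun a => π s a)
      (fun a _ => by simpa using (hp1 s a).mul_left (π s a))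
    rwa [hπ1 s] at this
  -- state distributions
  have hd : ∀ t, (∀ s, 0 ≤ d t s) ∧ HasSum (d t) 1 := by
    intro t
    induction t with
    | zero => rw [hd0]; exact ⟨hd₀0, hd₀1⟩
    | succ t ih =>
      constructor
      · intro s'
        rw [hdrec]
        exact tsum_nonneg fun s => mul_nonneg (ih.1 s) (hq0 s s')
      · have h := hasSum_push (d t) ih.1 ih.2 (fun s s' => ∑ a, π s a * p s a s') hq0 hq1
        have he : d (t+1) = fun s' => ∑' s, d t s * ∑ a, π s a * p s a s' :=
          funext (hdrec t)
        rw [he]; exact h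
  -- Bellman error e and bounds
  have hQbd : ∀ s a, |∑' s', p s a s' * ∑ a', π s' a' * f s' a'| ≤ C := fun s a =>
    abs_tsum_mul_bound (p s a) (hp0 s a) (hp1 s a) _ C hwbd
  set e : ℕ → 𝒜 → ℝ := fun s a =>
    f s a - (r s a + γ * ∑' s', p s a s' * ∑ a', π s' a' * f s' a') with he_def
  set D : ℝ := C + Rmax + γ * C with hD_def
  have hebd : ∀ s a, |e s a| ≤ D := by
    intro s a
    rw [he_def, hD_def]
    calc |f s a - (r s a + γ * ∑' s', p s a s' * ∑ a', π s' a' * f s' a')|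
        ≤ |f s a| + |r s a + γ * ∑' s', p s a s' * ∑ a', π s' a' * f s' a'| := abs_sub _ _
      _ ≤ |f s a| + (|r s a| + |γ * ∑' s', p s a s' * ∑ a', π s' a' * f s' a'|) := by
          gcongr; exact abs_add_le _ _
      _ ≤ C + (Rmax + γ * C) := by
          gcongr
          · exact hf s a
          · exact hrabs s a
          · rw [abs_mul, abs_of_nonneg hγ0]
            exact mul_le_mul_of_nonneg_left (hQbd s a) hγ0
      _ = C + Rmax + γ * C := by ring
  have he'bd : ∀ s, |∑ a, π s a * e s a| ≤ D := fun s => hmix s (e s) D (hebd s)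
  -- the key per-time identity
  set F : ℕ → ℝ := fun t => ∑' s, d t s * ∑ a, π s a * f s a with hF_def
  set R : ℕ → ℝ := fun t => ∑' s, d t s * ∑ a, π s a * r s a with hR_def
  have hFbd : ∀ t, |F t| ≤ C := fun t =>
    abs_tsum_mul_bound (d t) (hd t).1 (hd t).2 _ C hwbd
  have hRbd : ∀ t, |R t| ≤ Rmax := fun t =>
    abs_tsum_mul_bound (d t) (hd t).1 (hd t).2 _ Rmax hρbd
  have hQ'bd : ∀ s, |∑' s', (∑ a, π s a * p s a s') * ∑ a', π s' a' * f s' a'| ≤ C := fun s =>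
    abs_tsum_mul_bound _ (hq0 s) (hq1 s) _ C hwbd
  have hkey : ∀ t, ∑' s, d t s * ∑ a, π s a * e s a = F t - R t - γ * F (t+1) := by
    intro t
    -- rewrite the policy mixture of Q-values as kernel average
    have hu : ∀ s, ∑ a, π s a * (∑' s', p s a s' * ∑ a', π s' a' * f s' a')
        = ∑' s', (∑ a, π s a * p s a s') * ∑ a', π s' a' * f s' a' := by
      intro s
      have hsum : ∀ a : 𝒜, Summable fun s' => π s a * (p s a s' * ∑ a', π s' a' * f s' a') :=
        fun a => ((smul_bound_summable (p s a) (hp1 s a).summable (hp0 s a) _ C hwbd).mul_left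
          (π s a))
      calc ∑ a, π s a * (∑' s', p s a s' * ∑ a', π s' a' * f s' a')
          = ∑ a, ∑' s', π s a * (p s a s' * ∑ a', π s' a' * f s' a') := by
            refine Finset.sum_congr rfl fun a _ => ?_
            rw [tsum_mul_left]
        _ = ∑' s', ∑ a, π s a * (p s a s' * ∑ a', π s' a' * f s' a') :=
            (Summable.tsum_finsetSum fun a _ => hsum a).symm
        _ = ∑' s', (∑ a, π s a * p s a s') * ∑ a', π s' a' * f s' a' := by
            refine tsum_congr fun s' => ?_
            rw [Finset.sum_mul]
            exact Finset.sum_congr rfl fun a _ => by ring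
    have hsplit : ∀ s, d t s * ∑ a, π s a * e s a
        = d t s * (∑ a, π s a * f s a) - d t s * (∑ a, π s a * r s a)
          - γ * (d t s * ∑' s', (∑ a, π s a * p s a s') * ∑ a', π s' a' * f s' a') := by
      intro s
      rw [← hu]
      have h2 : ∑ a, π s a * e s a
          = (∑ a, π s a * f s a) - (∑ a, π s a * r s a)
            - γ * ∑ a, π s a * (∑' s', p s a s' * ∑ a', π s' a' * f s' a') := by
        rw [he_def, Finset.mul_sum, ← Finset.sum_sub_distrib, ← Finset.sum_sub_distrib]
        exact Finset.sum_congr rfl fun a _ => by ring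
      rw [h2]; ring
    have S1 : Summable fun s => d t s * ∑ a, π s a * f s a :=
      smul_bound_summable (d t) (hd t).2.summable (hd t).1 _ C hwbd
    have S2 : Summable fun s => d t s * ∑ a, π s a * r s a :=
      smul_bound_summable (d t) (hd t).2.summable (hd t).1 _ Rmax hρbd
    have S3 : Summable fun s => d t s * ∑' s', (∑ a, π s a * p s a s') * ∑ a', π s' a' * f s' a' :=
      smul_bound_summable (d t) (hd t).2.summable (hd t).1 _ C hQ'bd
    have hnext : ∑' s, d t s * ∑' s', (∑ a, π s a * p s a s') * ∑ a', π s' a' * f s' a'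
        = F (t+1) := by
      have h1 := fubini_weight (d t) (hd t).1 (hd t).2.summable
        (fun s s' => ∑ a, π s a * p s a s') hq0 hq1
        (fun s' => ∑ a', π s' a' * f s' a') C hwbd
      rw [← h1, hF_def]
      refine tsum_congr fun s' => ?_
      rw [tsum_mul_right, ← hdrec]
    calc ∑' s, d t s * ∑ a, π s a * e s a
        = ∑' s, (d t s * (∑ a, π s a * f s a) - d t s * (∑ a, π s a * r s a)
            - γ * (d t s * ∑' s', (∑ a, π s a * p s a s') * ∑ a', π s' a' * f s' a')) :=
          tsum_congr hsplit
      _ = F t - R t - γ * F (t+1) := by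
          rw [Summable.tsum_sub (S1.sub S2) (S3.mul_left γ), Summable.tsum_sub S1 S2, tsum_mul_left, hnext]
  -- main chain for the RHS
  have hRHS1 : (1 / (1 - γ)) * ∑' s, ∑ a, ((1 - γ) * ∑' t, γ^t * (d t s * π s a)) * e s a
      = ∑' s, ∑ a, (∑' t, γ^t * (d t s * π s a)) * e s a := by
    have h : ∀ s, ∑ a, ((1 - γ) * ∑' t, γ^t * (d t s * π s a)) * e s a
        = (1 - γ) * ∑ a, (∑' t, γ^t * (d t s * π s a)) * e s a := by
      intro s
      rw [Finset.mul_sum]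
      exact Finset.sum_congr rfl fun a _ => by ring
    rw [tsum_congr h, tsum_mul_left, ← mul_assoc, one_div, inv_mul_cancel₀ hγne, one_mul]
  have hd_le_one : ∀ t s, d t s ≤ 1 := fun t s =>
    le_hasSum (hd t).2 s fun j _ => (hd t).1 j
  have hRHS2 : ∀ s, ∑ a, (∑' t, γ^t * (d t s * π s a)) * e s a
      = ∑' t, γ^t * d t s * ∑ a, π s a * e s a := by
    intro s
    have hsumta : ∀ a : 𝒜, Summable fun t => γ^t * (d t s * π s a) * e s a := by
      intro a
      refine sum_of_abs_le (hγpow.mul_right (π s a * D)) (fun t => ?_)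
      rw [abs_mul, abs_mul, abs_of_nonneg (hγpow0 t),
        abs_of_nonneg (mul_nonneg ((hd t).1 s) (hπ0 s a))]
      calc γ^t * (d t s * π s a) * |e s a| ≤ γ^t * (1 * π s a) * D := by
            refine mul_le_mul (mul_le_mul_of_nonneg_left
              (mul_le_mul_of_nonneg_right (hd_le_one t s) (hπ0 s a)) (hγpow0 t))
              (hebd s a) (abs_nonneg _) ?_
            exact mul_nonneg (hγpow0 t) (mul_nonneg zero_le_one (hπ0 s a))
        _ = γ^t * (π s a * D) := by ring
    calc ∑ a, (∑' t, γ^t * (d t s * π s a)) * e s a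
        = ∑ a, ∑' t, γ^t * (d t s * π s a) * e s a := by
          refine Finset.sum_congr rfl fun a _ => ?_
          rw [tsum_mul_right]
      _ = ∑' t, ∑ a, γ^t * (d t s * π s a) * e s a :=
          (Summable.tsum_finsetSum fun a _ => hsumta a).symm
      _ = ∑' t, γ^t * d t s * ∑ a, π s a * e s a := by
          refine tsum_congr fun t => ?_
          rw [Finset.mul_sum]
          exact Finset.sum_congr rfl fun a _ => by ring
  have hfub : ∑' s, ∑' t, γ^t * d t s * ∑ a, π s a * e s a
      = ∑' t, γ^t * ∑' s, d t s * ∑ a, π s a * e s a :=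
    fubini_weight (fun t => γ^t) hγpow0 hγpow (fun t s => d t s)
      (fun t s => (hd t).1 s) (fun t => (hd t).2)
      (fun s => ∑ a, π s a * e s a) D he'bd
  -- telescoping
  have SF : Summable fun t => γ^t * F t :=
    smul_bound_summable _ hγpow hγpow0 F C hFbd
  have SF' : Summable fun t => γ^(t+1) * F (t+1) := by
    exact (summable_nat_add_iff 1).2 SF
  have SR : Summable fun t => γ^t * R t :=
    smul_bound_summable _ hγpow hγpow0 R Rmax hRbd
  have htel : ∑' t, γ^t * (F t - R t - γ * F (t+1)) = F 0 - ∑' t, γ^t * R t := by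
    have h1 : ∀ t, γ^t * (F t - R t - γ * F (t+1))
        = (γ^t * F t - γ^(t+1) * F (t+1)) - γ^t * R t := fun t => by ring
    rw [tsum_congr h1, Summable.tsum_sub (SF.sub SF') SR, Summable.tsum_sub SF SF']
    have h2 := Summable.tsum_eq_zero_add SF
    rw [h2, pow_zero, one_mul]
    ring
  -- assemble
  have hL1 : ∑' s, d₀ s * ∑ a, π s a * f s a = F 0 := by
    simp only [hF_def]; rw [hd0]
  have hL2 : ∑' t, γ^t * ∑' s, d t s * ∑ a, π s a * r s a = ∑' t, γ^t * R t := by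
    simp only [hR_def]
  have h3 : ∀ t, γ^t * ∑' s, d t s * ∑ a, π s a * e s a
      = γ^t * (F t - R t - γ * F (t+1)) := fun t => by rw [hkey t]
  calc (∑' s, d₀ s * ∑ a, π s a * f s a)
        - ∑' t, γ^t * ∑' s, d t s * ∑ a, π s a * r s a
      = F 0 - ∑' t, γ^t * R t := by rw [hL1, hL2]
    _ = ∑' t, γ^t * (F t - R t - γ * F (t+1)) := htel.symm
    _ = ∑' t, γ^t * ∑' s, d t s * ∑ a, π s a * e s a := (tsum_congr h3).symm
    _ = ∑' s, ∑' t, γ^t * d t s * ∑ a, π s a * e s a := hfub.symm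
    _ = ∑' s, ∑ a, (∑' t, γ^t * (d t s * π s a)) * e s a := (tsum_congr hRHS2).symm
    _ = (1 / (1 - γ)) * ∑' s, ∑ a, ((1 - γ) * ∑' t, γ^t * (d t s * π s a)) * e s a :=
        hRHS1.symm
end

section
/- Telescoping performance difference for countably infinite state spaces: let M be an MDP on ℕ with finite action set 𝒜, discount γ ∈ [0,1), rewards r(s,a) ∈ [0, Rmax]. Fix a bounded function f : ℕ × 𝒜 → ℝ, let π_f be a deterministic greedy policy with π_f(s) ∈ argmax_{a∈𝒜} f(s,a) for every s, and let π be any policy. For any start probability vector d₀: J(π, d₀) − J(π_f, d₀) ≤ (1/(1−γ)) ( ‖f − B^{π_f} f‖_{d^π} + ‖f − B^{π_f} f‖_{d^{π_f}} ), where (B^{π_f} f)(s,a) := r(s,a) + γ ∑_{s'} p(s'|s,a) f(s', π_f(s')), d^ρ is the normalized state-action successor representation of policy ρ started from d₀, ‖g‖_d := ∑_{s,a} d(s,a)|g(s,a)|, and J(ρ, d₀) := ∑_{t=1}^∞ γ^{t−1} ∑_{s,a} d_t^ρ(s) ρ(a|s) r(s,a). -/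
open Filter Topology

private lemma summable_mul_of_bounded {d : ℕ → ℝ} (hd : Summable d) (hd0 : ∀ s, 0 ≤ d s)
    {h : ℕ → ℝ} {B : ℝ} (hh : ∀ s, |h s| ≤ B) : Summable (fun s => d s * h s) := by
  apply Summable.of_abs
  refine Summable.of_nonneg_of_le (fun s => abs_nonneg _) (fun s => ?_) (hd.mul_right B)
  rw [abs_mul, abs_of_nonneg (hd0 s)]
  exact mul_le_mul_of_nonneg_left (hh s) (hd0 s)

private lemma tsum_mul_le_of_le {d h : ℕ → ℝ} {B : ℝ} (hd : HasSum d 1) (hd0 : ∀ s, 0 ≤ d s)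
    (hs : Summable (fun s => d s * h s)) (hh : ∀ s, h s ≤ B) :
    ∑' s, d s * h s ≤ B :=
  calc ∑' s, d s * h s ≤ ∑' s, d s * B :=
        Summable.tsum_le_tsum (fun s => mul_le_mul_of_nonneg_left (hh s) (hd0 s)) hs
          (hd.summable.mul_right B)
    _ = 1 * B := by rw [tsum_mul_right, hd.tsum_eq]
    _ = B := one_mul B

private lemma abs_tsum_mul_le {d h : ℕ → ℝ} {B : ℝ} (hd : HasSum d 1) (hd0 : ∀ s, 0 ≤ d s)
    (hh : ∀ s, |h s| ≤ B) : |∑' s, d s * h s| ≤ B := by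
  have hsum := summable_mul_of_bounded hd.summable hd0 hh
  rw [abs_le]
  constructor
  · have : -B = ∑' s, d s * (-B) := by rw [tsum_mul_right, hd.tsum_eq, one_mul]
    rw [this]
    exact Summable.tsum_le_tsum (fun s => mul_le_mul_of_nonneg_left (neg_le_of_abs_le (hh s)) (hd0 s))
      (hd.summable.mul_right _) hsum
  · exact tsum_mul_le_of_le hd hd0 hsum (fun s => le_of_abs_le (hh s))

private lemma kernel_summable_prod {d : ℕ → ℝ} (hd : Summable d) (hd0 : ∀ s, 0 ≤ d s)
    {k : ℕ → ℕ → ℝ} (hk0 : ∀ s s', 0 ≤ k s s') (hk1 : ∀ s, HasSum (k s) 1) :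
    Summable (Function.uncurry fun s s' => d s * k s s') := by
  refine (summable_prod_of_nonneg (fun q => mul_nonneg (hd0 _) (hk0 _ _))).2
    ⟨fun s => (hk1 s).summable.mul_left (d s), ?_⟩
  have h1 : ∀ s, ∑' s', d s * k s s' = d s := fun s => by
    rw [tsum_mul_left, (hk1 s).tsum_eq, mul_one]
  simpa only [Function.uncurry, h1] using hd

private lemma kernel_step {d : ℕ → ℝ} (hd : HasSum d 1) (hd0 : ∀ s, 0 ≤ d s)
    {k : ℕ → ℕ → ℝ} (hk0 : ∀ s s', 0 ≤ k s s') (hk1 : ∀ s, HasSum (k s) 1) :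
    HasSum (fun s' => ∑' s, d s * k s s') 1 := by
  have hF := kernel_summable_prod hd.summable hd0 hk0 hk1
  have hsum2 : Summable (fun s' => ∑' s, d s * k s s') := by
    have := hF.prod_symm.prod
    simpa [Function.uncurry] using this
  rw [Summable.hasSum_iff hsum2]
  have hcomm := Summable.tsum_comm (f := fun s s' => d s * k s s') hF
  rw [hcomm]
  have h1 : ∀ s, ∑' s', d s * k s s' = d s := fun s => by
    rw [tsum_mul_left, (hk1 s).tsum_eq, mul_one]
  rw [tsum_congr h1, hd.tsum_eq]

private lemma kernel_fubini {d : ℕ → ℝ} (hd : Summable d) (hd0 : ∀ s, 0 ≤ d s)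
    {k : ℕ → ℕ → ℝ} (hk0 : ∀ s s', 0 ≤ k s s') (hk1 : ∀ s, HasSum (k s) 1)
    {V : ℕ → ℝ} {C : ℝ} (hV : ∀ s, |V s| ≤ C) :
    ∑' s', (∑' s, d s * k s s') * V s' = ∑' s, d s * ∑' s', k s s' * V s' := by
  have hG := kernel_summable_prod hd hd0 hk0 hk1
  have hF : Summable (Function.uncurry fun s s' => d s * k s s' * V s') := by
    apply Summable.of_abs
    refine Summable.of_nonneg_of_le (fun q => abs_nonneg _) (fun q => ?_) (hG.mul_right C)
    show |d q.1 * k q.1 q.2 * V q.2| ≤ d q.1 * k q.1 q.2 * C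
    rw [abs_mul, abs_of_nonneg (mul_nonneg (hd0 _) (hk0 _ _))]
    exact mul_le_mul_of_nonneg_left (hV _) (mul_nonneg (hd0 _) (hk0 _ _))
  calc ∑' s', (∑' s, d s * k s s') * V s'
      = ∑' (s' : ℕ) (s : ℕ), d s * k s s' * V s' := by
        refine tsum_congr fun s' => ?_
        rw [← tsum_mul_right]
    _ = ∑' (s : ℕ) (s' : ℕ), d s * k s s' * V s' := Summable.tsum_comm hF
    _ = ∑' s, d s * ∑' s', k s s' * V s' := by
        refine tsum_congr fun s => ?_
        rw [← tsum_mul_left]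
        exact tsum_congr fun s' => by ring

/-- Generic per-policy bound: `∑ₜ γᵗ ⟨dₜ, R⟩ ≤ ∑ₜ γᵗ ⟨dₜ, E⟩ + ⟨d₀, V⟩`. -/
private lemma policy_bound {γ C D : ℝ} (hγ0 : 0 ≤ γ) (hγ1 : γ < 1) (hC : 0 ≤ C) (hD : 0 ≤ D)
    {k : ℕ → ℕ → ℝ} (hk0 : ∀ s s', 0 ≤ k s s') (hk1 : ∀ s, HasSum (k s) 1)
    {d : ℕ → ℕ → ℝ} (hd0 : ∀ t s, 0 ≤ d t s) (hd1 : ∀ t, HasSum (d t) 1)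
    (hdrec : ∀ t s', d (t+1) s' = ∑' s, d t s * k s s')
    {V : ℕ → ℝ} (hV : ∀ s, |V s| ≤ C)
    {R E Q : ℕ → ℝ}
    (hRb : ∀ s, |R s| ≤ D) (hEb : ∀ s, |E s| ≤ D) (hQb : ∀ s, |Q s| ≤ C)
    (hkey : ∀ s, R s ≤ V s + E s - γ * Q s)
    (hQ : ∀ s, ∑' s', k s s' * V s' = Q s) :
    ∑' t, γ^t * ∑' s, d t s * R s ≤ (∑' t, γ^t * ∑' s, d t s * E s) + ∑' s, d 0 s * V s := by
  -- recursion for the value-weighted distribution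
  have hWrec : ∀ t, ∑' s', d (t+1) s' * V s' = ∑' s, d t s * Q s := by
    intro t
    have h1 : ∀ s', d (t+1) s' * V s' = (∑' s, d t s * k s s') * V s' := fun s' => by
      rw [hdrec]
    rw [tsum_congr h1, kernel_fubini (hd1 t).summable (hd0 t) hk0 hk1 hV]
    exact tsum_congr fun s => by rw [hQ]
  -- per-step inequality
  have hstep : ∀ t, ∑' s, d t s * R s ≤
      (∑' s, d t s * V s) + (∑' s, d t s * E s) - γ * ∑' s', d (t+1) s' * V s' := by
    intro t
    rw [hWrec t]
    have hsumR : Summable (fun s => d t s * R s) :=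
      summable_mul_of_bounded (hd1 t).summable (hd0 t) hRb
    have hsumV : Summable (fun s => d t s * V s) :=
      summable_mul_of_bounded (hd1 t).summable (hd0 t) hV
    have hsumE : Summable (fun s => d t s * E s) :=
      summable_mul_of_bounded (hd1 t).summable (hd0 t) hEb
    have hsumQ : Summable (fun s => d t s * Q s) :=
      summable_mul_of_bounded (hd1 t).summable (hd0 t) hQb
    have heq : (fun s => d t s * V s + d t s * E s - γ * (d t s * Q s)) =
        fun s => d t s * (V s + E s - γ * Q s) := funext fun s => by ring
    have hsum2 : Summable (fun s => d t s * (V s + E s - γ * Q s)) := by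
      rw [← heq]; exact (hsumV.add hsumE).sub (hsumQ.mul_left γ)
    have hle : ∑' s, d t s * R s ≤ ∑' s, d t s * (V s + E s - γ * Q s) :=
      Summable.tsum_le_tsum (fun s => mul_le_mul_of_nonneg_left (hkey s) (hd0 t s)) hsumR hsum2
    calc ∑' s, d t s * R s ≤ ∑' s, d t s * (V s + E s - γ * Q s) := hle
      _ = ∑' s, (d t s * V s + d t s * E s - γ * (d t s * Q s)) := by rw [heq]
      _ = (∑' s, d t s * V s) + (∑' s, d t s * E s) - γ * ∑' s, d t s * Q s := by
          rw [Summable.tsum_sub (hsumV.add hsumE) (hsumQ.mul_left γ), Summable.tsum_add hsumV hsumE,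
            tsum_mul_left]
  -- bounds on the aggregated quantities
  have hWb : ∀ t, |∑' s, d t s * V s| ≤ C := fun t => abs_tsum_mul_le (hd1 t) (hd0 t) hV
  have hRb' : ∀ t, |∑' s, d t s * R s| ≤ D := fun t => abs_tsum_mul_le (hd1 t) (hd0 t) hRb
  have hEb' : ∀ t, |∑' s, d t s * E s| ≤ D := fun t => abs_tsum_mul_le (hd1 t) (hd0 t) hEb
  -- telescoping term
  set u : ℕ → ℝ := fun t => γ^t * ∑' s, d t s * V s with hu_def
  have hub : ∀ t, |u t| ≤ γ^t * C := by
    intro t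
    rw [hu_def, abs_mul, abs_of_nonneg (pow_nonneg hγ0 t)]
    exact mul_le_mul_of_nonneg_left (hWb t) (pow_nonneg hγ0 t)
  have hgeo : Summable (fun t : ℕ => γ^t * C) := (summable_geometric_of_lt_one hγ0 hγ1).mul_right C
  have hgeoD : Summable (fun t : ℕ => γ^t * D) := (summable_geometric_of_lt_one hγ0 hγ1).mul_right D
  have husum : Summable u := by
    apply Summable.of_abs
    exact Summable.of_nonneg_of_le (fun t => abs_nonneg _) hub hgeo
  have husum' : Summable (fun t => u (t+1)) := (summable_nat_add_iff 1).2 husum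
  have htelsum : Summable (fun t => u t - u (t+1)) := husum.sub husum'
  have hu0 : Tendsto u atTop (nhds 0) := by
    apply squeeze_zero_norm hub
    have := (tendsto_pow_atTop_nhds_zero_of_lt_one hγ0 hγ1).mul_const C
    simpa using this
  have htel : HasSum (fun t => u t - u (t+1)) (u 0) := by
    rw [htelsum.hasSum_iff_tendsto_nat]
    have hps : ∀ n, ∑ i ∈ Finset.range n, (u i - u (i+1)) = u 0 - u n := by
      intro n
      exact Finset.sum_range_sub' u n
    simp only [hps]
    simpa using (tendsto_const_nhds (x := u 0)).sub hu0
  -- summability of the series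
  have hsumRt : Summable (fun t => γ^t * ∑' s, d t s * R s) := by
    apply Summable.of_abs
    refine Summable.of_nonneg_of_le (fun t => abs_nonneg _) (fun t => ?_) hgeoD
    rw [abs_mul, abs_of_nonneg (pow_nonneg hγ0 t)]
    exact mul_le_mul_of_nonneg_left (hRb' t) (pow_nonneg hγ0 t)
  have hsumEt : Summable (fun t => γ^t * ∑' s, d t s * E s) := by
    apply Summable.of_abs
    refine Summable.of_nonneg_of_le (fun t => abs_nonneg _) (fun t => ?_) hgeoD
    rw [abs_mul, abs_of_nonneg (pow_nonneg hγ0 t)]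
    exact mul_le_mul_of_nonneg_left (hEb' t) (pow_nonneg hγ0 t)
  -- combine
  have hmain : ∑' t, γ^t * ∑' s, d t s * R s ≤
      ∑' t, (γ^t * ∑' s, d t s * E s + (u t - u (t+1))) := by
    refine Summable.tsum_le_tsum (fun t => ?_) hsumRt (hsumEt.add htelsum)
    have h1 := mul_le_mul_of_nonneg_left (hstep t) (pow_nonneg hγ0 t)
    calc γ^t * ∑' s, d t s * R s
        ≤ γ^t * ((∑' s, d t s * V s) + (∑' s, d t s * E s) - γ * ∑' s', d (t+1) s' * V s') := h1
      _ = γ^t * ∑' s, d t s * E s + (u t - u (t+1)) := by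
          simp only [hu_def]; rw [pow_succ]; ring
  calc ∑' t, γ^t * ∑' s, d t s * R s
      ≤ ∑' t, (γ^t * ∑' s, d t s * E s + (u t - u (t+1))) := hmain
    _ = (∑' t, γ^t * ∑' s, d t s * E s) + ∑' t, (u t - u (t+1)) :=
        Summable.tsum_add hsumEt htelsum
    _ = (∑' t, γ^t * ∑' s, d t s * E s) + ∑' s, d 0 s * V s := by
        rw [htel.tsum_eq, hu_def]; simp

/-- Exchange the state and time sums for a nonnegative bounded per-state weight. -/
private lemma term_eq {γ D : ℝ} (hγ0 : 0 ≤ γ) (hγ1 : γ < 1)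
    {d : ℕ → ℕ → ℝ} (hd0 : ∀ t s, 0 ≤ d t s) (hd1 : ∀ t, HasSum (d t) 1)
    {G : ℕ → ℝ} (hG0 : ∀ s, 0 ≤ G s) (hGb : ∀ s, G s ≤ D) :
    ∑' (s : ℕ) (t : ℕ), γ^t * (d t s * G s) = ∑' t, γ^t * ∑' s, d t s * G s := by
  have hD : 0 ≤ D := (hG0 0).trans (hGb 0)
  have hGabs : ∀ s, |G s| ≤ D := fun s => by rw [abs_of_nonneg (hG0 s)]; exact hGb s
  have hgeoD : Summable (fun t : ℕ => γ^t * D) :=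
    (summable_geometric_of_lt_one hγ0 hγ1).mul_right D
  have hfib : ∀ t, Summable (fun s => γ^t * (d t s * G s)) :=
    fun t => (summable_mul_of_bounded (hd1 t).summable (hd0 t) hGabs).mul_left (γ^t)
  have hrow : ∀ t, ∑' s, γ^t * (d t s * G s) = γ^t * ∑' s, d t s * G s :=
    fun t => tsum_mul_left
  have hF : Summable (Function.uncurry fun t s => γ^t * (d t s * G s)) := by
    refine (summable_prod_of_nonneg ?_).2 ⟨fun t => hfib t, ?_⟩
    · exact fun q => mul_nonneg (pow_nonneg hγ0 _) (mul_nonneg (hd0 _ _) (hG0 _))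
    · refine Summable.of_nonneg_of_le (fun t => tsum_nonneg fun s =>
        mul_nonneg (pow_nonneg hγ0 _) (mul_nonneg (hd0 _ _) (hG0 _))) (fun t => ?_) hgeoD
      show ∑' s, γ^t * (d t s * G s) ≤ γ^t * D
      rw [hrow t]
      refine mul_le_mul_of_nonneg_left ?_ (pow_nonneg hγ0 t)
      exact tsum_mul_le_of_le (hd1 t) (hd0 t)
        (summable_mul_of_bounded (hd1 t).summable (hd0 t) hGabs) hGb
  calc ∑' (s : ℕ) (t : ℕ), γ^t * (d t s * G s)
      = ∑' (t : ℕ) (s : ℕ), γ^t * (d t s * G s) := Summable.tsum_comm hF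
    _ = ∑' t, γ^t * ∑' s, d t s * G s := tsum_congr hrow

/-- Telescoping performance difference for countably infinite state spaces: for a
bounded `f`, a greedy deterministic policy `πf` for `f`, and any policy `π`,
`J(π,d₀) - J(πf,d₀)` is bounded by the Bellman residual of `f` measured in the
successor-representation-weighted norms of both policies. Here `dπ t` (resp.
`df t`) is the state distribution at time `t+1` under `π` (resp. `πf`). -/
theorem stmt10 {𝒜 : Type*} [Fintype 𝒜] [DecidableEq 𝒜]
    (γ Rmax : ℝ) (hγ0 : 0 ≤ γ) (hγ1 : γ < 1) (hR : 0 ≤ Rmax)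
    (r : ℕ → 𝒜 → ℝ) (hr : ∀ s a, r s a ∈ Set.Icc (0:ℝ) Rmax)
    (p : ℕ → 𝒜 → ℕ → ℝ)
    (hp0 : ∀ s a s', 0 ≤ p s a s') (hp1 : ∀ s a, HasSum (p s a) 1)
    (f : ℕ → 𝒜 → ℝ) (C : ℝ) (hf : ∀ s a, |f s a| ≤ C)
    (πf : ℕ → 𝒜) (hgreedy : ∀ s a, f s a ≤ f s (πf s))
    (π : ℕ → 𝒜 → ℝ) (hπ0 : ∀ s a, 0 ≤ π s a) (hπ1 : ∀ s, ∑ a, π s a = 1)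
    (d₀ : ℕ → ℝ) (hd₀0 : ∀ i, 0 ≤ d₀ i) (hd₀1 : HasSum d₀ 1)
    (dπ : ℕ → ℕ → ℝ) (hdπ0 : dπ 0 = d₀)
    (hdπrec : ∀ t s', dπ (t+1) s' = ∑' s, dπ t s * ∑ a, π s a * p s a s')
    (df : ℕ → ℕ → ℝ) (hdf0 : df 0 = d₀)
    (hdfrec : ∀ t s', df (t+1) s' = ∑' s, df t s * p s (πf s) s') :
    (∑' t, γ^t * ∑' s, dπ t s * ∑ a, π s a * r s a)
        - (∑' t, γ^t * ∑' s, df t s * r s (πf s))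
      ≤ (1 / (1 - γ)) *
        ((∑' s, ∑ a, ((1 - γ) * ∑' t, γ^t * (dπ t s * π s a)) *
            |f s a - (r s a + γ * ∑' s', p s a s' * f s' (πf s'))|)
          + (∑' s, ∑ a, ((1 - γ) * ∑' t, γ^t *
                (df t s * (if a = πf s then (1:ℝ) else 0))) *
            |f s a - (r s a + γ * ∑' s', p s a s' * f s' (πf s'))|)) := by
  classical
  have h1γ : (0:ℝ) < 1 - γ := by linarith
  have hC : 0 ≤ C := (abs_nonneg _).trans (hf 0 (πf 0))
  -- notation
  set V : ℕ → ℝ := fun s => f s (πf s) with hV_def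
  have hVb : ∀ s, |V s| ≤ C := fun s => hf s (πf s)
  have hPb : ∀ s a, |∑' s', p s a s' * V s'| ≤ C :=
    fun s a => abs_tsum_mul_le (hp1 s a) (hp0 s a) hVb
  set P : ℕ → 𝒜 → ℝ := fun s a => ∑' s', p s a s' * V s' with hP_def
  set g : ℕ → 𝒜 → ℝ := fun s a => f s a - (r s a + γ * P s a) with hg_def
  set D : ℝ := 2 * C + Rmax with hD_def
  have hD : 0 ≤ D := by rw [hD_def]; linarith
  have hγC : γ * C ≤ C := by nlinarith
  have hgb : ∀ s a, |g s a| ≤ D := by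
    intro s a
    have h3 := (hr s a).2
    have h2 := (hr s a).1
    have hA : |r s a + γ * P s a| ≤ Rmax + γ * C := by
      refine (abs_add_le _ _).trans ?_
      have h5 : |γ * P s a| ≤ γ * C := by
        rw [abs_mul, abs_of_nonneg hγ0]
        exact mul_le_mul_of_nonneg_left (hPb s a) hγ0
      have h6 : |r s a| ≤ Rmax := abs_le.mpr ⟨by linarith, h3⟩
      linarith
    have hB : |g s a| ≤ |f s a| + |r s a + γ * P s a| := by
      simp only [hg_def]
      calc |f s a - (r s a + γ * P s a)| = |f s a + -(r s a + γ * P s a)| := by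
            rw [sub_eq_add_neg]
        _ ≤ |f s a| + |-(r s a + γ * P s a)| := abs_add_le _ _
        _ = |f s a| + |r s a + γ * P s a| := by rw [abs_neg]
    have := hf s a
    rw [hD_def]; linarith
  -- kernels
  have hkπ0 : ∀ s s', 0 ≤ ∑ a, π s a * p s a s' :=
    fun s s' => Finset.sum_nonneg fun a _ => mul_nonneg (hπ0 s a) (hp0 s a s')
  have hkπ1 : ∀ s, HasSum (fun s' => ∑ a, π s a * p s a s') 1 := by
    intro s
    have h := hasSum_sum (s := Finset.univ) (f := fun a s' => π s a * p s a s')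
      (a := fun a => π s a * 1) (fun a _ => (hp1 s a).mul_left (π s a))
    simpa [hπ1 s] using h
  -- distribution facts
  have hdπP : ∀ t, (∀ s, 0 ≤ dπ t s) ∧ HasSum (dπ t) 1 := by
    intro t; induction t with
    | zero => rw [hdπ0]; exact ⟨hd₀0, hd₀1⟩
    | succ t ih =>
      have hrec : dπ (t+1) = fun s' => ∑' s, dπ t s * ∑ a, π s a * p s a s' :=
        funext (hdπrec t)
      rw [hrec]
      exact ⟨fun s' => tsum_nonneg fun s => mul_nonneg (ih.1 s) (hkπ0 s s'),
        kernel_step ih.2 ih.1 hkπ0 hkπ1⟩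
  have hdfP : ∀ t, (∀ s, 0 ≤ df t s) ∧ HasSum (df t) 1 := by
    intro t; induction t with
    | zero => rw [hdf0]; exact ⟨hd₀0, hd₀1⟩
    | succ t ih =>
      have hrec : df (t+1) = fun s' => ∑' s, df t s * p s (πf s) s' :=
        funext (hdfrec t)
      rw [hrec]
      exact ⟨fun s' => tsum_nonneg fun s => mul_nonneg (ih.1 s) (hp0 s (πf s) s'),
        kernel_step ih.2 ih.1 (fun s s' => hp0 s (πf s) s') (fun s => hp1 s (πf s))⟩
  -- finite-sum bound helper
  have hπle1 : ∀ s a, π s a ≤ 1 := by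
    intro s a
    have := Finset.single_le_sum (f := π s) (fun a _ => hπ0 s a) (Finset.mem_univ a)
    rwa [hπ1 s] at this
  have habs_sum : ∀ (s : ℕ) (h : 𝒜 → ℝ) (B : ℝ), (∀ a, |h a| ≤ B) →
      |∑ a, π s a * h a| ≤ B := by
    intro s h B hB
    calc |∑ a, π s a * h a| ≤ ∑ a, |π s a * h a| := Finset.abs_sum_le_sum_abs _ _
      _ ≤ ∑ a, π s a * B := by
          refine Finset.sum_le_sum fun a _ => ?_
          rw [abs_mul, abs_of_nonneg (hπ0 s a)]
          exact mul_le_mul_of_nonneg_left (hB a) (hπ0 s a)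
      _ = B := by rw [← Finset.sum_mul, hπ1 s, one_mul]
  have hPb' : ∀ s a, |P s a| ≤ C := fun s a => by
    simp only [hP_def]; exact hPb s a
  have hpV : ∀ s a, Summable (fun s' => p s a s' * V s') :=
    fun s a => summable_mul_of_bounded (hp1 s a).summable (hp0 s a) hVb
  -- π-side
  have hQπ : ∀ s, ∑' s', (∑ a, π s a * p s a s') * V s' = ∑ a, π s a * P s a := by
    intro s
    have h1 : ∀ s', (∑ a, π s a * p s a s') * V s' = ∑ a, π s a * (p s a s' * V s') := by
      intro s'
      rw [Finset.sum_mul]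
      exact Finset.sum_congr rfl fun a _ => by ring
    rw [tsum_congr h1, Summable.tsum_finsetSum (fun a _ => (hpV s a).mul_left (π s a))]
    refine Finset.sum_congr rfl fun a _ => ?_
    rw [tsum_mul_left]
  have hRπb : ∀ s, |∑ a, π s a * r s a| ≤ D := by
    intro s
    refine habs_sum s _ D fun a => ?_
    have h2 := (hr s a).1; have h3 := (hr s a).2
    rw [hD_def, abs_le]; constructor <;> linarith
  have hEπb : ∀ s, abs (∑ a, π s a * |g s a|) ≤ D := by
    intro s
    exact habs_sum s _ D fun a => by rw [abs_abs]; exact hgb s a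
  have hQπb : ∀ s, |∑ a, π s a * P s a| ≤ C := fun s => habs_sum s _ C fun a => hPb' s a
  have hkeyπ : ∀ s, ∑ a, π s a * r s a ≤
      V s + (∑ a, π s a * |g s a|) - γ * ∑ a, π s a * P s a := by
    intro s
    have h1 : ∀ a, π s a * r s a ≤ π s a * (V s + |g s a| - γ * P s a) := by
      intro a
      refine mul_le_mul_of_nonneg_left ?_ (hπ0 s a)
      have hge : g s a = f s a - (r s a + γ * P s a) := by simp only [hg_def]
      have hfa : f s a ≤ V s := by simp only [hV_def]; exact hgreedy s a
      linarith [neg_abs_le (g s a)]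
    have h2 := Finset.sum_le_sum (fun a (_ : a ∈ Finset.univ) => h1 a)
    have h3 : ∀ a, π s a * (V s + |g s a| - γ * P s a)
        = π s a * V s + π s a * |g s a| - γ * (π s a * P s a) := fun a => by ring
    calc ∑ a, π s a * r s a ≤ ∑ a, π s a * (V s + |g s a| - γ * P s a) := h2
      _ = V s + (∑ a, π s a * |g s a|) - γ * ∑ a, π s a * P s a := by
          rw [Finset.sum_congr rfl (fun a _ => h3 a), Finset.sum_sub_distrib,
            Finset.sum_add_distrib, ← Finset.sum_mul, hπ1 s, one_mul, ← Finset.mul_sum]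
  have hJπle : (∑' t, γ^t * ∑' s, dπ t s * ∑ a, π s a * r s a) ≤
      (∑' t, γ^t * ∑' s, dπ t s * ∑ a, π s a * |g s a|) + ∑' s, dπ 0 s * V s := by
    simpa using policy_bound hγ0 hγ1 hC hD hkπ0 hkπ1
      (fun t => (hdπP t).1) (fun t => (hdπP t).2) hdπrec hVb
      (R := fun s => ∑ a, π s a * r s a) (E := fun s => ∑ a, π s a * |g s a|)
      (Q := fun s => ∑ a, π s a * P s a) hRπb hEπb hQπb hkeyπ hQπ
  -- πf-side
  have hQf : ∀ s, ∑' s', p s (πf s) s' * (-V s') = -(P s (πf s)) := by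
    intro s
    have h1 : ∀ s', p s (πf s) s' * (-V s') = -(p s (πf s) s' * V s') := fun s' => by ring
    rw [tsum_congr h1, tsum_neg]
  have hRfb : ∀ s, |-(r s (πf s))| ≤ D := by
    intro s
    have h2 := (hr s (πf s)).1; have h3 := (hr s (πf s)).2
    rw [hD_def, abs_le]
    constructor <;> linarith
  have hEfb : ∀ s, abs |g s (πf s)| ≤ D := fun s => by
    rw [abs_abs]; exact hgb s (πf s)
  have hQfb : ∀ s, |-(P s (πf s))| ≤ C := fun s => by
    rw [abs_neg]; exact hPb' s (πf s)
  have hVb' : ∀ s, |-(V s)| ≤ C := fun s => by rw [abs_neg]; exact hVb s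
  have hkeyf : ∀ s, -(r s (πf s)) ≤ -V s + |g s (πf s)| - γ * -(P s (πf s)) := by
    intro s
    have hge : g s (πf s) = V s - (r s (πf s) + γ * P s (πf s)) := by
      simp only [hg_def, hV_def]
    linarith [le_abs_self (g s (πf s))]
  have hJfle : -(∑' t, γ^t * ∑' s, df t s * r s (πf s)) ≤
      (∑' t, γ^t * ∑' s, df t s * |g s (πf s)|) + -(∑' s, df 0 s * V s) := by
    have hb := policy_bound hγ0 hγ1 hC hD
      (fun s s' => hp0 s (πf s) s') (fun s => hp1 s (πf s))
      (fun t => (hdfP t).1) (fun t => (hdfP t).2) hdfrec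
      (V := fun s => -V s) hVb'
      (R := fun s => -(r s (πf s))) (E := fun s => |g s (πf s)|)
      (Q := fun s => -(P s (πf s))) hRfb hEfb hQfb hkeyf hQf
    have e1 : ∀ t, ∑' s, df t s * -(r s (πf s)) = -(∑' s, df t s * r s (πf s)) := by
      intro t
      rw [← tsum_neg]
      exact tsum_congr fun s => by ring
    have e2 : ∑' s, df 0 s * -(V s) = -(∑' s, df 0 s * V s) := by
      rw [← tsum_neg]
      exact tsum_congr fun s => by ring
    have e3 : (∑' t, γ^t * ∑' s, df t s * -(r s (πf s)))
        = -(∑' t, γ^t * ∑' s, df t s * r s (πf s)) := by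
      rw [← tsum_neg]
      refine tsum_congr fun t => ?_
      rw [e1 t]; ring
    rw [e3, e2] at hb
    exact hb
  -- RHS identification
  have hgraw : ∀ s a, |f s a - (r s a + γ * ∑' s', p s a s' * f s' (πf s'))| = |g s a| := by
    intro s a
    simp only [hg_def, hP_def, hV_def]
  have hsummand : ∀ s a, Summable (fun t => γ^t * (dπ t s * π s a)) := by
    intro s a
    refine Summable.of_nonneg_of_le
      (fun t => mul_nonneg (pow_nonneg hγ0 t) (mul_nonneg ((hdπP t).1 s) (hπ0 s a)))
      (fun t => ?_) (summable_geometric_of_lt_one hγ0 hγ1)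
    have hd1 : dπ t s ≤ 1 := le_hasSum (hdπP t).2 s (fun j _ => (hdπP t).1 j)
    calc γ^t * (dπ t s * π s a) ≤ γ^t * (1*1) := by
          refine mul_le_mul_of_nonneg_left ?_ (pow_nonneg hγ0 t)
          exact mul_le_mul hd1 (hπle1 s a) (hπ0 s a) zero_le_one
      _ = γ^t := by ring
  have hGπ0 : ∀ s, 0 ≤ ∑ a, π s a * |g s a| :=
    fun s => Finset.sum_nonneg fun a _ => mul_nonneg (hπ0 s a) (abs_nonneg _)
  have hGπb : ∀ s, ∑ a, π s a * |g s a| ≤ D :=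
    fun s => (le_abs_self _).trans (hEπb s)
  have hT1 : (∑' s, ∑ a, ((1 - γ) * ∑' t, γ^t * (dπ t s * π s a)) * |g s a|)
      = (1 - γ) * ∑' t, γ^t * ∑' s, dπ t s * ∑ a, π s a * |g s a| := by
    have hper : ∀ s, ∑ a, ((1 - γ) * ∑' t, γ^t * (dπ t s * π s a)) * |g s a|
        = (1 - γ) * ∑' t, γ^t * (dπ t s * ∑ a, π s a * |g s a|) := by
      intro s
      have h1 : ∀ a, ((1 - γ) * ∑' t, γ^t * (dπ t s * π s a)) * |g s a|
          = (1 - γ) * ∑' t, (γ^t * (dπ t s * π s a)) * |g s a| := by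
        intro a
        rw [mul_assoc, ← tsum_mul_right]
      rw [Finset.sum_congr rfl (fun a _ => h1 a), ← Finset.mul_sum]
      congr 1
      rw [← Summable.tsum_finsetSum (fun a _ => (hsummand s a).mul_right (|g s a|))]
      refine tsum_congr fun t => ?_
      simp only [Finset.mul_sum]
      exact Finset.sum_congr rfl fun a _ => by ring
    rw [tsum_congr hper, tsum_mul_left]
    congr 1
    exact term_eq hγ0 hγ1 (fun t => (hdπP t).1) (fun t => (hdπP t).2) hGπ0 hGπb
  have hT2 : (∑' s, ∑ a, ((1 - γ) * ∑' t, γ^t *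
        (df t s * (if a = πf s then (1:ℝ) else 0))) * |g s a|)
      = (1 - γ) * ∑' t, γ^t * ∑' s, df t s * |g s (πf s)| := by
    have hper : ∀ s, ∑ a, ((1 - γ) * ∑' t, γ^t *
          (df t s * (if a = πf s then (1:ℝ) else 0))) * |g s a|
        = (1 - γ) * ∑' t, γ^t * (df t s * |g s (πf s)|) := by
      intro s
      rw [Finset.sum_eq_single (πf s) (fun a _ ha => by simp [ha])
        (fun h => absurd (Finset.mem_univ _) h)]
      rw [mul_assoc, ← tsum_mul_right]
      congr 1
      refine tsum_congr fun t => ?_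
      simp only [eq_self_iff_true, if_true, mul_one]
      ring
    rw [tsum_congr hper, tsum_mul_left]
    congr 1
    exact term_eq hγ0 hγ1 (fun t => (hdfP t).1) (fun t => (hdfP t).2)
      (fun s => abs_nonneg _) (fun s => hgb s (πf s))
  have hW0 : ∑' s, dπ 0 s * V s = ∑' s, df 0 s * V s := by rw [hdπ0, hdf0]
  simp only [hgraw]
  rw [hT1, hT2, ← mul_add, one_div, inv_mul_cancel_left₀ (ne_of_gt h1γ)]
  linarith [hJπle, hJfle, hW0]
end

section
/- Bellman residual bound for down-projected abstract fixed points: let M be an MDP on ℕ with finite action set 𝒜, discount γ ∈ [0,1), rewards r(s,a) ∈ [0, Rmax], and Vmax = Rmax/(1−γ). Let φ : ℕ → S_φ be a state abstraction with S_φ finite, and let (r_φ, P_φ) be an abstract MDP on S_φ with rewards in [0, Rmax]. Let g : S_φ × 𝒜 → ℝ be the fixed point g(x,a) = r_φ(x,a) + γ ∑_{x'∈S_φ} P_φ((x,a),x') max_{a'} g(x',a'), and let π_g be a deterministic greedy policy with π_g(s) ∈ argmax_a g(φ(s),a). Then for every state-action probability weight d on ℕ × 𝒜: ‖Φ↓g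 − B^{π_g}(Φ↓g)‖_d ≤ ‖Φ↓r_φ − r‖_d + (γ/2) Vmax ‖Φ↓P_φ − Φ↑p‖_d, where (Φ↓g)(s,a) := g(φ(s),a), (B^{π_g} f)(s,a) := r(s,a) + γ ∑_{s'} p(s'|s,a) f(s', π_g(s')), (Φ↓P_φ)((s,a),x) := P_φ((φ(s),a),x), (Φ↑p)((s,a),x) := ∑_{j : φ(j)=x} p(j|s,a), ‖f‖_d := ∑_{s,a} d(s,a)|f(s,a)|, and ‖Q − Q'‖_d := ∑_{s,a} d(s,a) ∑_{x∈S_φ} |Q((s,a),x) − Q'((s,a),x)|. -/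
/-- If `∑ Δ = 0` and `0 ≤ V ≤ c`, then `|∑ Δ·V| ≤ (c/2)·∑|Δ|`. -/
lemma stmt13_aux_absSum {Sφ : Type*} [Fintype Sφ] (Δ V : Sφ → ℝ) (c : ℝ)
    (hΔ : ∑ x, Δ x = 0) (hV0 : ∀ x, 0 ≤ V x) (hVc : ∀ x, V x ≤ c) :
    |∑ x, Δ x * V x| ≤ c/2 * ∑ x, |Δ x| := by
  have h1 : ∑ x, Δ x * V x = ∑ x, Δ x * (V x - c/2) := by
    simp only [mul_sub, Finset.sum_sub_distrib, ← Finset.sum_mul, hΔ, zero_mul, sub_zero]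
  rw [h1]
  calc |∑ x, Δ x * (V x - c/2)| ≤ ∑ x, |Δ x * (V x - c/2)| :=
        Finset.abs_sum_le_sum_abs _ _
    _ ≤ ∑ x, |Δ x| * (c/2) := by
        apply Finset.sum_le_sum
        intro x _
        rw [abs_mul]
        exact mul_le_mul_of_nonneg_left
          (abs_le.mpr ⟨by linarith [hV0 x], by linarith [hVc x]⟩) (abs_nonneg _)
    _ = c/2 * ∑ x, |Δ x| := by rw [← Finset.sum_mul, mul_comm]

/-- Bellman residual bound for down-projected abstract fixed points: the
`d`-weighted Bellman residual of the down-projected abstract fixed point `g` is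
bounded by the `d`-weighted reward approximation error plus `(γ/2)·Vmax` times the
`d`-weighted transition approximation error. -/
theorem stmt13 {𝒜 Sφ : Type*} [Fintype 𝒜] [Nonempty 𝒜] [Fintype Sφ] [DecidableEq Sφ]
    (γ Rmax Vmax : ℝ) (hγ0 : 0 ≤ γ) (hγ1 : γ < 1) (hR : 0 ≤ Rmax)
    (hV : Vmax = Rmax / (1 - γ))
    (r : ℕ → 𝒜 → ℝ) (hr : ∀ s a, r s a ∈ Set.Icc (0:ℝ) Rmax)
    (p : ℕ → 𝒜 → ℕ → ℝ)
    (hp0 : ∀ s a j, 0 ≤ p s a j) (hp1 : ∀ s a, HasSum (p s a) 1)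
    (φ : ℕ → Sφ)
    (rφ : Sφ → 𝒜 → ℝ) (hrφ : ∀ x a, rφ x a ∈ Set.Icc (0:ℝ) Rmax)
    (Pφ : Sφ → 𝒜 → Sφ → ℝ)
    (hPφ0 : ∀ x a x', 0 ≤ Pφ x a x') (hPφ1 : ∀ x a, ∑ x', Pφ x a x' = 1)
    (g : Sφ → 𝒜 → ℝ)
    (hg : ∀ x a, g x a = rφ x a + γ * ∑ x', Pφ x a x' *
        (Finset.univ.sup' Finset.univ_nonempty fun a' => g x' a'))
    (πg : ℕ → 𝒜) (hgreedy : ∀ s a, g (φ s) a ≤ g (φ s) (πg s))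
    (D : ℕ → 𝒜 → ℝ) (hD0 : ∀ s a, 0 ≤ D s a) (hD1 : (∑' s, ∑ a, D s a) = 1) :
    (∑' s, ∑ a, D s a *
        |g (φ s) a - (r s a + γ * ∑' s', p s a s' * g (φ s') (πg s'))|)
      ≤ (∑' s, ∑ a, D s a * |rφ (φ s) a - r s a|)
        + (γ/2) * Vmax *
          (∑' s, ∑ a, D s a *
            ∑ x : Sφ, |Pφ (φ s) a x - (∑' j, if φ j = x then p s a j else 0)|) := by
  have hNe : Nonempty Sφ := ⟨φ 0⟩
  have hγ' : 0 < 1 - γ := by linarith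
  have hVmax0 : 0 ≤ Vmax := hV ▸ div_nonneg hR (le_of_lt hγ')
  set V : Sφ → ℝ := fun x => Finset.univ.sup' Finset.univ_nonempty fun a' => g x a' with hVdef
  have hgV : ∀ x a, g x a = rφ x a + γ * ∑ x', Pφ x a x' * V x' := hg
  have hpS : ∀ s a, Summable (p s a) := fun s a => (hp1 s a).summable
  -- upper bound on V
  have hVub : ∀ x, V x ≤ Vmax := by
    set Vm := Finset.univ.sup' Finset.univ_nonempty V with hVmdef
    have hle : ∀ x, V x ≤ Vm := fun x => Finset.le_sup' V (Finset.mem_univ x)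
    have hstep : ∀ x, V x ≤ Rmax + γ * Vm := by
      intro x
      apply Finset.sup'_le
      intro a _
      rw [hgV x a]
      have h2 : ∑ x', Pφ x a x' * V x' ≤ Vm := by
        calc ∑ x', Pφ x a x' * V x' ≤ ∑ x', Pφ x a x' * Vm :=
              Finset.sum_le_sum fun x' _ => mul_le_mul_of_nonneg_left (hle x') (hPφ0 x a x')
          _ = Vm := by rw [← Finset.sum_mul, hPφ1, one_mul]
      have h3 := (hrφ x a).2
      nlinarith [mul_le_mul_of_nonneg_left h2 hγ0]
    have hVm : Vm ≤ Rmax + γ * Vm := Finset.sup'_le _ _ fun x _ => hstep x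
    have hVmV : Vm ≤ Vmax := by rw [hV, le_div_iff₀ hγ']; nlinarith
    exact fun x => (hle x).trans hVmV
  -- lower bound on V
  have hVlb : ∀ x, 0 ≤ V x := by
    set vm := Finset.univ.inf' Finset.univ_nonempty V with hvmdef
    have hge : ∀ x, vm ≤ V x := fun x => Finset.inf'_le V (Finset.mem_univ x)
    have hstep : ∀ x, γ * vm ≤ V x := by
      intro x
      obtain ⟨a⟩ := (inferInstance : Nonempty 𝒜)
      have h1 : g x a ≤ V x := Finset.le_sup' _ (Finset.mem_univ a)
      rw [hgV x a] at h1
      have h2 : vm ≤ ∑ x', Pφ x a x' * V x' := by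
        calc vm = ∑ x', Pφ x a x' * vm := by rw [← Finset.sum_mul, hPφ1, one_mul]
          _ ≤ ∑ x', Pφ x a x' * V x' :=
              Finset.sum_le_sum fun x' _ => mul_le_mul_of_nonneg_left (hge x') (hPφ0 x a x')
      have h3 := (hrφ x a).1
      nlinarith [mul_le_mul_of_nonneg_left h2 hγ0]
    have hvm : γ * vm ≤ vm := Finset.le_inf' _ _ fun x _ => hstep x
    have h0 : 0 ≤ vm := by nlinarith
    exact fun x => h0.trans (hge x)
  -- greedy policy achieves the max
  have hgπ : ∀ s', g (φ s') (πg s') = V (φ s') := fun s' =>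
    le_antisymm (Finset.le_sup' _ (Finset.mem_univ _))
      (Finset.sup'_le _ _ fun a _ => hgreedy s' a)
  -- the pushed-up transition kernel
  set Q : ℕ → 𝒜 → Sφ → ℝ := fun s a x => ∑' j, if φ j = x then p s a j else 0 with hQdef
  have hQsum : ∀ s a x, Summable (fun j => if φ j = x then p s a j else 0) := by
    intro s a x
    apply Summable.of_nonneg_of_le _ _ (hpS s a)
    · intro j; split <;> simp [hp0 s a j]
    · intro j; split <;> simp [hp0 s a j]
  have hQ0 : ∀ s a x, 0 ≤ Q s a x := fun s a x =>
    tsum_nonneg fun j => by split <;> simp [hp0 s a j]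
  -- swapping lemma
  have key_swap : ∀ s a (w : Sφ → ℝ),
      (∑' j, p s a j * w (φ j)) = ∑ x, Q s a x * w x := by
    intro s a w
    have h1 : ∀ j, p s a j * w (φ j) = ∑ x, (if φ j = x then p s a j else 0) * w x := by
      intro j
      simp [ite_mul, Finset.sum_ite_eq]
    calc (∑' j, p s a j * w (φ j))
        = ∑' j, ∑ x, (if φ j = x then p s a j else 0) * w x := tsum_congr h1
      _ = ∑ x, ∑' j, (if φ j = x then p s a j else 0) * w x :=
          Summable.tsum_finsetSum fun x _ => (hQsum s a x).mul_right _
      _ = ∑ x, Q s a x * w x := by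
          refine Finset.sum_congr rfl fun x _ => ?_
          rw [hQdef]; exact tsum_mul_right
  have hQ1 : ∀ s a, ∑ x, Q s a x = 1 := by
    intro s a
    have := key_swap s a (fun _ => 1)
    simpa [(hp1 s a).tsum_eq] using this.symm
  -- key pointwise bound
  have key : ∀ s a,
      |g (φ s) a - (r s a + γ * ∑' s', p s a s' * g (φ s') (πg s'))|
        ≤ |rφ (φ s) a - r s a|
          + (γ/2) * Vmax * ∑ x, |Pφ (φ s) a x - Q s a x| := by
    intro s a
    have e1 : (∑' s', p s a s' * g (φ s') (πg s')) = ∑ x, Q s a x * V x := by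
      rw [tsum_congr fun s' => by rw [hgπ s']]
      exact key_swap s a V
    have e2 : g (φ s) a - (r s a + γ * ∑' s', p s a s' * g (φ s') (πg s'))
        = (rφ (φ s) a - r s a) + γ * ∑ x, (Pφ (φ s) a x - Q s a x) * V x := by
      rw [e1, hgV (φ s) a]
      have : ∑ x, (Pφ (φ s) a x - Q s a x) * V x
          = ∑ x, Pφ (φ s) a x * V x - ∑ x, Q s a x * V x := by
        simp [sub_mul, Finset.sum_sub_distrib]
      rw [this]; ring
    rw [e2]
    have hΔ0 : ∑ x, (Pφ (φ s) a x - Q s a x) = 0 := by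
      simp [Finset.sum_sub_distrib, hPφ1, hQ1 s a]
    have habs := stmt13_aux_absSum (fun x => Pφ (φ s) a x - Q s a x) V Vmax hΔ0 hVlb hVub
    calc |(rφ (φ s) a - r s a) + γ * ∑ x, (Pφ (φ s) a x - Q s a x) * V x|
        ≤ |rφ (φ s) a - r s a| + |γ * ∑ x, (Pφ (φ s) a x - Q s a x) * V x| :=
          abs_add_le _ _
      _ ≤ |rφ (φ s) a - r s a| + (γ/2) * Vmax * ∑ x, |Pφ (φ s) a x - Q s a x| := by
          rw [abs_mul, abs_of_nonneg hγ0]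
          have := mul_le_mul_of_nonneg_left habs hγ0
          nlinarith [this]
  -- summability facts
  have hsumD : Summable (fun s => ∑ a, D s a) := by
    by_contra h
    rw [tsum_eq_zero_of_not_summable h] at hD1
    norm_num at hD1
  have hDS0 : ∀ s, 0 ≤ ∑ a, D s a := fun s => Finset.sum_nonneg fun a _ => hD0 s a
  have hrbound : ∀ s a, |rφ (φ s) a - r s a| ≤ Rmax := by
    intro s a
    have h1 := (hrφ (φ s) a).1; have h2 := (hrφ (φ s) a).2
    have h3 := (hr s a).1; have h4 := (hr s a).2
    rw [abs_sub_le_iff]; constructor <;> linarith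
  have hΔbound : ∀ s a, ∑ x, |Pφ (φ s) a x - Q s a x| ≤ 2 := by
    intro s a
    calc ∑ x, |Pφ (φ s) a x - Q s a x| ≤ ∑ x, (Pφ (φ s) a x + Q s a x) := by
          apply Finset.sum_le_sum
          intro x _
          rw [abs_sub_le_iff]
          constructor <;> [skip; skip] <;>
            · have := hPφ0 (φ s) a x; have := hQ0 s a x; linarith
      _ = 2 := by rw [Finset.sum_add_distrib, hPφ1, hQ1 s a]; norm_num
  have hA : Summable (fun s => ∑ a, D s a * |rφ (φ s) a - r s a|) := by
    apply Summable.of_nonneg_of_le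
      (fun s => Finset.sum_nonneg fun a _ => mul_nonneg (hD0 s a) (abs_nonneg _))
      (fun s => ?_) (hsumD.mul_right Rmax)
    calc ∑ a, D s a * |rφ (φ s) a - r s a| ≤ ∑ a, D s a * Rmax :=
          Finset.sum_le_sum fun a _ => mul_le_mul_of_nonneg_left (hrbound s a) (hD0 s a)
      _ = (∑ a, D s a) * Rmax := by rw [Finset.sum_mul]
  have hB : Summable (fun s => ∑ a, D s a * ∑ x, |Pφ (φ s) a x - Q s a x|) := by
    apply Summable.of_nonneg_of_le
      (fun s => Finset.sum_nonneg fun a _ => mul_nonneg (hD0 s a)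
        (Finset.sum_nonneg fun x _ => abs_nonneg _))
      (fun s => ?_) (hsumD.mul_right 2)
    calc ∑ a, D s a * ∑ x, |Pφ (φ s) a x - Q s a x| ≤ ∑ a, D s a * 2 :=
          Finset.sum_le_sum fun a _ => mul_le_mul_of_nonneg_left (hΔbound s a) (hD0 s a)
      _ = (∑ a, D s a) * 2 := by rw [Finset.sum_mul]
  have hRHSsum : Summable (fun s => (∑ a, D s a * |rφ (φ s) a - r s a|)
      + (γ/2) * Vmax * ∑ a, D s a * ∑ x, |Pφ (φ s) a x - Q s a x|) :=
    hA.add (hB.mul_left _)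
  have hL : Summable (fun s => ∑ a, D s a *
      |g (φ s) a - (r s a + γ * ∑' s', p s a s' * g (φ s') (πg s'))|) := by
    apply Summable.of_nonneg_of_le
      (fun s => Finset.sum_nonneg fun a _ => mul_nonneg (hD0 s a) (abs_nonneg _))
      (fun s => ?_) hRHSsum
    have : ∀ a, D s a * |g (φ s) a - (r s a + γ * ∑' s', p s a s' * g (φ s') (πg s'))|
        ≤ D s a * |rφ (φ s) a - r s a|
          + (γ/2) * Vmax * (D s a * ∑ x, |Pφ (φ s) a x - Q s a x|) := by
      intro a
      have h1 := mul_le_mul_of_nonneg_left (key s a) (hD0 s a)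
      calc D s a * |g (φ s) a - (r s a + γ * ∑' s', p s a s' * g (φ s') (πg s'))|
          ≤ D s a * (|rφ (φ s) a - r s a|
              + (γ/2) * Vmax * ∑ x, |Pφ (φ s) a x - Q s a x|) := h1
        _ = D s a * |rφ (φ s) a - r s a|
              + (γ/2) * Vmax * (D s a * ∑ x, |Pφ (φ s) a x - Q s a x|) := by ring
    calc ∑ a, D s a * |g (φ s) a - (r s a + γ * ∑' s', p s a s' * g (φ s') (πg s'))|
        ≤ ∑ a, (D s a * |rφ (φ s) a - r s a|
            + (γ/2) * Vmax * (D s a * ∑ x, |Pφ (φ s) a x - Q s a x|)) :=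
          Finset.sum_le_sum fun a _ => this a
      _ = (∑ a, D s a * |rφ (φ s) a - r s a|)
            + (γ/2) * Vmax * ∑ a, D s a * ∑ x, |Pφ (φ s) a x - Q s a x| := by
          rw [Finset.sum_add_distrib, Finset.mul_sum]
  -- final assembly
  have step1 : (∑' s, ∑ a, D s a *
      |g (φ s) a - (r s a + γ * ∑' s', p s a s' * g (φ s') (πg s'))|)
      ≤ ∑' s, ((∑ a, D s a * |rφ (φ s) a - r s a|)
          + (γ/2) * Vmax * ∑ a, D s a * ∑ x, |Pφ (φ s) a x - Q s a x|) := by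
    apply Summable.tsum_le_tsum _ hL hRHSsum
    intro s
    have : ∀ a, D s a * |g (φ s) a - (r s a + γ * ∑' s', p s a s' * g (φ s') (πg s'))|
        ≤ D s a * |rφ (φ s) a - r s a|
          + (γ/2) * Vmax * (D s a * ∑ x, |Pφ (φ s) a x - Q s a x|) := by
      intro a
      have h1 := mul_le_mul_of_nonneg_left (key s a) (hD0 s a)
      calc D s a * |g (φ s) a - (r s a + γ * ∑' s', p s a s' * g (φ s') (πg s'))|
          ≤ D s a * (|rφ (φ s) a - r s a|
              + (γ/2) * Vmax * ∑ x, |Pφ (φ s) a x - Q s a x|) := h1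
        _ = D s a * |rφ (φ s) a - r s a|
              + (γ/2) * Vmax * (D s a * ∑ x, |Pφ (φ s) a x - Q s a x|) := by ring
    calc ∑ a, D s a * |g (φ s) a - (r s a + γ * ∑' s', p s a s' * g (φ s') (πg s'))|
        ≤ ∑ a, (D s a * |rφ (φ s) a - r s a|
            + (γ/2) * Vmax * (D s a * ∑ x, |Pφ (φ s) a x - Q s a x|)) :=
          Finset.sum_le_sum fun a _ => this a
      _ = (∑ a, D s a * |rφ (φ s) a - r s a|)
            + (γ/2) * Vmax * ∑ a, D s a * ∑ x, |Pφ (φ s) a x - Q s a x| := by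
          rw [Finset.sum_add_distrib, Finset.mul_sum]
  have step2 : (∑' s, ((∑ a, D s a * |rφ (φ s) a - r s a|)
      + (γ/2) * Vmax * ∑ a, D s a * ∑ x, |Pφ (φ s) a x - Q s a x|))
      = (∑' s, ∑ a, D s a * |rφ (φ s) a - r s a|)
        + (γ/2) * Vmax *
          (∑' s, ∑ a, D s a * ∑ x, |Pφ (φ s) a x - Q s a x|) := by
    rw [Summable.tsum_add hA (hB.mul_left _), tsum_mul_left]
  exact step1.trans (le_of_eq step2)
end
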